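/- arXiv:2006.02970 — 8 statements merged into one kernel-verified Lean document; each statement's English description precedes it below -/
import Mathlib

section
/- Let p be an odd prime and let s, n, b be integers with s, n ≥ 1. Then |S_{2pn,b} − v(b)·p^{sn}/(2pn)| ≤ p^{sn/2}. -/
open Polynomial Finset

/-- The Borwein-type polynomial `∏_{j=1}^n ∏_{k=1}^{p-1} (1 - q^{pj-k})^s` in `ℤ[q]`. -/
noncomputable def borweinPoly (p s n : ℕ) : Polynomial ℤ :=
  ∏ j ∈ Finset.Icc 1 n, ∏ k ∈ Finset.Icc 1 (p - 1),
    (1 - (Polynomial.X : Polynomial ℤ) ^ (p * j - k)) ^ s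

/-- `S d b = ∑_{i ≡ b (mod d)} a_i`, the sum of the coefficients of the Borwein-type
polynomial over the arithmetic progression `i ≡ b (mod d)`. -/
noncomputable def borweinS (p s n : ℕ) (d : ℕ) (b : ℤ) : ℤ :=
  ∑ i ∈ (borweinPoly p s n).support,
    if (i : ℤ) % d = b % d then (borweinPoly p s n).coeff i else 0

/-- `v b = p - 1` if `p ∣ b`, and `v b = -1` otherwise. -/
def borweinV (p : ℕ) (b : ℤ) : ℤ := if (p : ℤ) ∣ b then (p : ℤ) - 1 else -1

-- image of powers equals nthRootsFinset
lemma nthRootsFinset_eq_image {m : ℕ} {ζ : ℂ} (hm : 0 < m) (h : IsPrimitiveRoot ζ m) :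
    Polynomial.nthRootsFinset m (1 : ℂ) = (Finset.range m).image (ζ ^ ·) := by
  symm
  apply Finset.eq_of_subset_of_card_le
  · intro x hx
    simp only [Finset.mem_image, Finset.mem_range] at hx
    obtain ⟨i, hi, rfl⟩ := hx
    rw [Polynomial.mem_nthRootsFinset hm, ← pow_mul, mul_comm, pow_mul, h.pow_eq_one, one_pow]
  · rw [h.card_nthRootsFinset, Finset.card_image_of_injOn, Finset.card_range]
    intro a ha b hb hab
    exact h.pow_inj (Finset.mem_range.1 ha) (Finset.mem_range.1 hb) hab

lemma prod_X_sub_pow {m : ℕ} {ζ : ℂ} (hm : 0 < m) (h : IsPrimitiveRoot ζ m) :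
    ∏ i ∈ Finset.range m, ((X : ℂ[X]) - C (ζ ^ i)) = X ^ m - 1 := by
  rw [X_pow_sub_one_eq_prod hm h, nthRootsFinset_eq_image hm h, Finset.prod_image]
  intro a ha b hb hab
  exact h.pow_inj (Finset.mem_range.1 ha) (Finset.mem_range.1 hb) hab

/-- base lemma: `∏_{r=1}^{m-1} (1 - ζ^r) = m`. -/
lemma prod_one_sub_pow {m : ℕ} {ζ : ℂ} (hm : 0 < m) (h : IsPrimitiveRoot ζ m) :
    ∏ r ∈ Finset.Ico 1 m, (1 - ζ ^ r) = (m : ℂ) := by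
  have hP : ((X : ℂ[X]) - C 1) * ∏ r ∈ Finset.Ico 1 m, ((X : ℂ[X]) - C (ζ ^ r)) =
      ((X : ℂ[X]) - C 1) * ∑ i ∈ Finset.range m, (X : ℂ[X]) ^ i := by
    have h0 : ∏ i ∈ Finset.range m, ((X : ℂ[X]) - C (ζ ^ i)) =
        ((X : ℂ[X]) - C 1) * ∏ r ∈ Finset.Ico 1 m, ((X : ℂ[X]) - C (ζ ^ r)) := by
      rw [Finset.range_eq_Ico, Finset.prod_eq_prod_Ico_succ_bot hm]
      simp
    rw [← h0, prod_X_sub_pow hm h]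
    rw [← geom_sum_mul, map_one]
    ring
  have hXC : ((X : ℂ[X]) - C 1) ≠ 0 := X_sub_C_ne_zero 1
  have := mul_left_cancel₀ hXC hP
  have h2 := congrArg (Polynomial.eval (1:ℂ)) this
  simp only [eval_prod, eval_sub, eval_one, eval_X, eval_pow, eval_C, eval_finset_sum,
    one_pow, Finset.sum_const, Finset.card_range, nsmul_eq_mul, mul_one, eval_geom_sum] at h2
  simpa using h2

/-- one period: `∏_{x=1}^{m} (if p∣x then 1 else 1-ζ^x) = p` when `p ∣ m`. -/
lemma prod_period {p m : ℕ} {ζ : ℂ} (hp : p.Prime) (hpm : p ∣ m) (hm : 0 < m)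
    (h : IsPrimitiveRoot ζ m) :
    ∏ i ∈ Finset.range m, (if p ∣ (i + 1) then 1 else (1 - ζ ^ (i + 1))) = (p : ℂ) := by
  have hIco : ∏ i ∈ Finset.range m, (if p ∣ (i + 1) then 1 else (1 - ζ ^ (i + 1))) =
      ∏ x ∈ Finset.Ico 1 m, (if p ∣ x then 1 else (1 - ζ ^ x)) := by
    rw [Finset.prod_Ico_eq_prod_range]
    have hm1 : m - 1 + 1 = m := Nat.succ_pred_eq_of_pos hm
    rw [← hm1, Finset.prod_range_succ]
    have : p ∣ (m - 1 + 1) := by rw [hm1]; exact hpm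
    rw [if_pos this, mul_one]
    apply Finset.prod_congr rfl
    intro i _
    rw [Nat.add_comm 1 i]
  rw [hIco]
  -- split the full product
  have hsplit : (∏ x ∈ (Finset.Ico 1 m).filter (fun x => ¬ p ∣ x), (1 - ζ ^ x)) *
      ∏ x ∈ (Finset.Ico 1 m).filter (fun x => p ∣ x), (1 - ζ ^ x) =
      ∏ x ∈ Finset.Ico 1 m, (1 - ζ ^ x) := by
    rw [mul_comm]
    exact Finset.prod_filter_mul_prod_filter_not _ _ _
  have hif : ∏ x ∈ Finset.Ico 1 m, (if p ∣ x then 1 else (1 - ζ ^ x)) =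
      ∏ x ∈ (Finset.Ico 1 m).filter (fun x => ¬ p ∣ x), (1 - ζ ^ x) := by
    rw [Finset.prod_filter]
    apply Finset.prod_congr rfl
    intro x _
    by_cases hx : p ∣ x <;> simp [hx]
  -- the p-divisible part
  have hξ : IsPrimitiveRoot (ζ ^ p) (m / p) := h.pow hm (by rw [Nat.mul_div_cancel' hpm])
  have hmp : 0 < m / p := Nat.div_pos (Nat.le_of_dvd hm hpm) hp.pos
  have hdvd : ∏ x ∈ (Finset.Ico 1 m).filter (fun x => p ∣ x), (1 - ζ ^ x) =
      ∏ t ∈ Finset.Ico 1 (m / p), (1 - (ζ ^ p) ^ t) := by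
    apply Finset.prod_nbij' (fun x => x / p) (fun t => p * t)
    · intro x hx
      simp only [Finset.mem_filter, Finset.mem_Ico] at hx
      obtain ⟨⟨h1, h2⟩, t, rfl⟩ := hx
      rw [Nat.mul_div_cancel_left _ hp.pos]
      simp only [Finset.mem_Ico]
      constructor
      · rcases Nat.eq_zero_or_pos t with rfl | hpos
        · omega
        · exact hpos
      · have hmm : p * (m / p) = m := Nat.mul_div_cancel' hpm
        exact lt_of_mul_lt_mul_left (by omega) (Nat.zero_le p)
    · intro t ht
      simp only [Finset.mem_Ico] at ht
      simp only [Finset.mem_filter, Finset.mem_Ico]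
      refine ⟨⟨by nlinarith [hp.pos], ?_⟩, Dvd.intro t rfl⟩
      calc p * t < p * (m / p) := mul_lt_mul_of_pos_left ht.2 hp.pos
      _ = m := Nat.mul_div_cancel' hpm
    · intro x hx
      simp only [Finset.mem_filter] at hx
      exact (Nat.mul_div_cancel' hx.2)
    · intro t _
      exact Nat.mul_div_cancel_left _ hp.pos
    · intro x hx
      simp only [Finset.mem_filter] at hx
      rw [← pow_mul, Nat.mul_div_cancel' hx.2]
  have hfull : ∏ x ∈ Finset.Ico 1 m, (1 - ζ ^ x) = (m : ℂ) := prod_one_sub_pow hm h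
  have hpart : ∏ t ∈ Finset.Ico 1 (m / p), (1 - (ζ ^ p) ^ t) = ((m / p : ℕ) : ℂ) :=
    prod_one_sub_pow hmp hξ
  rw [hif]
  have hne : ((m / p : ℕ) : ℂ) ≠ 0 := Nat.cast_ne_zero.2 hmp.ne'
  have key : (∏ x ∈ (Finset.Ico 1 m).filter (fun x => ¬ p ∣ x), (1 - ζ ^ x)) *
      ((m / p : ℕ) : ℂ) = (m : ℂ) := by
    rw [← hpart, ← hdvd]; exact hsplit.trans hfull
  have key2 : (p : ℂ) * ((m / p : ℕ) : ℂ) = (m : ℂ) := by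
    rw [← Nat.cast_mul, Nat.mul_div_cancel' hpm]
  exact mul_right_cancel₀ hne (key.trans key2.symm)

/-- counting lemma: product over `[1,N]` of `1-ζ^a` for `p∤a`, when `ord ζ = m`, `p ∣ m ∣ N`. -/
lemma prod_filter_not_dvd {p m N : ℕ} {ζ : ℂ} (hp : p.Prime) (hpm : p ∣ m) (hm : 0 < m)
    (h : IsPrimitiveRoot ζ m) (hmN : m ∣ N) :
    ∏ a ∈ (Finset.Icc 1 N).filter (fun a => ¬ p ∣ a), (1 - ζ ^ a) = (p : ℂ) ^ (N / m) := by
  set g : ℕ → ℂ := fun x => if p ∣ x then 1 else (1 - ζ ^ x) with hg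
  have hgper : ∀ j i : ℕ, g (m * j + i) = g i := by
    intro j i
    have hdvd : p ∣ m * j := Dvd.dvd.mul_right hpm j
    have hz : ζ ^ (m * j + i) = ζ ^ i := by
      rw [pow_add, pow_mul, h.pow_eq_one, one_pow, one_mul]
    simp only [hg, Nat.dvd_add_right hdvd, hz]
  have hstep : ∀ t : ℕ, ∏ i ∈ Finset.range (m * t), g (1 + i) = (p : ℂ) ^ t := by
    intro t
    induction t with
    | zero => simp
    | succ t ih =>
      have : m * (t + 1) = m * t + m := by ring
      rw [this, Finset.prod_range_add, ih]
      have : ∏ i ∈ Finset.range m, g (1 + (m * t + i)) = (p : ℂ) := by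
        have he : ∀ i, 1 + (m * t + i) = m * t + (i + 1) := by intro i; ring
        calc ∏ i ∈ Finset.range m, g (1 + (m * t + i))
            = ∏ i ∈ Finset.range m, g (i + 1) := by
              apply Finset.prod_congr rfl; intro i _; rw [he i, hgper t (i + 1)]
          _ = (p : ℂ) := prod_period hp hpm hm h
      rw [this, pow_succ]
  obtain ⟨t, rfl⟩ := hmN
  have hNd : m * t / m = t := Nat.mul_div_cancel_left t hm
  rw [hNd]
  have hfe : ∏ a ∈ (Finset.Icc 1 (m * t)).filter (fun a => ¬ p ∣ a), (1 - ζ ^ a) =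
      ∏ a ∈ Finset.Icc 1 (m * t), g a := by
    rw [Finset.prod_filter]
    apply Finset.prod_congr rfl
    intro a _
    by_cases ha : p ∣ a <;> simp [hg, ha]
  rw [hfe]
  have : Finset.Icc 1 (m * t) = Finset.Ico 1 (m * t + 1) := by
    rw [Finset.Ico_add_one_right_eq_Icc]
  rw [this, Finset.prod_Ico_eq_prod_range]
  simpa using hstep t

lemma borweinPoly_aeval (p s n : ℕ) (hp : p.Prime) (ζ : ℂ) :
    (Polynomial.aeval ζ) (borweinPoly p s n) =
      ∏ a ∈ (Finset.Icc 1 (p * n)).filter (fun a => ¬ p ∣ a), (1 - ζ ^ a) ^ s := by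
  have h2 : 2 ≤ p := hp.two_le
  rw [borweinPoly]
  rw [map_prod]
  simp only [map_prod, map_pow, map_sub, map_one, Polynomial.aeval_X_pow, Polynomial.aeval_X]
  rw [← Finset.prod_product']
  apply Finset.prod_bij (fun jk (_ : jk ∈ (Finset.Icc 1 n) ×ˢ (Finset.Icc 1 (p-1))) =>
    p * jk.1 - jk.2)
  · rintro ⟨j, k⟩ hjk
    simp only [Finset.mem_product, Finset.mem_Icc] at hjk
    obtain ⟨⟨hj1, hj2⟩, hk1, hk2⟩ := hjk
    simp only [Finset.mem_filter, Finset.mem_Icc]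
    have hpj : p * 1 ≤ p * j := Nat.mul_le_mul_left p hj1
    have hpj' : p * j ≤ p * n := Nat.mul_le_mul_left p hj2
    have hp1 : p * 1 = p := by ring
    refine ⟨⟨by omega, by omega⟩, ?_⟩
    intro hdvd
    have hk : p ∣ k := by
      have h1 : p ∣ p * j := Dvd.intro j rfl
      have := Nat.dvd_sub h1 hdvd
      have he : p * j - (p * j - k) = k := by omega
      rwa [he] at this
    have := Nat.le_of_dvd (by omega) hk
    omega
  · rintro ⟨j1, k1⟩ h1 ⟨j2, k2⟩ h2' heq
    simp only [Finset.mem_product, Finset.mem_Icc] at h1 h2'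
    dsimp only at heq
    obtain ⟨⟨hj1, hj2⟩, hk1, hk2⟩ := h1
    obtain ⟨⟨hj1', hj2'⟩, hk1', hk2'⟩ := h2'
    have hpj : p * 1 ≤ p * j1 := Nat.mul_le_mul_left p hj1
    have hpj' : p * 1 ≤ p * j2 := Nat.mul_le_mul_left p hj1'
    have hp1 : p * 1 = p := by ring
    have key : j1 = j2 := by
      rcases Nat.lt_trichotomy j1 j2 with h | h | h
      · exfalso
        have hle : p * (j1 + 1) ≤ p * j2 := Nat.mul_le_mul_left p h
        have he : p * (j1 + 1) = p * j1 + p := by ring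
        omega
      · exact h
      · exfalso
        have hle : p * (j2 + 1) ≤ p * j1 := Nat.mul_le_mul_left p h
        have he : p * (j2 + 1) = p * j2 + p := by ring
        omega
    subst key
    have : k1 = k2 := by omega
    simp [this]
  · intro a ha
    simp only [Finset.mem_filter, Finset.mem_Icc] at ha
    obtain ⟨⟨ha1, ha2⟩, hnd⟩ := ha
    have hrp : a % p < p := Nat.mod_lt _ hp.pos
    have hqr : p * (a / p) + a % p = a := Nat.div_add_mod a p
    have hr0 : a % p ≠ 0 := fun h0 => hnd (Nat.dvd_of_mod_eq_zero h0)
    have he : p * (a / p + 1) = p * (a / p) + p := by ring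
    refine ⟨(a / p + 1, p - a % p), ?_, ?_⟩
    · simp only [Finset.mem_product, Finset.mem_Icc]
      have hqn : a / p + 1 ≤ n := by
        by_contra hc
        push_neg at hc
        have hle : n ≤ a / p := by omega
        have hcc : p * n ≤ p * (a / p) := Nat.mul_le_mul_left p hle
        omega
      exact ⟨⟨Nat.le_add_left 1 _, hqn⟩, by omega, by omega⟩
    · dsimp only
      omega
  · rintro ⟨j, k⟩ hjk
    dsimp only

lemma aeval_eq_zero_of_not_dvd {p s n : ℕ} (hp : p.Prime) (hs : 1 ≤ s) (hn : 1 ≤ n)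
    {ζ : ℂ} {m : ℕ} (h : IsPrimitiveRoot ζ m) (hm : 0 < m) (hmd : m ∣ 2 * p * n)
    (hpm : ¬ p ∣ m) : (Polynomial.aeval ζ) (borweinPoly p s n) = 0 := by
  rw [borweinPoly_aeval p s n hp]
  have hcop : Nat.Coprime m p := (Nat.coprime_comm.mp ((Nat.Prime.coprime_iff_not_dvd hp).mpr hpm))
  have hm2n : m ∣ 2 * n := by
    have h1 : m ∣ p * (2 * n) := by
      have : p * (2 * n) = 2 * p * n := by ring
      rwa [this]
    exact (Nat.Coprime.dvd_of_dvd_mul_left hcop h1)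
  have hmle : m ≤ p * n := by
    have h1 : m ≤ 2 * n := Nat.le_of_dvd (by omega) hm2n
    have h2 : 2 * n ≤ p * n := Nat.mul_le_mul_right n hp.two_le
    omega
  apply Finset.prod_eq_zero (i := m)
  · simp only [Finset.mem_filter, Finset.mem_Icc]
    exact ⟨⟨hm, hmle⟩, hpm⟩
  · rw [h.pow_eq_one, sub_self, zero_pow (by omega)]

lemma aeval_primitive_p {p s n : ℕ} (hp : p.Prime) {ζ : ℂ} (h : IsPrimitiveRoot ζ p) :
    (Polynomial.aeval ζ) (borweinPoly p s n) = (p : ℂ) ^ (n * s) := by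
  rw [borweinPoly_aeval p s n hp, Finset.prod_pow]
  rw [prod_filter_not_dvd hp dvd_rfl hp.pos h (Dvd.intro n rfl)]
  rw [Nat.mul_div_cancel_left n hp.pos, ← pow_mul]

lemma aeval_mul_conj {p s n : ℕ} (hp : p.Prime) (hn : 1 ≤ n) {ζ : ℂ} {m : ℕ}
    (h : IsPrimitiveRoot ζ m) (hm : 0 < m) (hmd : m ∣ 2 * p * n) (hpm : p ∣ m) :
    (Polynomial.aeval ζ) (borweinPoly p s n) *
      (starRingEnd ℂ) ((Polynomial.aeval ζ) (borweinPoly p s n)) =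
      (p : ℂ) ^ (s * (2 * p * n / m)) := by
  have hd0 : 0 < 2 * p * n := Nat.mul_pos (Nat.mul_pos (by norm_num) hp.pos) hn
  have hD : 2 * p * n = p * n + p * n := by ring
  have hζd : ζ ^ (2 * p * n) = 1 := by
    obtain ⟨c, hc⟩ := hmd
    rw [hc, pow_mul, h.pow_eq_one, one_pow]
  have hnorm : ‖ζ‖ = 1 := Complex.norm_eq_one_of_pow_eq_one hζd hd0.ne'
  have hconj : (starRingEnd ℂ) ζ = ζ⁻¹ := (Complex.inv_eq_conj hnorm).symm
  have hpd : p ∣ 2 * p * n := ⟨2 * n, by ring⟩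
  have hpnd : p * n ≤ 2 * p * n := by
    have : 2 * p * n = p * n + p * n := by ring
    omega
  rw [borweinPoly_aeval p s n hp, map_prod]
  have hc2 : ∀ a ∈ (Finset.Icc 1 (p * n)).filter (fun a => ¬ p ∣ a),
      (starRingEnd ℂ) ((1 - ζ ^ a) ^ s) = (1 - ζ ^ (2 * p * n - a)) ^ s := by
    intro a ha
    simp only [Finset.mem_filter, Finset.mem_Icc] at ha
    rw [map_pow, map_sub, map_one, map_pow, hconj]
    congr 2
    rw [inv_pow]
    symm
    apply eq_inv_of_mul_eq_one_left
    rw [← pow_add]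
    have : 2 * p * n - a + a = 2 * p * n := by omega
    rw [this, hζd]
  rw [Finset.prod_congr rfl hc2]
  have hbij : ∏ a ∈ (Finset.Icc 1 (p * n)).filter (fun a => ¬ p ∣ a),
      (1 - ζ ^ (2 * p * n - a)) ^ s =
      ∏ b ∈ ((Finset.Icc 1 (2 * p * n)).filter (fun a => ¬ p ∣ a)) \
        ((Finset.Icc 1 (p * n)).filter (fun a => ¬ p ∣ a)), (1 - ζ ^ b) ^ s := by
    apply Finset.prod_nbij' (fun a => 2 * p * n - a) (fun b => 2 * p * n - b)
    · intro a ha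
      simp only [Finset.mem_filter, Finset.mem_Icc] at ha
      obtain ⟨⟨ha1, ha2⟩, hnd⟩ := ha
      have hnd' : ¬ p ∣ (2 * p * n - a) := by
        intro hdd
        apply hnd
        have := Nat.dvd_sub hpd hdd
        have he : 2 * p * n - (2 * p * n - a) = a := by omega
        rwa [he] at this
      simp only [Finset.mem_sdiff, Finset.mem_filter, Finset.mem_Icc]
      have hppn : ¬ p ∣ p * n → False := fun hq => hq ⟨n, rfl⟩
      refine ⟨⟨⟨by omega, by omega⟩, hnd'⟩, ?_⟩
      intro hcon
      obtain ⟨⟨hc1, hc2⟩, _⟩ := hcon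
      -- 2*p*n - a ≤ p*n forces 2*p*n - a = p*n (since a ≤ p*n), i.e. a = p*n, but p ∣ p*n
      have hap : a = p * n := by omega
      exact hnd (hap ▸ ⟨n, rfl⟩)
    · intro b hb
      simp only [Finset.mem_sdiff, Finset.mem_filter, Finset.mem_Icc] at hb
      obtain ⟨⟨⟨hb1, hb2⟩, hnd⟩, hnotA⟩ := hb
      have hbgt : ¬ (b ≤ p * n) := by
        intro hble
        exact hnotA ⟨⟨hb1, hble⟩, hnd⟩
      push_neg at hbgt
      have hbne : b ≠ 2 * p * n := by
        intro hbe
        exact hnd (hbe ▸ ⟨2 * n, by ring⟩)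
      simp only [Finset.mem_filter, Finset.mem_Icc]
      refine ⟨⟨by omega, by omega⟩, ?_⟩
      intro hdd
      apply hnd
      have := Nat.dvd_sub hpd hdd
      have he : 2 * p * n - (2 * p * n - b) = b := by omega
      rwa [he] at this
    · intro a ha
      simp only [Finset.mem_filter, Finset.mem_Icc] at ha
      omega
    · intro b hb
      simp only [Finset.mem_sdiff, Finset.mem_filter, Finset.mem_Icc] at hb
      omega
    · intro a ha
      rfl
  rw [hbij, mul_comm,
    Finset.prod_sdiff (Finset.filter_subset_filter _ (Finset.Icc_subset_Icc_right hpnd)),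
    Finset.prod_pow, prod_filter_not_dvd hp hpm hm h hmd, ← pow_mul, Nat.mul_comm]

lemma geom_ite {d : ℕ} {x : ℂ} (hx : x ^ d = 1) :
    ∑ j ∈ Finset.range d, x ^ j = if x = 1 then (d : ℂ) else 0 := by
  by_cases h1 : x = 1
  · simp [h1]
  · rw [if_neg h1, geom_sum_eq h1, hx, sub_self, zero_div]

lemma orth {d : ℕ} (hd : 0 < d) {ω : ℂ} (hω : IsPrimitiveRoot ω d) (F : Polynomial ℤ) (b : ℤ) :
    ((∑ i ∈ F.support, if (i : ℤ) % d = b % d then F.coeff i else 0 : ℤ) : ℂ) * d =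
      ∑ j ∈ Finset.range d, ω ^ (-((j : ℤ) * b)) * (Polynomial.aeval (ω ^ j)) F := by
  have hω0 : ω ≠ 0 := hω.ne_zero hd.ne'
  have hωd : ω ^ (d : ℤ) = 1 := by rw [zpow_natCast, hω.pow_eq_one]
  have heval : ∀ j : ℕ, (Polynomial.aeval (ω ^ j)) F =
      ∑ i ∈ F.support, (F.coeff i : ℂ) * (ω ^ j) ^ i := by
    intro j
    rw [Polynomial.aeval_def, Polynomial.eval₂_eq_sum, Polynomial.sum_def]
    simp
  symm
  calc ∑ j ∈ Finset.range d, ω ^ (-((j : ℤ) * b)) * (Polynomial.aeval (ω ^ j)) F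
      = ∑ j ∈ Finset.range d, ∑ i ∈ F.support,
          (F.coeff i : ℂ) * (ω ^ ((i : ℤ) - b)) ^ j := by
        apply Finset.sum_congr rfl
        intro j _
        rw [heval j, Finset.mul_sum]
        apply Finset.sum_congr rfl
        intro i _
        rw [← zpow_natCast (ω ^ j) i, ← zpow_natCast ω j, ← zpow_mul,
          ← zpow_natCast (ω ^ ((i : ℤ) - b)) j, ← zpow_mul,
          mul_left_comm, ← zpow_add₀ hω0]
        congr 2
        ring
    _ = ∑ i ∈ F.support, (F.coeff i : ℂ) *
          (if ω ^ ((i : ℤ) - b) = 1 then (d : ℂ) else 0) := by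
        rw [Finset.sum_comm]
        apply Finset.sum_congr rfl
        intro i _
        rw [← Finset.mul_sum]
        congr 1
        apply geom_ite
        rw [← zpow_natCast (ω ^ ((i : ℤ) - b)) d, ← zpow_mul, mul_comm, zpow_mul, hωd, one_zpow]
    _ = ((∑ i ∈ F.support, if (i : ℤ) % d = b % d then F.coeff i else 0 : ℤ) : ℂ) * d := by
        push_cast
        rw [Finset.sum_mul]
        apply Finset.sum_congr rfl
        intro i _
        have hiff : ω ^ ((i : ℤ) - b) = 1 ↔ (i : ℤ) % d = b % d := by
          rw [hω.zpow_eq_one_iff_dvd, Int.emod_eq_emod_iff_emod_sub_eq_zero]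
          exact ⟨Int.emod_eq_zero_of_dvd, Int.dvd_of_emod_eq_zero⟩
        by_cases hcond : (i : ℤ) % d = b % d
        · rw [if_pos (hiff.mpr hcond), if_pos hcond, mul_comm]
        · rw [if_neg (fun hq => hcond (hiff.mp hq)), if_neg hcond, mul_zero, zero_mul]

theorem sum_coeff_mod_two_p_n (p s n : ℕ) (hp : p.Prime) (hodd : Odd p)
    (hs : 1 ≤ s) (hn : 1 ≤ n) (b : ℤ) :
    |(borweinS p s n (2 * p * n) b : ℝ) -
        (borweinV p b : ℝ) * (p : ℝ) ^ (s * n) / (2 * p * n)| ≤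
      (p : ℝ) ^ (((s * n : ℕ) : ℝ) / 2) := by
  have hp2 := hp.two_le
  have hd0 : 0 < 2 * p * n := Nat.mul_pos (Nat.mul_pos (by norm_num) hp.pos) hn
  have hDD : 2 * p * n = p * n + p * n := by ring
  obtain ⟨ω, hω⟩ : ∃ ω : ℂ, IsPrimitiveRoot ω (2 * p * n) :=
    ⟨_, Complex.isPrimitiveRoot_exp _ hd0.ne'⟩
  have hωd : ω ^ (2 * p * n) = 1 := hω.pow_eq_one
  have hω0 : ω ≠ 0 := hω.ne_zero hd0.ne'
  have hnormω : ‖ω‖ = 1 := Complex.norm_eq_one_of_pow_eq_one hωd hd0.ne'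
  set F := borweinPoly p s n with hF
  set g : ℕ → ℂ := fun j => ω ^ (-((j : ℤ) * b)) * (Polynomial.aeval (ω ^ j)) F with hg
  have hS : ((borweinS p s n (2 * p * n) b : ℤ) : ℂ) * (2 * p * n : ℕ) =
      ∑ j ∈ Finset.range (2 * p * n), g j := by
    rw [borweinS]
    exact orth hd0 hω F b
  -- the p-th root of unity
  set η : ℂ := ω ^ (2 * n) with hηdef
  have hη : IsPrimitiveRoot η p := hω.pow hd0 (by ring)
  set T : Finset ℕ := (Finset.range p).image (fun t => t * (2 * n)) with hT
  have h2n0 : 0 < 2 * n := by omega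
  have hTsub : T ⊆ Finset.range (2 * p * n) := by
    intro j hj
    simp only [hT, Finset.mem_image, Finset.mem_range] at hj
    obtain ⟨t, ht, rfl⟩ := hj
    simp only [Finset.mem_range]
    calc t * (2 * n) < p * (2 * n) := (Nat.mul_lt_mul_right h2n0).mpr ht
      _ = 2 * p * n := by ring
  -- main term
  have hTsum : ∑ j ∈ T, g j = ((borweinV p b : ℤ) : ℂ) * (p : ℂ) ^ (n * s) := by
    rw [hT, Finset.sum_image (fun a _ c _ h => Nat.eq_of_mul_eq_mul_right h2n0 h)]
    have hgt : ∀ t ∈ Finset.range p, g (t * (2 * n)) =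
        (η ^ (-b)) ^ t * (p : ℂ) ^ (n * s) - (if t = 0 then (p : ℂ) ^ (n * s) else 0) := by
      intro t ht
      by_cases ht0 : t = 0
      · subst ht0
        have h1 : (Polynomial.aeval ((1:ℂ))) F = 0 := by
          apply aeval_eq_zero_of_not_dvd hp hs hn (IsPrimitiveRoot.one) one_pos
            (one_dvd _)
          intro hq
          have := Nat.le_of_dvd one_pos hq
          omega
        simp only [hg, Nat.zero_mul, pow_zero, Nat.cast_zero, neg_zero, zero_mul, zpow_zero,
          one_mul, h1, mul_zero, if_pos rfl]
        simp
      · have hcop : Nat.Coprime t p := by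
          rw [Nat.coprime_comm]
          apply (Nat.Prime.coprime_iff_not_dvd hp).mpr
          intro hdvd
          have := Nat.le_of_dvd (Nat.pos_of_ne_zero ht0) hdvd
          simp only [Finset.mem_range] at ht
          omega
        have hζp : IsPrimitiveRoot (η ^ t) p := hη.pow_of_coprime t hcop
        have hval : (Polynomial.aeval (ω ^ (t * (2 * n)))) F = (p : ℂ) ^ (n * s) := by
          rw [show ω ^ (t * (2 * n)) = η ^ t by rw [hηdef, ← pow_mul, mul_comm]]
          exact aeval_primitive_p hp hζp
        have e0 : η = ω ^ ((2 * n : ℕ) : ℤ) := by rw [hηdef, zpow_natCast]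
        have e1 : η ^ (-b) = ω ^ (((2 * n : ℕ) : ℤ) * (-b)) := by rw [e0, ← zpow_mul]
        have e2 : (η ^ (-b)) ^ t = ω ^ (((2 * n : ℕ) : ℤ) * (-b) * t) := by
          rw [e1, ← zpow_natCast (ω ^ (((2 * n : ℕ) : ℤ) * (-b))) t, ← zpow_mul]
        simp only [hg, hval, if_neg ht0, sub_zero]
        rw [e2]
        congr 2
        push_cast
        ring
    rw [Finset.sum_congr rfl hgt, Finset.sum_sub_distrib, ← Finset.sum_mul]
    have hgeo : ∑ t ∈ Finset.range p, (η ^ (-b)) ^ t =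
        if η ^ (-b) = 1 then (p : ℂ) else 0 := by
      apply geom_ite
      rw [← zpow_natCast (η ^ (-b)) p, ← zpow_mul, mul_comm, zpow_mul, zpow_natCast,
        hη.pow_eq_one, one_zpow]
    have hite : ∑ t ∈ Finset.range p, (if t = 0 then (p : ℂ) ^ (n * s) else 0) =
        (p : ℂ) ^ (n * s) := by
      rw [Finset.sum_ite_eq' (Finset.range p) 0 (fun _ => (p : ℂ) ^ (n * s))]
      rw [if_pos (Finset.mem_range.mpr hp.pos)]
    rw [hgeo, hite]
    have hiff : η ^ (-b) = 1 ↔ (p : ℤ) ∣ b := by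
      rw [hη.zpow_eq_one_iff_dvd, dvd_neg]
    rw [borweinV]
    by_cases hb : (p : ℤ) ∣ b
    · rw [if_pos (hiff.mpr hb), if_pos hb]
      push_cast
      ring
    · rw [if_neg (fun hq => hb (hiff.mp hq)), if_neg hb]
      push_cast
      ring
  -- error bound
  have hrest : ∀ j ∈ Finset.range (2 * p * n) \ T, ‖g j‖ ≤ Real.sqrt ((p : ℝ) ^ (s * n)) := by
    intro j hj
    rw [Finset.mem_sdiff, Finset.mem_range] at hj
    obtain ⟨hjD, hjT⟩ := hj
    have hζD : (ω ^ j) ^ (2 * p * n) = 1 := by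
      rw [← pow_mul, mul_comm, pow_mul, hωd, one_pow]
    have hford : IsOfFinOrder (ω ^ j) := isOfFinOrder_iff_pow_eq_one.mpr ⟨2 * p * n, hd0, hζD⟩
    have hprim : IsPrimitiveRoot (ω ^ j) (orderOf (ω ^ j)) := IsPrimitiveRoot.orderOf (ω ^ j)
    set m := orderOf (ω ^ j) with hmdef
    have hm0 : 0 < m := hford.orderOf_pos
    have hmD : m ∣ 2 * p * n := orderOf_dvd_of_pow_eq_one hζD
    have hζpne : (ω ^ j) ^ p ≠ 1 := by
      intro hone
      apply hjT
      rw [← pow_mul] at hone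
      have hdvd : 2 * p * n ∣ j * p := hω.dvd_of_pow_eq_one _ hone
      have hdvd' : (2 * n) * p ∣ j * p := by
        have : (2 * n) * p = 2 * p * n := by ring
        rwa [this]
      have h2nj : 2 * n ∣ j := Nat.dvd_of_mul_dvd_mul_right hp.pos hdvd'
      obtain ⟨t, rfl⟩ := h2nj
      have htp : t < p := by
        by_contra hc
        push_neg at hc
        have : 2 * n * p ≤ 2 * n * t := Nat.mul_le_mul_left (2 * n) hc
        have he : 2 * n * p = 2 * p * n := by ring
        omega
      rw [hT]
      simp only [Finset.mem_image, Finset.mem_range]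
      exact ⟨t, htp, by ring⟩
    have hmp : ¬ m ∣ p := fun hdvd => hζpne (orderOf_dvd_iff_pow_eq_one.mp hdvd)
    have hgn : ‖g j‖ = ‖(Polynomial.aeval (ω ^ j)) F‖ := by
      simp only [hg, norm_mul, norm_zpow, hnormω, one_zpow, one_mul]
    by_cases hpm : p ∣ m
    · have hmne : m ≠ p := fun he => hmp (he ▸ dvd_rfl)
      have hge : 2 * p ≤ m := by
        have hpc : p * (m / p) = m := Nat.mul_div_cancel' hpm
        have hc2 : 2 ≤ m / p := by
          rcases Nat.lt_or_ge (m / p) 2 with hlt | hge'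
          · interval_cases h : (m / p) <;> omega
          · exact hge'
        have hmul : p * 2 ≤ p * (m / p) := Nat.mul_le_mul_left p hc2
        omega
      have hdm : 2 * p * n / m ≤ n := by
        have h1 : 2 * p * n / m ≤ 2 * p * n / (2 * p) := Nat.div_le_div_left hge (by omega)
        have h2 : 2 * p * n / (2 * p) = n := Nat.mul_div_cancel_left n (by omega)
        omega
      have hmc := aeval_mul_conj (s := s) hp hn hprim hm0 hmD hpm
      have hns : Complex.normSq ((Polynomial.aeval (ω ^ j)) F) =
          (p : ℝ) ^ (s * (2 * p * n / m)) := by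
        rw [Complex.mul_conj] at hmc
        exact_mod_cast hmc
      rw [hgn, Complex.norm_def, hns]
      apply Real.sqrt_le_sqrt
      apply pow_le_pow_right₀ (by exact_mod_cast hp.one_lt.le)
      exact Nat.mul_le_mul_left s hdm
    · rw [hgn, hF, aeval_eq_zero_of_not_dvd hp hs hn hprim hm0 hmD hpm, norm_zero]
      positivity
  -- combine
  have hsum : ∑ j ∈ Finset.range (2 * p * n), g j =
      (∑ j ∈ Finset.range (2 * p * n) \ T, g j) + ∑ j ∈ T, g j :=
    (Finset.sum_sdiff hTsub).symm
  set E : ℂ := ∑ j ∈ Finset.range (2 * p * n) \ T, g j with hE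
  have hEb : ‖E‖ ≤ (2 * p * n : ℕ) * Real.sqrt ((p : ℝ) ^ (s * n)) := by
    calc ‖E‖ ≤ ∑ j ∈ Finset.range (2 * p * n) \ T, ‖g j‖ := norm_sum_le _ _
      _ ≤ (Finset.range (2 * p * n) \ T).card • Real.sqrt ((p : ℝ) ^ (s * n)) :=
          Finset.sum_le_card_nsmul _ _ _ hrest
      _ ≤ (2 * p * n : ℕ) * Real.sqrt ((p : ℝ) ^ (s * n)) := by
          rw [nsmul_eq_mul]
          apply mul_le_mul_of_nonneg_right _ (Real.sqrt_nonneg _)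
          have hcard : (Finset.range (2 * p * n) \ T).card ≤ 2 * p * n := by
            calc (Finset.range (2 * p * n) \ T).card ≤ (Finset.range (2 * p * n)).card :=
                Finset.card_le_card (Finset.sdiff_subset)
              _ = 2 * p * n := Finset.card_range _
          exact_mod_cast hcard
  have hDC : ((2 * p * n : ℕ) : ℂ) ≠ 0 := by exact_mod_cast hd0.ne'
  have hkey : ((borweinS p s n (2 * p * n) b : ℤ) : ℂ) -
      ((borweinV p b : ℤ) : ℂ) * (p : ℂ) ^ (n * s) / ((2 * p * n : ℕ) : ℂ) =
      E / ((2 * p * n : ℕ) : ℂ) := by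
    rw [eq_div_iff hDC, sub_mul, div_mul_cancel₀ _ hDC, hS, hsum, hTsum]
    ring
  -- final conversion to the real goal
  have hRHS : (p : ℝ) ^ (((s * n : ℕ) : ℝ) / 2) = Real.sqrt ((p : ℝ) ^ (s * n)) := by
    rw [Real.sqrt_eq_rpow, ← Real.rpow_natCast (p : ℝ) (s * n),
      ← Real.rpow_mul (Nat.cast_nonneg p)]
    congr 1
    ring
  rw [hRHS]
  have hL : |(borweinS p s n (2 * p * n) b : ℝ) -
      (borweinV p b : ℝ) * (p : ℝ) ^ (s * n) / (2 * p * n)| = ‖E‖ / ((2 * p * n : ℕ) : ℝ) := by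
    have hcast : (((borweinS p s n (2 * p * n) b : ℝ) -
        (borweinV p b : ℝ) * (p : ℝ) ^ (s * n) / (2 * p * n) : ℝ) : ℂ) =
        E / ((2 * p * n : ℕ) : ℂ) := by
      rw [← hkey]
      push_cast
      rw [mul_comm n s]
    calc |(borweinS p s n (2 * p * n) b : ℝ) -
        (borweinV p b : ℝ) * (p : ℝ) ^ (s * n) / (2 * p * n)|
        = ‖(((borweinS p s n (2 * p * n) b : ℝ) -
            (borweinV p b : ℝ) * (p : ℝ) ^ (s * n) / (2 * p * n) : ℝ) : ℂ)‖ := by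
          rw [Complex.norm_real]; rfl
      _ = ‖E / ((2 * p * n : ℕ) : ℂ)‖ := by rw [hcast]
      _ = ‖E‖ / ((2 * p * n : ℕ) : ℝ) := by
          rw [norm_div]
          congr 1
          exact_mod_cast Complex.norm_natCast _
  rw [hL]
  rw [div_le_iff₀ (by exact_mod_cast hd0 : (0:ℝ) < ((2 * p * n : ℕ) : ℝ))]
  calc ‖E‖ ≤ ((2 * p * n : ℕ) : ℝ) * Real.sqrt ((p : ℝ) ^ (s * n)) := hEb
    _ = Real.sqrt ((p : ℝ) ^ (s * n)) * ((2 * p * n : ℕ) : ℝ) := by ring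
end

section
/- (Li) Let n ≥ 1 and b be integers, and let a_i denote the coefficient of q^i in the polynomial ∏_{j=1}^n ∏_{k=1}^{2} (1−q^{3j−k}) (the case p=3, s=1). Then |S_{3n,b} − v(b)·3^n/(3n)| ≤ 2^n, where v(b) = 2 if 3 divides b and v(b) = −1 otherwise. -/
open Polynomial Finset

/-- The polynomial `∏_{j=1}^n ∏_{k=1}^{2} (1 - q^{3j-k})` in `ℤ[q]` (the case `p = 3`, `s = 1`). -/
noncomputable def borweinPoly3 (n : ℕ) : Polynomial ℤ :=
  ∏ j ∈ Finset.Icc 1 n, ∏ k ∈ Finset.Icc 1 2,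
    (1 - (Polynomial.X : Polynomial ℤ) ^ (3 * j - k))

/-- `S d b = ∑_{i ≡ b (mod d)} a_i`, the sum of the coefficients of `borweinPoly3 n`
over the arithmetic progression `i ≡ b (mod d)`. -/
noncomputable def borweinS3 (n : ℕ) (d : ℕ) (b : ℤ) : ℤ :=
  ∑ i ∈ (borweinPoly3 n).support,
    if (i : ℤ) % d = b % d then (borweinPoly3 n).coeff i else 0

/-- `v b = 2` if `3 ∣ b`, and `v b = -1` otherwise. -/
def borweinV3 (b : ℤ) : ℤ := if (3 : ℤ) ∣ b then 2 else -1

namespace LiAux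

lemma aeval_borwein (n : ℕ) (x : ℂ) :
    (Polynomial.aeval x) (borweinPoly3 n)
      = ∏ j ∈ Finset.range n, ((1 - x ^ (3 * j + 1)) * (1 - x ^ (3 * j + 2))) := by
  have h2 : (Finset.Icc 1 2 : Finset ℕ) = {1, 2} := rfl
  rw [borweinPoly3, map_prod, ← Finset.Ico_add_one_right_eq_Icc, Finset.prod_Ico_eq_prod_range]
  apply Finset.prod_congr rfl
  intro j hj
  rw [h2, Finset.prod_pair (by norm_num : (1:ℕ) ≠ 2)]
  have e1 : 3 * (1 + j) - 1 = 3 * j + 2 := by omega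
  have e2 : 3 * (1 + j) - 2 = 3 * j + 1 := by omega
  simp only [map_mul, map_sub, map_one, map_pow, aeval_X, e1, e2]
  ring

lemma geom_sum_root {N : ℕ} (hN : N ≠ 0) {ξ : ℂ} (h : ξ ^ N = 1) :
    ∑ t ∈ Finset.range N, ξ ^ t = if ξ = 1 then (N : ℂ) else 0 := by
  split_ifs with h1
  · simp [h1]
  · rw [geom_sum_eq h1, h]
    simp

lemma prod_periodic (g : ℕ → ℂ) (m : ℕ) (hper : ∀ j, g (j + m) = g j) (k : ℕ) :
    ∏ j ∈ Finset.range (m * k), g j = (∏ j ∈ Finset.range m, g j) ^ k := by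
  have hshift : ∀ k j, g (m * k + j) = g j := by
    intro k
    induction k with
    | zero => simp
    | succ k ih =>
      intro j
      have : m * (k + 1) + j = (m * k + j) + m := by ring
      rw [this, hper, ih]
  induction k with
  | zero => simp
  | succ k ih =>
    rw [Nat.mul_succ, Finset.prod_range_add, ih, pow_succ]
    congr 1
    exact Finset.prod_congr rfl fun j _ => hshift k j

lemma prod_split3 (F : ℕ → ℂ) (M : ℕ) :
    ∏ i ∈ Finset.range (3 * M + 2), F (i + 1)
      = (∏ j ∈ Finset.range (M + 1), (F (3 * j + 1) * F (3 * j + 2)))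
        * ∏ j ∈ Finset.range M, F (3 * j + 3) := by
  induction M with
  | zero => simp [Finset.prod_range_succ]
  | succ M ih =>
    have h5 : 3 * (M + 1) + 2 = (3 * M + 2) + 1 + 1 + 1 := by ring
    rw [h5, Finset.prod_range_succ, Finset.prod_range_succ, Finset.prod_range_succ, ih,
      Finset.prod_range_succ (fun j => F (3 * j + 1) * F (3 * j + 2)) (M + 1),
      Finset.prod_range_succ (fun j => F (3 * j + 3)) M]
    rw [show 3 * M + 4 + 1 = 3 * (M + 1) + 2 from by omega,
      show 3 * M + 3 + 1 = 3 * (M + 1) + 1 from by omega,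
      show 3 * M + 2 + 1 = 3 * M + 3 from by omega]
    ring

lemma base_prod {m : ℕ} {ζ : ℂ} (hζ : IsPrimitiveRoot ζ (3 * (m + 1))) :
    ∏ j ∈ Finset.range (m + 1), ((1 - ζ ^ (3 * j + 1)) * (1 - ζ ^ (3 * j + 2))) = 3 := by
  have h3m : 3 * (m + 1) = (3 * m + 2) + 1 := by ring
  have hζ' : IsPrimitiveRoot ζ ((3 * m + 2) + 1) := h3m ▸ hζ
  have hA := hζ'.prod_one_sub_pow_eq_order
  have hζ3 : IsPrimitiveRoot (ζ ^ 3) (m + 1) := hζ.pow (by positivity) rfl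
  have hB := hζ3.prod_one_sub_pow_eq_order
  have hB' : ∏ j ∈ Finset.range m, (1 - ζ ^ (3 * j + 3)) = (m : ℂ) + 1 := by
    rw [← hB]
    apply Finset.prod_congr rfl
    intro j _
    rw [← pow_mul]
    ring
  have hsplit := prod_split3 (fun i => 1 - ζ ^ i) m
  rw [hsplit, hB'] at hA
  have hm1 : ((m : ℂ) + 1) ≠ 0 := by
    have : ((m + 1 : ℕ) : ℂ) ≠ 0 := Nat.cast_ne_zero.mpr (Nat.succ_ne_zero m)
    push_cast at this
    exact this
  field_simp at hA
  exact mul_right_cancel₀ hm1 (by rw [hA]; push_cast; ring)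

lemma eval_root_three_dvd {n m : ℕ} (hm : 0 < m) (hdvd : m ∣ n) {ζ : ℂ}
    (hζ : IsPrimitiveRoot ζ (3 * m)) :
    (Polynomial.aeval ζ) (borweinPoly3 n) = 3 ^ (n / m) := by
  rw [aeval_borwein]
  obtain ⟨m', rfl⟩ : ∃ m', m = m' + 1 := ⟨m - 1, by omega⟩
  set g : ℕ → ℂ := fun j => (1 - ζ ^ (3 * j + 1)) * (1 - ζ ^ (3 * j + 2)) with hg
  have hper : ∀ j, g (j + (m' + 1)) = g j := by
    intro j
    have hz : ζ ^ (3 * (m' + 1)) = 1 := hζ.pow_eq_one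
    simp only [hg]
    have e1 : 3 * (j + (m' + 1)) + 1 = (3 * j + 1) + 3 * (m' + 1) := by ring
    have e2 : 3 * (j + (m' + 1)) + 2 = (3 * j + 2) + 3 * (m' + 1) := by ring
    rw [e1, e2, pow_add ζ (3 * j + 1) (3 * (m' + 1)), pow_add ζ (3 * j + 2) (3 * (m' + 1)), hz, mul_one, mul_one]
  obtain ⟨k, rfl⟩ := hdvd
  rw [prod_periodic g (m' + 1) hper k]
  simp only [hg]
  rw [base_prod hζ]
  congr 1
  exact (Nat.mul_div_cancel_left k (by omega)).symm

lemma eval_root_not_three {n m : ℕ} (hn : 0 < n) (hdvd : m ∣ n) (h3 : ¬ (3 ∣ m)) {ζ : ℂ}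
    (hζ : IsPrimitiveRoot ζ m) :
    (Polynomial.aeval ζ) (borweinPoly3 n) = 0 := by
  rw [aeval_borwein]
  have hm : 0 < m := Nat.pos_of_dvd_of_pos hdvd hn
  have hcop : Nat.Coprime 3 m := (Nat.prime_three.coprime_iff_not_dvd).mpr h3
  have hb := Nat.gcd_eq_gcd_ab 3 m
  rw [hcop] at hb
  set a := Nat.gcdA 3 m with ha
  set c := Nat.gcdB 3 m with hc
  push_cast at hb
  have hmom : (0:ℤ) < (m:ℤ) := by exact_mod_cast hm
  set u : ℤ := (-a) % (m:ℤ) with hu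
  have hu0 : 0 ≤ u := Int.emod_nonneg _ (by omega)
  have hum : u < (m:ℤ) := Int.emod_lt_of_pos _ hmom
  have key : (m:ℤ) * ((-a) / m) + u = -a := Int.mul_ediv_add_emod (-a) m
  have hdvd1 : (m:ℤ) ∣ 3 * u + 1 := by
    refine ⟨c - 3 * ((-a) / m), ?_⟩
    linear_combination 3 * key + hb
  set j : ℕ := u.toNat with hj
  have hju : (j:ℤ) = u := Int.toNat_of_nonneg hu0
  have hjm : j < m := by omega
  have hjn : j ∈ Finset.range n := Finset.mem_range.mpr (lt_of_lt_of_le hjm (Nat.le_of_dvd hn hdvd))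
  have hdn : m ∣ 3 * j + 1 := by
    have : ((m:ℕ):ℤ) ∣ ((3 * j + 1 : ℕ) : ℤ) := by push_cast [hju]; exact hdvd1
    exact_mod_cast this
  have hone : ζ ^ (3 * j + 1) = 1 := (hζ.pow_eq_one_iff_dvd _).mpr hdn
  apply Finset.prod_eq_zero hjn
  rw [hone]
  ring

lemma aeval_eq_sum (P : Polynomial ℤ) (x : ℂ) :
    (Polynomial.aeval x) P = ∑ i ∈ P.support, (P.coeff i : ℂ) * x ^ i := by
  rw [aeval_def, eval₂_eq_sum, Polynomial.sum_def]
  simp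

lemma fourier {N : ℕ} (hN : N ≠ 0) {ζ : ℂ} (hζ : IsPrimitiveRoot ζ N) (b : ℤ) (c : ℕ)
    (hc : (c : ℤ) % N = (-b) % N) (n : ℕ) :
    ∑ t ∈ Finset.range N, ζ ^ (c * t) * (Polynomial.aeval (ζ ^ t)) (borweinPoly3 n)
      = (N : ℂ) * (borweinS3 n N b : ℂ) := by
  have hdc : (N : ℤ) ∣ (c : ℤ) + b := by
    have h1 : ((c : ℤ) - (-b)) % N = 0 := by
      rw [Int.sub_emod, hc, sub_self, Int.zero_emod]
    have := Int.dvd_of_emod_eq_zero h1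
    simpa using this
  have hcond : ∀ i : ℕ, (N ∣ c + i) ↔ ((i : ℤ) % (N : ℕ) = b % (N : ℕ)) := by
    intro i
    rw [Int.emod_eq_emod_iff_emod_sub_eq_zero, ← Int.dvd_iff_emod_eq_zero]
    constructor
    · intro h
      have h' : (N : ℤ) ∣ (c : ℤ) + i := by exact_mod_cast h
      have := dvd_sub h' hdc
      have e : ((c : ℤ) + i) - ((c : ℤ) + b) = (i : ℤ) - b := by ring
      rwa [e] at this
    · intro h
      have := dvd_add h hdc
      have e : ((i : ℤ) - b) + ((c : ℤ) + b) = (c : ℤ) + i := by ring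
      rw [e] at this
      exact_mod_cast this
  calc ∑ t ∈ Finset.range N, ζ ^ (c * t) * (Polynomial.aeval (ζ ^ t)) (borweinPoly3 n)
      = ∑ t ∈ Finset.range N, ∑ i ∈ (borweinPoly3 n).support,
          ((borweinPoly3 n).coeff i : ℂ) * (ζ ^ (c + i)) ^ t := by
        refine Finset.sum_congr rfl fun t _ => ?_
        rw [aeval_eq_sum, Finset.mul_sum]
        refine Finset.sum_congr rfl fun i _ => ?_
        rw [← pow_mul ζ t i, ← pow_mul ζ (c + i) t,
          show (c + i) * t = c * t + t * i from by ring, pow_add]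
        ring
    _ = ∑ i ∈ (borweinPoly3 n).support,
          ((borweinPoly3 n).coeff i : ℂ) * ∑ t ∈ Finset.range N, (ζ ^ (c + i)) ^ t := by
        rw [Finset.sum_comm]
        exact Finset.sum_congr rfl fun i _ => (Finset.mul_sum _ _ _).symm
    _ = ∑ i ∈ (borweinPoly3 n).support,
          (N : ℂ) * (if (i : ℤ) % (N : ℕ) = b % (N : ℕ) then ((borweinPoly3 n).coeff i : ℂ) else 0) := by
        refine Finset.sum_congr rfl fun i _ => ?_
        rw [geom_sum_root hN (by rw [← pow_mul, mul_comm, pow_mul, hζ.pow_eq_one, one_pow])]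
        simp only [hζ.pow_eq_one_iff_dvd (c + i), hcond i]
        split_ifs <;> ring
    _ = (N : ℂ) * (borweinS3 n N b : ℂ) := by
        rw [← Finset.mul_sum, borweinS3]
        push_cast
        rfl

lemma abs_of_root {N : ℕ} (hN : N ≠ 0) {x : ℂ} (h : x ^ N = 1) : ‖x‖ = 1 := by
  have h1 : ‖x‖ ^ N = 1 := by rw [← norm_pow, h, norm_one]
  rcases lt_trichotomy ‖x‖ 1 with hlt | heq | hgt
  · have := pow_lt_one₀ (norm_nonneg x) hlt hN
    rw [h1] at this; exact absurd this (lt_irrefl 1)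
  · exact heq
  · have := one_lt_pow₀ hgt hN
    rw [h1] at this; exact absurd this (lt_irrefl 1)

lemma abs_aeval_le {n : ℕ} (hn : 1 ≤ n) {ζ : ℂ} (hζ : IsPrimitiveRoot ζ (3 * n)) {t : ℕ}
    (ht : t < 3 * n) (ht1 : t ≠ n) (ht2 : t ≠ 2 * n) :
    ‖(Polynomial.aeval (ζ ^ t)) (borweinPoly3 n)‖ ≤ (3 : ℝ) ^ (n / 2) := by
  set N := 3 * n with hNdef
  have hN0 : 0 < N := by omega
  set g := Nat.gcd t N with hgdef
  have hg0 : 0 < g := Nat.gcd_pos_of_pos_right t hN0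
  have hgN : g ∣ N := Nat.gcd_dvd_right t N
  obtain ⟨m, hgm⟩ : ∃ m, g * m = N := ⟨N / g, Nat.mul_div_cancel' hgN⟩
  have hm0 : 0 < m := by
    rcases Nat.eq_zero_or_pos m with h | h
    · subst h; simp at hgm; omega
    · exact h
  have hprim : IsPrimitiveRoot (ζ ^ t) m := by
    have h1 : IsPrimitiveRoot (ζ ^ g) m := hζ.pow hN0 hgm.symm
    have h2 : ζ ^ t = (ζ ^ g) ^ (t / g) := by
      rw [← pow_mul, Nat.mul_div_cancel' (Nat.gcd_dvd_left t N)]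
    rw [h2]
    have hcop : Nat.Coprime (t / g) (N / g) := Nat.coprime_div_gcd_div_gcd hg0
    have hNg : N / g = m := by
      rw [← hgm, Nat.mul_div_cancel_left m hg0]
    rw [hNg] at hcop
    exact h1.pow_of_coprime (t / g) hcop
  have hmN : m ∣ N := ⟨g, by rw [← hgm]; ring⟩
  by_cases h3m : 3 ∣ m
  · obtain ⟨m', hm'⟩ := h3m
    rw [hm'] at hmN
    have hm'n : m' ∣ n := (mul_dvd_mul_iff_left (by norm_num : (3:ℕ) ≠ 0)).mp hmN
    have hm'0 : 0 < m' := by omega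
    have hm'2 : 2 ≤ m' := by
      by_contra h
      have hm'1 : m' = 1 := by omega
      rw [hm'1, mul_one] at hm'
      rw [hm'] at hgm
      have hgn : g = n := by omega
      have hnt : n ∣ t := hgn ▸ Nat.gcd_dvd_left t N
      obtain ⟨k, rfl⟩ := hnt
      have hk : k < 3 := by
        by_contra hk
        push_neg at hk
        have : n * 3 ≤ n * k := Nat.mul_le_mul_left n hk
        omega
      interval_cases k
      · have hgN' : g = N := by rw [hgdef]; simp
        omega
      · exact ht1 (by ring)
      · exact ht2 (by ring)
    rw [hm'] at hprim
    rw [eval_root_three_dvd hm'0 hm'n hprim]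
    have habs : ‖(3 : ℂ) ^ (n / m')‖ = (3 : ℝ) ^ (n / m') := by
      rw [norm_pow]
      norm_num
    rw [habs]
    apply pow_le_pow_right₀ (by norm_num : (1:ℝ) ≤ 3)
    exact Nat.div_le_div_left hm'2 (by norm_num)
  · have hmn : m ∣ n := by
      have hcop : Nat.Coprime m 3 := by
        rw [Nat.coprime_comm]
        exact (Nat.prime_three.coprime_iff_not_dvd).mpr h3m
      exact hcop.dvd_of_dvd_mul_left hmN
    rw [eval_root_not_three (by omega) hmn h3m hprim]
    rw [norm_zero]
    positivity

end LiAux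

open LiAux in
theorem li_p_three_s_one (n : ℕ) (hn : 1 ≤ n) (b : ℤ) :
    |(borweinS3 n (3 * n) b : ℝ) - (borweinV3 b : ℝ) * 3 ^ n / (3 * n)| ≤ 2 ^ n := by
  have hN0 : 3 * n ≠ 0 := by omega
  obtain ⟨ζ, hζ⟩ : ∃ ζ : ℂ, IsPrimitiveRoot ζ (3 * n) :=
    ⟨_, Complex.isPrimitiveRoot_exp (3 * n) hN0⟩
  set c : ℕ := ((-b) % ((3 * n : ℕ) : ℤ)).toNat with hcdef
  have hcz : (c : ℤ) = (-b) % ((3 * n : ℕ) : ℤ) := by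
    rw [hcdef]
    exact Int.toNat_of_nonneg (Int.emod_nonneg _ (by exact_mod_cast hN0))
  have hc : (c : ℤ) % ((3 * n : ℕ) : ℤ) = (-b) % ((3 * n : ℕ) : ℤ) := by
    rw [hcz, Int.emod_emod_of_dvd _ dvd_rfl]
  have h3cb : (3 ∣ c) ↔ ((3 : ℤ) ∣ b) := by
    have hd : ((3 * n : ℕ) : ℤ) ∣ ((-b) - (c : ℤ)) := by
      rw [hcz]
      exact ⟨(-b) / ((3 * n : ℕ) : ℤ), by
        have := Int.mul_ediv_add_emod (-b) ((3 * n : ℕ) : ℤ)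
        linarith⟩
    have h3d : (3 : ℤ) ∣ ((-b) - (c : ℤ)) := dvd_trans (by push_cast; exact ⟨n, by ring⟩) hd
    omega
  -- the Fourier sum
  set f : ℕ → ℂ := fun t => ζ ^ (c * t) * (Polynomial.aeval (ζ ^ t)) (borweinPoly3 n) with hfdef
  have hT : ∑ t ∈ Finset.range (3 * n), f t
      = ((3 * n : ℕ) : ℂ) * (borweinS3 n (3 * n) b : ℂ) := fourier hN0 hζ b c hc n
  -- main-term roots
  have hχ : IsPrimitiveRoot (ζ ^ n) 3 := hζ.pow (by omega) (by ring)
  have hχ2 : IsPrimitiveRoot (ζ ^ (2 * n)) 3 := by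
    rw [show 2 * n = n * 2 from by ring, pow_mul]
    exact hχ.pow_of_coprime 2 (by norm_num)
  have hev1 : (Polynomial.aeval (ζ ^ n)) (borweinPoly3 n) = 3 ^ n := by
    have := eval_root_three_dvd one_pos (one_dvd n)
      (show IsPrimitiveRoot (ζ ^ n) (3 * 1) by rw [mul_one]; exact hχ)
    simpa using this
  have hev2 : (Polynomial.aeval (ζ ^ (2 * n))) (borweinPoly3 n) = 3 ^ n := by
    have := eval_root_three_dvd one_pos (one_dvd n)
      (show IsPrimitiveRoot (ζ ^ (2 * n)) (3 * 1) by rw [mul_one]; exact hχ2)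
    simpa using this
  -- split off the two main terms
  have hmem1 : n ∈ Finset.range (3 * n) := Finset.mem_range.mpr (by omega)
  have hmem2 : 2 * n ∈ (Finset.range (3 * n)).erase n :=
    Finset.mem_erase.mpr ⟨by omega, Finset.mem_range.mpr (by omega)⟩
  set A : Finset ℕ := ((Finset.range (3 * n)).erase n).erase (2 * n) with hAdef
  have hsplit : ∑ t ∈ Finset.range (3 * n), f t = f n + (f (2 * n) + ∑ t ∈ A, f t) := by
    rw [← Finset.add_sum_erase _ f hmem1, ← Finset.add_sum_erase _ f hmem2]
  -- main terms
  have hfn : f n = (ζ ^ n) ^ c * 3 ^ n := by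
    rw [hfdef]
    simp only
    rw [hev1, mul_comm c n, pow_mul]
  have hf2n : f (2 * n) = (ζ ^ n) ^ (2 * c) * 3 ^ n := by
    rw [hfdef]
    simp only
    rw [hev2, show c * (2 * n) = n * (2 * c) from by ring, pow_mul]
  have hv : (ζ ^ n) ^ c + (ζ ^ n) ^ (2 * c) = (borweinV3 b : ℂ) := by
    by_cases hb3 : (3 : ℤ) ∣ b
    · have h3c : 3 ∣ c := h3cb.mpr hb3
      rw [(hχ.pow_eq_one_iff_dvd c).mpr h3c,
        (hχ.pow_eq_one_iff_dvd (2 * c)).mpr (Dvd.dvd.mul_left h3c 2)]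
      simp [borweinV3, hb3]
      norm_num
    · have h3c : ¬ 3 ∣ c := fun h => hb3 (h3cb.mp h)
      have hne : (ζ ^ n) ^ c ≠ 1 := fun h => h3c ((hχ.pow_eq_one_iff_dvd c).mp h)
      have hpow3 : ((ζ ^ n) ^ c) ^ 3 = 1 := by
        rw [← pow_mul, mul_comm, pow_mul, hχ.pow_eq_one, one_pow]
      have hgeom := geom_sum_root (by norm_num : (3 : ℕ) ≠ 0) hpow3
      rw [if_neg hne] at hgeom
      have hexp : ∑ t ∈ Finset.range 3, ((ζ ^ n) ^ c) ^ t
          = 1 + (ζ ^ n) ^ c + (ζ ^ n) ^ (2 * c) := by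
        rw [Finset.sum_range_succ, Finset.sum_range_succ, Finset.sum_range_one]
        rw [pow_zero, pow_one, show (2 : ℕ) * c = c * 2 from by ring, pow_mul]
      rw [hexp] at hgeom
      simp [borweinV3, hb3]
      linear_combination hgeom
  -- the error term bound
  have hfabs : ∀ t ∈ A, ‖f t‖ ≤ (3 : ℝ) ^ (n / 2) := by
    intro t hA
    obtain ⟨ht2, ht1, htr⟩ : t ≠ 2 * n ∧ t ≠ n ∧ t ∈ Finset.range (3 * n) := by
      simpa [hAdef, Finset.mem_erase] using hA
    rw [hfdef]
    simp only [norm_mul]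
    have h1 : ‖ζ ^ (c * t)‖ = 1 :=
      abs_of_root hN0 (by rw [← pow_mul, show c * t * (3 * n) = 3 * n * (c * t) from by ring,
        pow_mul, hζ.pow_eq_one, one_pow])
    rw [h1, one_mul]
    exact abs_aeval_le hn hζ (Finset.mem_range.mp htr) ht1 ht2
  have hE : ‖∑ t ∈ A, f t‖ ≤ ((3 * n : ℕ) : ℝ) * (3 : ℝ) ^ (n / 2) := by
    calc ‖∑ t ∈ A, f t‖ ≤ ∑ t ∈ A, ‖f t‖ :=
          norm_sum_le _ _
      _ ≤ ∑ t ∈ A, (3 : ℝ) ^ (n / 2) := Finset.sum_le_sum hfabs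
      _ = (A.card : ℝ) * (3 : ℝ) ^ (n / 2) := by rw [Finset.sum_const, nsmul_eq_mul]
      _ ≤ ((3 * n : ℕ) : ℝ) * (3 : ℝ) ^ (n / 2) := by
          apply mul_le_mul_of_nonneg_right _ (by positivity)
          have : A.card ≤ (Finset.range (3 * n)).card :=
            Finset.card_le_card (subset_trans (Finset.erase_subset _ _) (Finset.erase_subset _ _))
          rw [Finset.card_range] at this
          exact_mod_cast this
  -- put it together
  have hNc : ((3 * n : ℕ) : ℂ) ≠ 0 := by exact_mod_cast hN0
  have hkey : ((3 * n : ℕ) : ℂ) * (borweinS3 n (3 * n) b : ℂ)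
      = (borweinV3 b : ℂ) * 3 ^ n + ∑ t ∈ A, f t := by
    rw [← hT, hsplit, hfn, hf2n, ← hv]
    ring
  have hfrac : (borweinS3 n (3 * n) b : ℂ) - (borweinV3 b : ℂ) * 3 ^ n / ((3 * n : ℕ) : ℂ)
      = (∑ t ∈ A, f t) / ((3 * n : ℕ) : ℂ) := by
    rw [eq_div_iff hNc, sub_mul, div_mul_cancel₀ _ hNc]
    linear_combination hkey
  have hcast : (((borweinS3 n (3 * n) b : ℝ) - (borweinV3 b : ℝ) * 3 ^ n / (3 * n) : ℝ) : ℂ)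
      = (borweinS3 n (3 * n) b : ℂ) - (borweinV3 b : ℂ) * 3 ^ n / ((3 * n : ℕ) : ℂ) := by
    push_cast
    ring
  rw [← Real.norm_eq_abs, ← Complex.norm_real, hcast, hfrac, norm_div, Complex.norm_natCast]
  have hNpos : (0 : ℝ) < ((3 * n : ℕ) : ℝ) := by positivity
  rw [div_le_iff₀ hNpos]
  calc ‖∑ t ∈ A, f t‖ ≤ ((3 * n : ℕ) : ℝ) * (3 : ℝ) ^ (n / 2) := hE
    _ ≤ ((3 * n : ℕ) : ℝ) * (2 : ℝ) ^ n := by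
        apply mul_le_mul_of_nonneg_left _ (le_of_lt hNpos)
        have hnat : (3 : ℕ) ^ (n / 2) ≤ 2 ^ n := by
          have h1 : ((3 : ℕ) ^ (n / 2)) ^ 2 ≤ (2 ^ n) ^ 2 := by
            calc ((3 : ℕ) ^ (n / 2)) ^ 2 = 3 ^ (n / 2 * 2) := by rw [pow_mul]
              _ ≤ 3 ^ n := Nat.pow_le_pow_right (by norm_num) (by omega)
              _ ≤ 4 ^ n := Nat.pow_le_pow_left (by norm_num) n
              _ = (2 ^ n) ^ 2 := by
                  rw [show (4 : ℕ) = 2 ^ 2 from rfl, ← pow_mul, ← pow_mul, Nat.mul_comm]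
          exact Nat.pow_le_pow_iff_left (by norm_num) |>.mp h1
        calc (3 : ℝ) ^ (n / 2) = ((3 : ℕ) ^ (n / 2) : ℕ) := by push_cast; ring
          _ ≤ ((2 : ℕ) ^ n : ℕ) := by exact_mod_cast hnat
          _ = (2 : ℝ) ^ n := by push_cast; ring
    _ = (2 : ℝ) ^ n * ((3 * n : ℕ) : ℝ) := by ring
end

section
/- (Goswami–Pantangi) Let p be an odd prime and let s, n, b be integers with s, n ≥ 1. Then |S_{pn,b} − v(b)·p^{sn}/(pn)| ≤ p^{sn/2}. -/
open Polynomial Finset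

namespace GoswamiPantangiAux

lemma aux_prod_Icc {M : ℕ} (hM : 1 ≤ M) {ξ : ℂ} (hξ : IsPrimitiveRoot ξ M) :
    ∏ r ∈ Icc 1 (M - 1), (1 - ξ ^ r) = (M : ℂ) := by
  obtain ⟨M', rfl⟩ : ∃ M', M = M' + 1 := ⟨M - 1, by omega⟩
  have h := hξ.prod_one_sub_pow_eq_order
  push_cast
  rw [← h, ← Finset.Ico_add_one_right_eq_Icc, Finset.prod_Ico_eq_prod_range]
  simp [add_comm]

lemma aux_inner {p m' : ℕ} (hp : p.Prime) (hm' : 1 ≤ m') {ζ : ℂ}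
    (hζ : IsPrimitiveRoot ζ (p * m')) :
    ∏ r ∈ (Icc 1 (p * m')).filter (fun r => ¬ p ∣ r), (1 - ζ ^ r) = (p : ℂ) := by
  set m := p * m' with hm
  have hp1 : 1 ≤ p := hp.one_le
  have hm1 : 1 ≤ m := Nat.one_le_iff_ne_zero.2 (by positivity)
  have hset : (Icc 1 m).filter (fun r => ¬ p ∣ r) = (Icc 1 (m - 1)).filter (fun r => ¬ p ∣ r) := by
    ext r
    simp only [mem_filter, mem_Icc]
    constructor
    · rintro ⟨⟨h1, h2⟩, h3⟩
      refine ⟨⟨h1, ?_⟩, h3⟩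
      rcases eq_or_lt_of_le h2 with rfl | h
      · exact absurd ⟨m', hm⟩ h3
      · omega
    · rintro ⟨⟨h1, h2⟩, h3⟩
      exact ⟨⟨h1, by omega⟩, h3⟩
  have hdvdpart : ∏ r ∈ (Icc 1 (m - 1)).filter (fun r => p ∣ r), (1 - ζ ^ r) = (m' : ℂ) := by
    have hζp : IsPrimitiveRoot (ζ ^ p) m' := hζ.pow (by positivity) hm
    rw [← aux_prod_Icc hm' hζp]
    refine (Finset.prod_nbij' (fun t => p * t) (fun r => r / p) ?_ ?_ ?_ ?_ ?_).symm
    · intro t ht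
      simp only [mem_Icc] at ht
      simp only [mem_filter, mem_Icc]
      refine ⟨⟨by nlinarith [ht.1], ?_⟩, ⟨t, rfl⟩⟩
      have : p * t ≤ p * (m' - 1) := Nat.mul_le_mul_left p ht.2
      have : p * (m' - 1) + p = p * m' := by
        rw [← Nat.mul_succ]; congr 1; omega
      omega
    · intro r hr
      simp only [mem_filter, mem_Icc] at hr
      obtain ⟨⟨h1, h2⟩, t, rfl⟩ := hr
      simp only [mem_Icc]
      rw [Nat.mul_div_cancel_left t hp.pos]
      constructor
      · by_contra h; interval_cases t <;> omega
      · by_contra h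
        push_neg at h
        have : m' ≤ t := by omega
        have : p * m' ≤ p * t := Nat.mul_le_mul_left p this
        omega
    · intro t ht; exact Nat.mul_div_cancel_left t hp.pos
    · intro r hr
      simp only [mem_filter, mem_Icc] at hr
      obtain ⟨-, t, rfl⟩ := hr
      show p * (p * t / p) = p * t
      rw [Nat.mul_div_cancel_left t hp.pos]
    · intro t ht; rw [pow_mul]
  have htot : ∏ r ∈ Icc 1 (m - 1), (1 - ζ ^ r) = (m : ℂ) := aux_prod_Icc hm1 hζ
  have hsplit := Finset.prod_filter_mul_prod_filter_not (Icc 1 (m - 1))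
    (fun r => p ∣ r) (fun r => 1 - ζ ^ r)
  rw [hset]
  have hm'0 : (m' : ℂ) ≠ 0 := Nat.cast_ne_zero.2 (by omega)
  have key : (m' : ℂ) * ∏ r ∈ (Icc 1 (m - 1)).filter (fun r => ¬ p ∣ r), (1 - ζ ^ r) = (m : ℂ) := by
    rw [← hdvdpart, hsplit, htot]
  have hmcast : (m : ℂ) = (p : ℂ) * m' := by rw [hm]; push_cast; ring
  rw [hmcast] at key
  apply mul_left_cancel₀ hm'0
  rw [key]; ring

lemma key_prod {p n m' : ℕ} (hp : p.Prime) (hn : 1 ≤ n) (hm' : m' ∣ n) {ζ : ℂ}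
    (hζ : IsPrimitiveRoot ζ (p * m')) :
    ∏ e ∈ (Icc 1 (p * n)).filter (fun e => ¬ p ∣ e), (1 - ζ ^ e) = (p : ℂ) ^ (n / m') := by
  have hm'pos : 1 ≤ m' := Nat.one_le_iff_ne_zero.2 (by rintro rfl; simp at hm'; omega)
  set m := p * m' with hm
  set c := n / m' with hc
  have hcm : c * m = p * n := by
    rw [hm, hc]; rw [mul_comm p m', ← mul_assoc, Nat.div_mul_cancel hm', mul_comm]
  have hcpos : 1 ≤ c := Nat.div_pos (Nat.le_of_dvd (by omega) hm') (by omega)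
  have hzm : ζ ^ m = 1 := hζ.pow_eq_one
  have step : ∏ e ∈ (Icc 1 (p * n)).filter (fun e => ¬ p ∣ e), (1 - ζ ^ e)
      = ∏ x ∈ (range c) ×ˢ ((Icc 1 m).filter (fun r => ¬ p ∣ r)), (1 - ζ ^ x.2) := by
    refine (Finset.prod_nbij' (fun x => x.1 * m + x.2)
      (fun e => ((e - 1) / m, e - ((e - 1) / m) * m)) ?_ ?_ ?_ ?_ ?_).symm
    · rintro ⟨a, r⟩ hx
      simp only [mem_product, mem_range, mem_filter, mem_Icc] at hx
      obtain ⟨ha, ⟨hr1, hr2⟩, hr3⟩ := hx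
      simp only [mem_filter, mem_Icc]
      have h1 : a * m + m ≤ c * m := by
        have : a + 1 ≤ c := ha
        calc a * m + m = (a + 1) * m := by ring
        _ ≤ c * m := Nat.mul_le_mul_right m this
      refine ⟨⟨by omega, by omega⟩, fun hdvd => hr3 ?_⟩
      have hpam : p ∣ a * m := ⟨a * m', by rw [hm]; ring⟩
      exact (Nat.dvd_add_right hpam).mp hdvd
    · intro e he
      simp only [mem_filter, mem_Icc] at he
      obtain ⟨⟨he1, he2⟩, he3⟩ := he
      have hmpos : 0 < m := Nat.mul_pos hp.pos (by omega)
      obtain ⟨q, rr, he', hrlt, hq⟩ : ∃ q rr, e = q * m + rr + 1 ∧ rr < m ∧ q = (e - 1) / m := by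
        refine ⟨(e - 1) / m, (e - 1) % m, ?_, Nat.mod_lt _ hmpos, rfl⟩
        have h := Nat.div_add_mod (e - 1) m
        have h2 : (e - 1) / m * m = m * ((e - 1) / m) := mul_comm _ _
        omega
      simp only [mem_product, mem_range, mem_filter, mem_Icc, ← hq]
      have hqc : q < c := by
        by_contra hcon
        push_neg at hcon
        have : c * m ≤ q * m := Nat.mul_le_mul_right m hcon
        omega
      refine ⟨hqc, ⟨by omega, by omega⟩, fun hdvd => he3 ?_⟩
      have hpqm : p ∣ q * m := ⟨q * m', by rw [hm]; ring⟩
      have h1 : e - q * m = rr + 1 := by omega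
      rw [h1] at hdvd
      have h2 : e = q * m + (rr + 1) := by omega
      rw [h2]
      exact Nat.dvd_add hpqm hdvd
    · rintro ⟨a, r⟩ hx
      simp only [mem_product, mem_range, mem_filter, mem_Icc] at hx
      obtain ⟨ha, ⟨hr1, hr2⟩, hr3⟩ := hx
      have hkey : (a * m + r - 1) / m = a := by
        have h0 : a * m + r - 1 = m * a + (r - 1) := by rw [mul_comm]; omega
        rw [h0, Nat.mul_add_div (Nat.mul_pos hp.pos (by omega)), Nat.div_eq_of_lt (by omega)]
        omega
      simp only [hkey]
      have : a * m + r - a * m = r := by omega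
      rw [this]
    · intro e he
      simp only [mem_filter, mem_Icc] at he
      obtain ⟨⟨he1, he2⟩, he3⟩ := he
      have h1 : (e - 1) / m * m ≤ e - 1 := Nat.div_mul_le_self _ _
      show (e - 1) / m * m + (e - (e - 1) / m * m) = e
      omega
    · rintro ⟨a, r⟩ hx
      show 1 - ζ ^ r = 1 - ζ ^ (a * m + r)
      rw [pow_add, mul_comm a m, pow_mul, hzm, one_pow, one_mul]
  rw [step, Finset.prod_product]
  show (∏ _x ∈ range c, ∏ y ∈ (Icc 1 m).filter (fun r => ¬ p ∣ r), (1 - ζ ^ y)) = _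
  rw [aux_inner hp hm'pos hζ, Finset.prod_const, card_range]

lemma reindex (p n : ℕ) (hp : 2 ≤ p) (f : ℕ → ℂ) :
    ∏ j ∈ Icc 1 n, ∏ k ∈ Icc 1 (p - 1), f (p * j - k) =
    ∏ e ∈ (Icc 1 (p * n)).filter (fun e => ¬ p ∣ e), f e := by
  rw [← Finset.prod_product']
  refine Finset.prod_nbij' (fun x => p * x.1 - x.2)
    (fun e => ((e - 1) / p + 1, p * ((e - 1) / p + 1) - e)) ?_ ?_ ?_ ?_ ?_
  · rintro ⟨j, k⟩ hx
    simp only [mem_product, mem_Icc] at hx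
    obtain ⟨⟨hj1, hj2⟩, hk1, hk2⟩ := hx
    have h1 : p * 1 ≤ p * j := Nat.mul_le_mul_left p hj1
    have h2 : p * j ≤ p * n := Nat.mul_le_mul_left p hj2
    simp only [mem_filter, mem_Icc]
    refine ⟨⟨by omega, by omega⟩, fun hdvd => ?_⟩
    have hsub : p * j - (p * j - k) = k := by omega
    have hk : p ∣ k := hsub ▸ Nat.dvd_sub (Dvd.intro j rfl) hdvd
    exact absurd (Nat.le_of_dvd (by omega) hk) (by omega)
  · intro e he
    simp only [mem_filter, mem_Icc] at he
    obtain ⟨⟨he1, he2⟩, he3⟩ := he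
    obtain ⟨q, r, he', hrlt, hq⟩ : ∃ q r, e = p * q + r + 1 ∧ r < p ∧ q = (e - 1) / p := by
      refine ⟨(e - 1) / p, (e - 1) % p, ?_, Nat.mod_lt _ (by omega), rfl⟩
      have h := Nat.div_add_mod (e - 1) p
      omega
    simp only [mem_product, mem_Icc, ← hq]
    have hq2 : p * (q + 1) = p * q + p := by ring
    have hr : r + 1 ≠ p := by
      intro h
      exact he3 ⟨q + 1, by omega⟩
    have hq3 : q + 1 ≤ n := by
      by_contra hcon
      push_neg at hcon
      have : p * n ≤ p * q := Nat.mul_le_mul_left p (by omega)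
      omega
    refine ⟨⟨by omega, hq3⟩, by omega, by omega⟩
  · rintro ⟨j, k⟩ hx
    simp only [mem_product, mem_Icc] at hx
    obtain ⟨⟨hj1, hj2⟩, hk1, hk2⟩ := hx
    have h1 : p * 1 ≤ p * j := Nat.mul_le_mul_left p hj1
    have hkey : (p * j - k - 1) / p = j - 1 := by
      have h0 : p * j - k - 1 = p * (j - 1) + (p - k - 1) := by
        have : p * (j - 1) + p = p * j := by
          rw [← Nat.mul_succ]; congr 1; omega
        omega
      rw [h0, Nat.mul_add_div (by omega), Nat.div_eq_of_lt (by omega)]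
      omega
    have hpj : p * (j - 1) + p = p * j := by
      rw [← Nat.mul_succ]; congr 1; omega
    have hj : (p * j - k - 1) / p + 1 = j := by omega
    show ((p * j - k - 1) / p + 1, p * ((p * j - k - 1) / p + 1) - (p * j - k)) = (j, k)
    rw [hj]
    have hk : p * j - (p * j - k) = k := by omega
    rw [hk]
  · intro e he
    simp only [mem_filter, mem_Icc] at he
    obtain ⟨⟨he1, he2⟩, he3⟩ := he
    obtain ⟨q, r, he', hrlt, hq⟩ : ∃ q r, e = p * q + r + 1 ∧ r < p ∧ q = (e - 1) / p := by
      refine ⟨(e - 1) / p, (e - 1) % p, ?_, Nat.mod_lt _ (by omega), rfl⟩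
      have h := Nat.div_add_mod (e - 1) p
      omega
    show p * ((e - 1) / p + 1) - (p * ((e - 1) / p + 1) - e) = e
    rw [← hq]
    have hq2 : p * (q + 1) = p * q + p := by ring
    omega
  · rintro ⟨j, k⟩ hx
    rfl

lemma geom_aux {N : ℕ} (hN : 0 < N) {z : ℂ} (hzN : z ^ N = 1) :
    ∑ t ∈ range N, z ^ t = if z = 1 then (N : ℂ) else 0 := by
  split_ifs with h
  · simp [h]
  · rw [geom_sum_eq h, hzN]
    simp

lemma filter_sum {N : ℕ} (hN : 0 < N) {ω : ℂ} (hω : IsPrimitiveRoot ω N)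
    (f : Polynomial ℤ) (b : ℤ) :
    ∑ t ∈ range N, (ω ^ (-b)) ^ t * (Polynomial.aeval (ω ^ t) f) =
    (N : ℂ) * ((∑ i ∈ f.support, if (i : ℤ) % N = b % N then f.coeff i else 0 : ℤ) : ℂ) := by
  have hω0 : ω ≠ 0 := hω.ne_zero hN.ne'
  have hzw : ∀ (t i : ℕ), (ω ^ (-b)) ^ t * (ω ^ t) ^ i = (ω ^ ((i : ℤ) - b)) ^ t := by
    intro t i
    rw [← zpow_natCast (ω ^ (-b)) t, ← zpow_mul, ← pow_mul,
      ← zpow_natCast ω (t * i), ← zpow_natCast (ω ^ ((i : ℤ) - b)) t, ← zpow_mul,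
      ← zpow_add₀ hω0]
    congr 1
    push_cast
    ring
  have step1 : ∀ t, (ω ^ (-b)) ^ t * (Polynomial.aeval (ω ^ t) f) =
      ∑ i ∈ f.support, (f.coeff i : ℂ) * (ω ^ ((i : ℤ) - b)) ^ t := by
    intro t
    rw [Polynomial.aeval_def, Polynomial.eval₂_eq_sum, Polynomial.sum_def, Finset.mul_sum]
    refine Finset.sum_congr rfl fun i _ => ?_
    rw [mul_left_comm, hzw t i]
    simp [mul_comm]
  simp only [step1]
  rw [Finset.sum_comm]
  have step2 : ∀ i ∈ f.support, ∑ t ∈ range N, (f.coeff i : ℂ) * (ω ^ ((i : ℤ) - b)) ^ t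
      = (f.coeff i : ℂ) * (if ((i : ℤ)) % N = b % N then (N : ℂ) else 0) := by
    intro i _
    rw [← Finset.mul_sum]
    congr 1
    have hzN : (ω ^ ((i : ℤ) - b)) ^ N = 1 := by
      rw [← zpow_natCast (ω ^ ((i : ℤ) - b)) N, ← zpow_mul, mul_comm, zpow_mul,
        zpow_natCast, hω.pow_eq_one, one_zpow]
    rw [geom_aux hN hzN]
    congr 1
    rw [hω.zpow_eq_one_iff_dvd]
    have hiff : ((i : ℤ) % N = b % N) ↔ ((N : ℤ) ∣ (i : ℤ) - b) := by
      rw [Int.emod_eq_emod_iff_emod_sub_eq_zero]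
      exact ⟨Int.dvd_of_emod_eq_zero, Int.emod_eq_zero_of_dvd⟩
    exact propext hiff.symm
  rw [Finset.sum_congr rfl step2]
  push_cast
  rw [Finset.mul_sum]
  refine Finset.sum_congr rfl fun i _ => ?_
  split_ifs with h <;> ring

end GoswamiPantangiAux

open GoswamiPantangiAux in
theorem goswami_pantangi (p s n : ℕ) (hp : p.Prime) (hodd : Odd p)
    (hs : 1 ≤ s) (hn : 1 ≤ n) (b : ℤ) :
    |(borweinS p s n (p * n) b : ℝ) -
        (borweinV p b : ℝ) * (p : ℝ) ^ (s * n) / (p * n)| ≤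
      (p : ℝ) ^ (((s * n : ℕ) : ℝ) / 2) := by
  classical
  have hp2 : 2 ≤ p := hp.two_le
  set N := p * n with hNdef
  have hN0 : 0 < N := Nat.mul_pos hp.pos hn
  obtain ⟨ω, hω⟩ : ∃ ω : ℂ, IsPrimitiveRoot ω N :=
    ⟨_, Complex.isPrimitiveRoot_exp N hN0.ne'⟩
  have hω0 : ω ≠ 0 := hω.ne_zero hN0.ne'
  have hωabs : ‖ω‖ = 1 := Complex.norm_eq_one_of_pow_eq_one hω.pow_eq_one hN0.ne'
  set f := borweinPoly p s n with hfdef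
  set B : ℝ := (p : ℝ) ^ (((s * n : ℕ) : ℝ) / 2) with hBdef
  have hB0 : 0 ≤ B := Real.rpow_nonneg (by positivity) _
  set F : ℕ → ℂ := fun t => Polynomial.aeval (ω ^ t) f with hFdef
  set G : ℕ → ℂ := fun t => (ω ^ (-b)) ^ t * F t with hGdef
  -- evaluation of F as a product over the filtered set
  have hFt : ∀ t : ℕ, F t =
      (∏ e ∈ (Icc 1 N).filter (fun e => ¬ p ∣ e), (1 - (ω ^ t) ^ e)) ^ s := by
    intro t
    rw [hFdef]
    simp only [hfdef, borweinPoly, map_prod, map_pow, map_sub, map_one, Polynomial.aeval_X_pow]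
    rw [← reindex p n hp2 (fun e => 1 - (ω ^ t) ^ e)]
    simp [Finset.prod_pow]
  -- the main set
  set T₀ : Finset ℕ := (Icc 1 (p - 1)).image (· * n) with hT₀def
  have hT₀sub : T₀ ⊆ range N := by
    intro t ht
    simp only [hT₀def, mem_image, mem_Icc] at ht
    obtain ⟨u, ⟨hu1, hu2⟩, rfl⟩ := ht
    simp only [mem_range, hNdef]
    have h1 : u * n ≤ (p - 1) * n := Nat.mul_le_mul_right n hu2
    have hp1 : p - 1 + 1 = p := by omega
    have h2 : (p - 1) * n + n = p * n := by
      calc (p - 1) * n + n = (p - 1 + 1) * n := by ring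
      _ = p * n := by rw [hp1]
    omega
  -- bound for non-main terms
  have hbound : ∀ t ∈ range N \ T₀, ‖G t‖ ≤ B := by
    intro t ht
    simp only [mem_sdiff, mem_range] at ht
    obtain ⟨htN, htT₀⟩ := ht
    have hGnorm : ‖G t‖ = ‖F t‖ := by
      rw [hGdef]
      simp only [norm_mul, norm_pow, norm_zpow, hωabs, one_zpow, one_pow, one_mul]
    rw [hGnorm]
    by_cases ht0 : t = 0
    · subst ht0
      have hprod : (∏ e ∈ (Icc 1 N).filter (fun e => ¬ p ∣ e), (1 - (ω ^ 0) ^ e)) = 0 := by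
        apply Finset.prod_eq_zero (i := 1)
        · simp only [mem_filter, mem_Icc]
          exact ⟨⟨le_refl 1, hN0⟩, fun h => by
            have := Nat.le_of_dvd one_pos h; omega⟩
        · simp
      have : F 0 = 0 := by
        rw [hFt 0, hprod, zero_pow (by omega : s ≠ 0)]
      rw [this]
      simpa using hB0
    · -- t ≠ 0
      have hgcdpos : 0 < N.gcd t := Nat.gcd_pos_of_pos_left _ hN0
      obtain ⟨m, hmdef⟩ : ∃ m, N / N.gcd t = m := ⟨_, rfl⟩
      have hord : orderOf (ω ^ t) = m := by
        rw [orderOf_pow' ω ht0, ← hω.eq_orderOf, hmdef]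
      have hprim : IsPrimitiveRoot (ω ^ t) m := hord ▸ IsPrimitiveRoot.orderOf (ω ^ t)
      have hmdvd : m ∣ N := hmdef ▸ Nat.div_dvd_of_dvd (Nat.gcd_dvd_left N t)
      have hm1 : 0 < m := hmdef ▸ Nat.div_pos (Nat.le_of_dvd hN0 (Nat.gcd_dvd_left N t)) hgcdpos
      by_cases hpm : p ∣ m
      · obtain ⟨m', rfl⟩ := hpm
        have hm'n : m' ∣ n := by
          have h : p * m' ∣ p * n := hNdef ▸ hmdvd
          exact (mul_dvd_mul_iff_left (show (p:ℕ) ≠ 0 by omega)).mp h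
        have hm'1 : 1 ≤ m' := by
          rcases Nat.eq_zero_or_pos m' with rfl | h
          · omega
          · exact h
        have hm'2 : 2 ≤ m' := by
          by_contra hcon
          have hm'eq : m' = 1 := by omega
          subst hm'eq
          -- then gcd N t = n, so n ∣ t, t = u * n with 1 ≤ u ≤ p - 1
          have hg : N.gcd t * (p * 1) = N.gcd t * (N / N.gcd t) := by rw [hmdef]
          have hg2 : N.gcd t * (N / N.gcd t) = N := Nat.mul_div_cancel' (Nat.gcd_dvd_left N t)
          have hg3 : N.gcd t * (p * 1) = N.gcd t * p := by ring
          have hg4 : N.gcd t * p = p * N.gcd t := mul_comm _ _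
          have hgn : N.gcd t = n := by
            have hpn : p * N.gcd t = p * n := by rw [← hg4, ← hg3, hg, hg2, hNdef]
            exact Nat.eq_of_mul_eq_mul_left hp.pos hpn
          have hnt : n ∣ t := hgn ▸ Nat.gcd_dvd_right N t
          obtain ⟨u, rfl⟩ := hnt
          apply htT₀
          simp only [hT₀def, mem_image, mem_Icc]
          refine ⟨u, ⟨?_, ?_⟩, mul_comm u n⟩
          · rcases Nat.eq_zero_or_pos u with rfl | h
            · simp at ht0
            · exact h
          · by_contra hcon2
            push_neg at hcon2
            have h5 : p * n ≤ u * n := Nat.mul_le_mul_right n (by omega)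
            have h6 : u * n = n * u := mul_comm _ _
            rw [hNdef] at htN
            omega
        -- now F t = (p ^ (n / m'))^s
        have hFeq : F t = ((p : ℂ) ^ (n / m')) ^ s := by
          rw [hFt t, key_prod hp hn hm'n hprim]
        rw [hFeq]
        have : ‖((p : ℂ) ^ (n / m')) ^ s‖ = (p : ℝ) ^ (n / m' * s) := by
          rw [← pow_mul, norm_pow]
          simp [Complex.norm_natCast]
        rw [this]
        -- compare with rpow
        have hple : (1 : ℝ) ≤ (p : ℝ) := by exact_mod_cast hp.one_le
        rw [hBdef, ← Real.rpow_natCast ((p : ℝ)) (n / m' * s)]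
        apply Real.rpow_le_rpow_of_exponent_le hple
        have hd : n / m' * m' = n := Nat.div_mul_cancel hm'n
        have h2 : 2 * (n / m') ≤ n := by
          calc 2 * (n / m') ≤ m' * (n / m') := Nat.mul_le_mul_right _ hm'2
          _ = n := by rw [mul_comm]; exact hd
        have hnat : 2 * (n / m' * s) ≤ s * n := by
          calc 2 * (n / m' * s) = (2 * (n / m')) * s := by ring
          _ ≤ n * s := Nat.mul_le_mul_right s h2
          _ = s * n := mul_comm n s
        rw [le_div_iff₀ (by norm_num : (0:ℝ) < 2)]
        have := (Nat.cast_le (α := ℝ)).mpr hnat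
        push_cast at this ⊢
        linarith
      · -- p ∤ m : F t = 0
        have hprod : (∏ e ∈ (Icc 1 N).filter (fun e => ¬ p ∣ e), (1 - (ω ^ t) ^ e)) = 0 := by
          apply Finset.prod_eq_zero (i := m)
          · simp only [mem_filter, mem_Icc]
            exact ⟨⟨hm1, Nat.le_of_dvd hN0 hmdvd⟩, hpm⟩
          · simp [hprim.pow_eq_one]
        have hFeq : F t = 0 := by
          rw [hFt t, hprod, zero_pow (by omega : s ≠ 0)]
        rw [hFeq]
        simpa using hB0
  -- main term
  have hmain : ∑ t ∈ T₀, G t = (borweinV p b : ℂ) * (p : ℂ) ^ (s * n) := by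
    have hη : IsPrimitiveRoot (ω ^ n) p :=
      IsPrimitiveRoot.pow hN0 hω (by rw [hNdef, mul_comm])
    set ξ : ℂ := (ω ^ n) ^ (-b) with hξdef
    have hinj : ∀ x ∈ Icc 1 (p - 1), ∀ y ∈ Icc 1 (p - 1), x * n = y * n → x = y :=
      fun x _ y _ h => Nat.eq_of_mul_eq_mul_right (by omega) h
    rw [hT₀def, Finset.sum_image hinj]
    have hterm : ∀ u ∈ Icc 1 (p - 1), G (u * n) = ξ ^ u * (p : ℂ) ^ (s * n) := by
      intro u hu
      simp only [mem_Icc] at hu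
      have hcop : Nat.Coprime u p := Nat.coprime_comm.mp
        (hp.coprime_iff_not_dvd.mpr (fun hdvd => by
          have := Nat.le_of_dvd (by omega) hdvd; omega))
      have hprim' : IsPrimitiveRoot ((ω ^ n) ^ u) p := hη.pow_of_coprime u hcop
      have hωun : ω ^ (u * n) = (ω ^ n) ^ u := by rw [mul_comm u n, pow_mul]
      have hωun' : IsPrimitiveRoot (ω ^ (u * n)) (p * 1) := by
        rw [hωun, mul_one]; exact hprim'
      have hF : F (u * n) = (p : ℂ) ^ (s * n) := by
        rw [hFt, hNdef, key_prod hp hn (one_dvd n) hωun', Nat.div_one, ← pow_mul, mul_comm n s]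
      have hzp : (ω ^ (-b)) ^ (u * n) = ξ ^ u := by
        rw [hξdef, mul_comm u n, pow_mul]
        congr 1
        rw [← zpow_natCast (ω ^ (-b)) n, ← zpow_mul, ← zpow_natCast ω n, ← zpow_mul]
        congr 1; ring
      show (ω ^ (-b)) ^ (u * n) * F (u * n) = ξ ^ u * (p : ℂ) ^ (s * n)
      rw [hF, hzp]
    rw [Finset.sum_congr rfl hterm, ← Finset.sum_mul]
    congr 1
    have hIco : Icc 1 (p - 1) = Ico 1 p := by
      ext x; simp only [mem_Icc, mem_Ico]; omega
    by_cases hpb : (p : ℤ) ∣ b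
    · have hξ1 : ξ = 1 := by
        rw [hξdef]; exact (hη.zpow_eq_one_iff_dvd (-b)).mpr (dvd_neg.mpr hpb)
      simp only [hξ1, one_pow, Finset.sum_const, Nat.card_Icc, smul_eq_mul, mul_one]
      rw [borweinV, if_pos hpb]
      push_cast [Nat.cast_sub hp.one_le]
      norm_num
      rw [Nat.cast_sub hp.one_le]
      push_cast
      ring
    · have hξ1 : ξ ≠ 1 := by
        intro h
        apply hpb
        rw [hξdef] at h
        exact dvd_neg.mp ((hη.zpow_eq_one_iff_dvd (-b)).mp h)
      have hξp : ξ ^ p = 1 := by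
        rw [hξdef, ← zpow_natCast ((ω ^ n) ^ (-b)) p, ← zpow_mul, mul_comm, zpow_mul,
          zpow_natCast, hη.pow_eq_one, one_zpow]
      have h0 : ∑ u ∈ range p, ξ ^ u = 0 := by
        rw [geom_aux hp.pos hξp, if_neg hξ1]
      have h1 : ∑ u ∈ range p, ξ ^ u = ξ ^ 0 + ∑ u ∈ Ico 1 p, ξ ^ u := by
        rw [Finset.range_eq_Ico, Finset.sum_eq_sum_Ico_succ_bot hp.pos]
      rw [hIco]
      rw [borweinV, if_neg hpb]
      have h2 : ∑ u ∈ Ico 1 p, ξ ^ u = -1 := by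
        rw [h1] at h0
        simp only [pow_zero] at h0
        linear_combination h0
      rw [h2]
      norm_num
  -- filter identity
  have hfilter := filter_sum hN0 hω f b
  have hS : (∑ i ∈ f.support, if (i : ℤ) % N = b % N then f.coeff i else 0 : ℤ)
      = borweinS p s n (p * n) b := by
    rw [borweinS, hNdef]
  have hfilterG : ∑ t ∈ range N, G t = (N : ℂ) * ((borweinS p s n (p * n) b : ℤ) : ℂ) := by
    rw [← hS]
    exact hfilter
  have hsum_split : ∑ t ∈ range N \ T₀, G t + ∑ t ∈ T₀, G t = ∑ t ∈ range N, G t :=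
    Finset.sum_sdiff hT₀sub
  set S : ℤ := borweinS p s n (p * n) b with hSdef
  set V : ℤ := borweinV p b with hVdef
  have hKc : (((N : ℤ) * S - V * (p : ℤ) ^ (s * n) : ℤ) : ℂ) = ∑ t ∈ range N \ T₀, G t := by
    have h3 : ∑ t ∈ range N \ T₀, G t = ∑ t ∈ range N, G t - ∑ t ∈ T₀, G t :=
      eq_sub_of_add_eq hsum_split
    rw [h3, hfilterG, hmain]
    push_cast
    ring
  have hnorm : ‖(((N : ℤ) * S - V * (p : ℤ) ^ (s * n) : ℤ) : ℂ)‖ ≤ (N : ℝ) * B := by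
    rw [hKc]
    calc ‖∑ t ∈ range N \ T₀, G t‖ ≤ ∑ t ∈ range N \ T₀, ‖G t‖ := norm_sum_le _ _
    _ ≤ ∑ _t ∈ range N \ T₀, B := Finset.sum_le_sum hbound
    _ = ((range N \ T₀).card : ℝ) * B := by rw [Finset.sum_const, nsmul_eq_mul]
    _ ≤ (N : ℝ) * B := by
        have hcard : (range N \ T₀).card ≤ N :=
          le_trans (Finset.card_le_card Finset.sdiff_subset) (le_of_eq (card_range N))
        exact mul_le_mul_of_nonneg_right (by exact_mod_cast hcard) hB0
  rw [Complex.norm_intCast] at hnorm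
  have hN0R : (0 : ℝ) < (N : ℝ) := by exact_mod_cast hN0
  have hgoal_eq : (S : ℝ) - (V : ℝ) * (p : ℝ) ^ (s * n) / ((p : ℝ) * (n : ℝ)) =
      (((N : ℤ) * S - V * (p : ℤ) ^ (s * n) : ℤ) : ℝ) / (N : ℝ) := by
    have hNR : (N : ℝ) = (p : ℝ) * (n : ℝ) := by rw [hNdef]; push_cast; ring
    rw [← hNR]
    field_simp
    push_cast
    ring
  rw [hgoal_eq, abs_div, abs_of_pos hN0R, div_le_iff₀ hN0R]
  calc |(((N : ℤ) * S - V * (p : ℤ) ^ (s * n) : ℤ) : ℝ)| ≤ (N : ℝ) * B := hnorm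
  _ = B * (N : ℝ) := mul_comm _ _
end

section
/- Let p be an odd prime, s, n positive integers, and b an integer. Then S_{2pn,b} = (−1)^{sn(p−1)/2} · N_D(b − e), where e = sn(p−1)(2pn+1−p)/8. -/
open Polynomial Finset

/-- The set `D ⊆ ℤ/2pnℤ`, image of `{pj - k : -(n-1) ≤ j ≤ n, 1 ≤ k ≤ (p-1)/2}`. -/
noncomputable def Dset (p n : ℕ) : Finset (ZMod (2 * p * n)) :=
  Finset.image (fun jk : ℤ × ℕ => (((p : ℤ) * jk.1 - jk.2 : ℤ) : ZMod (2 * p * n)))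
    ((Finset.Icc (1 - (n : ℤ)) (n : ℤ)) ×ˢ Finset.Icc 1 ((p - 1) / 2))

/-- `N_D(m_1, …, m_s, b)`: the number of `s`-tuples `(V_1, …, V_s)` of subsets of `D`
with `|V_i| = m_i` for each `i` and `∑_i ∑_{x ∈ V_i} x = b` in `ℤ/2pnℤ`. -/
noncomputable def NDtuples (p s n : ℕ) (m : Fin s → ℕ) (b : ZMod (2 * p * n)) : ℕ :=
  Nat.card {V : Fin s → Finset (ZMod (2 * p * n)) //
    (∀ i, V i ⊆ Dset p n ∧ (V i).card = m i) ∧ (∑ i, ∑ x ∈ V i, x) = b}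

/-- `N_D(b) = ∑_{0 ≤ m_1, …, m_s ≤ n(p-1)} (-1)^{m_1 + ⋯ + m_s} N_D(m_1, …, m_s, b)`. -/
noncomputable def ND (p s n : ℕ) (b : ZMod (2 * p * n)) : ℤ :=
  ∑ m ∈ Fintype.piFinset (fun _ : Fin s => Finset.range (n * (p - 1) + 1)),
    (-1 : ℤ) ^ (∑ i, m i) * NDtuples p s n m b

/-! ### Auxiliary definitions and lemmas -/

/-- The standard basis element `g^a = single a 1` of the group algebra. -/
noncomputable def gelt (M : Type*) [AddCommMonoid M] (a : M) : AddMonoidAlgebra ℤ M :=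
  AddMonoidAlgebra.single a 1

lemma gelt_zero (M : Type*) [AddCommMonoid M] : gelt M 0 = 1 := rfl

lemma gelt_mul {M : Type*} [AddCommMonoid M] (a b : M) :
    gelt M a * gelt M b = gelt M (a + b) := by
  simp [gelt, AddMonoidAlgebra.single_mul_single]

lemma gelt_pow {M : Type*} [AddCommMonoid M] (a : M) (m : ℕ) :
    gelt M a ^ m = gelt M (m • a) := by
  simp [gelt, AddMonoidAlgebra.single_pow]

lemma gelt_sum {M : Type*} [AddCommMonoid M] {ι : Type*} (s : Finset ι) (h : ι → M) :
    ∏ x ∈ s, gelt M (h x) = gelt M (∑ x ∈ s, h x) := by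
  classical
  induction s using Finset.cons_induction with
  | empty => simp [gelt_zero]
  | cons a s ha ih => rw [Finset.prod_cons, Finset.sum_cons, ih, gelt_mul]

lemma one_sub_gelt_neg {M : Type*} [AddCommGroup M] (a : M) :
    1 - gelt M (-a) = -gelt M (-a) * (1 - gelt M a) := by
  rw [neg_mul, mul_sub, mul_one, gelt_mul, neg_add_cancel, gelt_zero]
  ring

lemma single_prod {M : Type*} [AddCommMonoid M] {ι : Type*} (s : Finset ι) (h : ι → M) (r : ι → ℤ) :
    ∏ x ∈ s, (AddMonoidAlgebra.single (h x) (r x) : AddMonoidAlgebra ℤ M)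
      = AddMonoidAlgebra.single (∑ x ∈ s, h x) (∏ x ∈ s, r x) := by
  classical
  induction s using Finset.cons_induction with
  | empty => simp [AddMonoidAlgebra.one_def]
  | cons a s ha ih =>
    rw [Finset.prod_cons, Finset.sum_cons, Finset.prod_cons, ih,
      AddMonoidAlgebra.single_mul_single]

lemma neg_one_eq_single (M : Type*) [AddCommMonoid M] :
    (-1 : AddMonoidAlgebra ℤ M) = AddMonoidAlgebra.single 0 (-1) := by
  rw [AddMonoidAlgebra.one_def]
  exact (AddMonoidAlgebra.single_neg 0 1).symm

lemma neg_one_pow_mul_gelt {M : Type*} [AddCommMonoid M] (m : ℕ) (a : M) :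
    ((-1 : AddMonoidAlgebra ℤ M))^m * gelt M a = AddMonoidAlgebra.single a ((-1:ℤ)^m) := by
  rw [neg_one_eq_single, AddMonoidAlgebra.single_pow, smul_zero, gelt,
    AddMonoidAlgebra.single_mul_single, zero_add, mul_one]

lemma aeval_gelt_coeff {M : Type*} [CommRing M] [DecidableEq M] (f : Polynomial ℤ) (c : M) :
    (Polynomial.aeval (gelt M 1) f).coeff c = ∑ i ∈ f.support, if (i : M) = c then f.coeff i else 0 := by
  rw [Polynomial.aeval_def, Polynomial.eval₂_eq_sum, Polynomial.sum]
  have h1 : ∀ i : ℕ, (algebraMap ℤ (AddMonoidAlgebra ℤ M)) (f.coeff i) * gelt M 1 ^ i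
      = AddMonoidAlgebra.single (i : M) (f.coeff i) := by
    intro i
    rw [gelt_pow]
    show AddMonoidAlgebra.single 0 (f.coeff i) * AddMonoidAlgebra.single _ 1 = _
    rw [AddMonoidAlgebra.single_mul_single]
    simp [nsmul_eq_mul]
  simp only [h1]
  rw [AddMonoidAlgebra.coeff_sum, Finset.sum_apply']
  refine Finset.sum_congr rfl fun i _ => ?_
  rw [AddMonoidAlgebra.coeff_single, Finsupp.single_apply]

lemma prod_one_sub_gelt (M : Type*) [AddCommMonoid M] [DecidableEq M] (D : Finset M) :
    ∏ x ∈ D, (1 - gelt M x)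
      = ∑ t ∈ D.powerset, AddMonoidAlgebra.single (∑ x ∈ t, x) ((-1:ℤ)^t.card) := by
  have h : ∀ x ∈ D, (1 - gelt M x) = (-gelt M x) + 1 := by intro x _; ring
  rw [Finset.prod_congr rfl h, Finset.prod_add]
  refine Finset.sum_congr rfl fun t ht => ?_
  rw [Finset.prod_const_one, mul_one]
  have h2 : ∀ x ∈ t, -gelt M x = (-1 : AddMonoidAlgebra ℤ M) * gelt M x := by
    intro x _; ring
  rw [Finset.prod_congr rfl h2, Finset.prod_mul_distrib, Finset.prod_const,
    ← neg_one_pow_mul_gelt]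
  congr 1
  rw [show (fun x => gelt M x) = fun x : M => (AddMonoidAlgebra.single x (1:ℤ)) from rfl]
  rw [single_prod]
  simp only [Finset.prod_const_one]
  rfl

lemma pow_coeff (M : Type*) [AddCommMonoid M] [DecidableEq M] (D : Finset M) (s : ℕ) (c : M) :
    ((∏ x ∈ D, (1 - gelt M x))^s).coeff c
      = ∑ V ∈ Fintype.piFinset (fun _ : Fin s => D.powerset),
          if (∑ i, ∑ x ∈ V i, x) = c then (-1:ℤ)^(∑ i, (V i).card) else 0 := by
  have h1 : (∏ x ∈ D, (1 - gelt M x))^s = ∏ _i : Fin s, ∏ x ∈ D, (1 - gelt M x) := by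
    simp
  rw [h1, prod_one_sub_gelt, Finset.prod_univ_sum]
  have h2 : ∀ V : Fin s → Finset M,
      (∏ i : Fin s, (AddMonoidAlgebra.single (∑ x ∈ V i, x) ((-1:ℤ)^(V i).card)
        : AddMonoidAlgebra ℤ M))
      = AddMonoidAlgebra.single (∑ i, ∑ x ∈ V i, x) ((-1:ℤ)^(∑ i, (V i).card)) := by
    intro V
    rw [single_prod]
    congr 1
    rw [← Finset.prod_pow_eq_pow_sum]
  simp only [h2]
  rw [AddMonoidAlgebra.coeff_sum, Finset.sum_apply']
  refine Finset.sum_congr rfl fun V _ => ?_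
  rw [AddMonoidAlgebra.coeff_single, Finsupp.single_apply]

lemma sum_Icc_int_neg (n : ℕ) : (∑ j ∈ Finset.Icc (1 - (n:ℤ)) 0, j) * 2 = -(n * (n-1)) := by
  induction n with
  | zero => simp
  | succ m ih =>
    have h : Finset.Icc (1 - ((m:ℤ)+1)) 0 = insert (-(m:ℤ)) (Finset.Icc (1 - (m:ℤ)) 0) := by
      ext x
      simp only [Finset.mem_Icc, Finset.mem_insert]
      omega
    rw [show ((m:ℤ)+1) = ((m+1:ℕ):ℤ) by push_cast; ring] at h
    rw [h, Finset.sum_insert (by simp)]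
    push_cast
    push_cast at ih
    nlinarith [ih]

lemma sum_Icc_nat_cast (K : ℕ) : (∑ k ∈ Finset.Icc 1 K, (k:ℤ)) * 2 = K * (K+1) := by
  induction K with
  | zero => simp
  | succ m ih =>
    rw [Finset.sum_Icc_succ_top (by omega)]
    push_cast
    push_cast at ih
    nlinarith [ih]

lemma sigma_formula (p n : ℕ) (hodd : Odd p) :
    8 * (∑ x ∈ (Finset.Icc (1 - (n:ℤ)) 0) ×ˢ (Finset.Icc 1 ((p-1)/2)), ((x.2:ℤ) - p * x.1)) =
      (n:ℤ) * ((p:ℤ) - 1) * (2 * p * n + 1 - p) := by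
  obtain ⟨K, hK⟩ := hodd
  have hK2 : (p - 1) / 2 = K := by omega
  rw [hK2, Finset.sum_product]
  have h1 := sum_Icc_int_neg n
  have h2 := sum_Icc_nat_cast K
  have hcard1 : (Finset.Icc (1 - (n:ℤ)) 0).card = n := by
    rw [Int.card_Icc]; omega
  have hcard2 : (Finset.Icc 1 K).card = K := by
    rw [Nat.card_Icc]; omega
  have : ∀ j ∈ Finset.Icc (1 - (n:ℤ)) 0, (∑ k ∈ Finset.Icc 1 K, ((k:ℤ) - p * j))
      = (∑ k ∈ Finset.Icc 1 K, (k:ℤ)) - K * (p * j) := by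
    intro j _
    rw [Finset.sum_sub_distrib, Finset.sum_const, hcard2]
    ring_nf
  rw [Finset.sum_congr rfl this, Finset.sum_sub_distrib, Finset.sum_const, hcard1]
  have hmul : ∑ i ∈ Finset.Icc (1 - (n:ℤ)) 0, (K:ℤ) * ((p:ℤ) * i)
      = K * p * ∑ i ∈ Finset.Icc (1 - (n:ℤ)) 0, i := by
    rw [Finset.mul_sum]; exact Finset.sum_congr rfl fun x _ => by ring
  rw [hmul, nsmul_eq_mul]
  have hp : (p:ℤ) = 2 * K + 1 := by push_cast; omega
  rw [hp]
  linear_combination 4*(n:ℤ)*h2 - 4*(K:ℤ)*(2*(K:ℤ)+1)*h1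

lemma dmap_injOn (p n : ℕ) (hp : 1 ≤ p) (hn : 1 ≤ n) :
    Set.InjOn (fun jk : ℤ × ℕ => (((p : ℤ) * jk.1 - jk.2 : ℤ) : ZMod (2 * p * n)))
      ↑((Finset.Icc (1 - (n : ℤ)) (n : ℤ)) ×ˢ Finset.Icc 1 ((p - 1) / 2)) := by
  rintro ⟨j, k⟩ hm ⟨j', k'⟩ hm' heq
  simp only [Finset.coe_product, Set.mem_prod, Finset.mem_coe, Finset.mem_Icc] at hm hm'
  simp only at heq
  rw [ZMod.intCast_eq_intCast_iff_dvd_sub] at heq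
  obtain ⟨c, hc⟩ := heq
  push_cast at hc
  obtain ⟨⟨hj1, hj2⟩, hk1, hk2⟩ := hm
  obtain ⟨⟨hj1', hj2'⟩, hk1', hk2'⟩ := hm'
  set t : ℤ := 2 * n * c - j' + j with ht
  have h1 : (k : ℤ) - k' = p * t := by rw [ht]; linarith [hc]
  have hb : |(k : ℤ) - k'| < p := by rw [abs_lt]; constructor <;> omega
  have ht0 : t = 0 := by
    by_contra h
    have h1' : 1 ≤ |t| := Int.one_le_abs h
    have h2 : (p : ℤ) * 1 ≤ p * |t| :=
      mul_le_mul_of_nonneg_left h1' (by positivity)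
    have h3 : |(k : ℤ) - k'| = p * |t| := by
      rw [h1, abs_mul, abs_of_nonneg (by positivity : (0:ℤ) ≤ (p:ℤ))]
    linarith
  rw [ht0, mul_zero] at h1
  have hkk : k = k' := by omega
  have h4 : (j' : ℤ) - j = 2 * n * c := by omega
  have hb' : |(j' : ℤ) - j| < 2 * n := by rw [abs_lt]; constructor <;> omega
  have hc0 : c = 0 := by
    by_contra h
    have h1' : 1 ≤ |c| := Int.one_le_abs h
    have h2 : (2 * (n : ℤ)) * 1 ≤ 2 * n * |c| :=
      mul_le_mul_of_nonneg_left h1' (by positivity)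
    have h3 : |(j' : ℤ) - j| = 2 * n * |c| := by
      rw [h4, abs_mul, abs_of_nonneg (by positivity : (0:ℤ) ≤ 2*(n:ℤ))]
    linarith
  rw [hc0, mul_zero] at h4
  have hjj : j = j' := by omega
  simp [Prod.ext_iff, hjj, hkk]

lemma prod_orig_reindex (p n : ℕ) (hodd : Odd p) (hp : 2 ≤ p) (hn : 1 ≤ n) :
    ∏ x ∈ (Finset.Icc 1 n ×ˢ Finset.Icc 1 (p-1)),
      (1 - gelt (ZMod (2*p*n)) (((p * x.1 - x.2 : ℕ) : ZMod (2*p*n))))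
    = ∏ y ∈ (Finset.Icc (1 - (n:ℤ)) (n:ℤ) ×ˢ Finset.Icc 1 ((p-1)/2)),
      (1 - gelt (ZMod (2*p*n))
        (if 1 ≤ y.1 then (((p:ℤ) * y.1 - y.2 : ℤ) : ZMod (2*p*n))
         else -(((p:ℤ) * y.1 - y.2 : ℤ) : ZMod (2*p*n)))) := by
  obtain ⟨K, hK⟩ := hodd
  have hK2 : (p - 1) / 2 = K := by omega
  refine Finset.prod_nbij'
    (fun x => if x.2 ≤ (p-1)/2 then ((x.1 : ℤ), x.2) else (1 - (x.1 : ℤ), p - x.2))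
    (fun y => if 1 ≤ y.1 then (y.1.toNat, y.2) else ((1 - y.1).toNat, p - y.2))
    ?_ ?_ ?_ ?_ ?_
  · rintro ⟨j, k⟩ hm
    simp only [Finset.mem_product, Finset.mem_Icc] at hm ⊢
    split <;> simp only [Finset.mem_product, Finset.mem_Icc] <;>
      constructor <;> constructor <;> push_cast <;> omega
  · rintro ⟨j, k⟩ hm
    simp only [Finset.mem_product, Finset.mem_Icc] at hm ⊢
    split <;> simp only [Finset.mem_product, Finset.mem_Icc] <;>
      constructor <;> constructor <;> omega
  · rintro ⟨j, k⟩ hm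
    simp only [Finset.mem_product, Finset.mem_Icc] at hm
    by_cases h : k ≤ (p-1)/2
    · simp only [h, if_pos, if_true]
      rw [if_pos (by exact_mod_cast hm.1.1)]
      simp [Int.toNat_natCast]
    · simp only [h, if_false, if_neg]
      rw [if_neg (by omega)]
      have : (1 - (1 - (j:ℤ))).toNat = j := by omega
      simp [this]
      omega
  · rintro ⟨j, k⟩ hm
    simp only [Finset.mem_product, Finset.mem_Icc] at hm
    dsimp only
    by_cases h : 1 ≤ j
    · rw [if_pos h, if_pos (by omega)]
      simp only [Prod.mk.injEq]
      constructor
      · omega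
      · trivial
    · rw [if_neg h, if_neg (by omega)]
      simp only [Prod.mk.injEq]
      constructor
      · omega
      · omega
  · rintro ⟨j, k⟩ hm
    simp only [Finset.mem_product, Finset.mem_Icc] at hm
    dsimp only
    by_cases h : k ≤ (p-1)/2
    · rw [if_pos h]
      dsimp only
      rw [if_pos (by exact_mod_cast hm.1.1)]
      congr 2
      have h1 : p * 1 ≤ p * j := Nat.mul_le_mul_left p hm.1.1
      have hle : k ≤ p * j := by omega
      push_cast [hle]
      ring
    · rw [if_neg h]
      dsimp only
      rw [if_neg (by omega)]
      congr 2
      have h1 : p * 1 ≤ p * j := Nat.mul_le_mul_left p hm.1.1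
      have hle : k ≤ p * j := by omega
      have hkp : k ≤ p := by omega
      push_cast [hle, hkp]
      ring

lemma prod_I_split (p n : ℕ) (hn : 1 ≤ n) :
    ∏ y ∈ (Finset.Icc (1 - (n:ℤ)) (n:ℤ) ×ˢ Finset.Icc 1 ((p-1)/2)),
      (1 - gelt (ZMod (2*p*n))
        (if 1 ≤ y.1 then (((p:ℤ) * y.1 - y.2 : ℤ) : ZMod (2*p*n))
         else -(((p:ℤ) * y.1 - y.2 : ℤ) : ZMod (2*p*n))))
    = (-1)^(n * ((p-1)/2)) *
      gelt (ZMod (2*p*n))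
        (((∑ x ∈ (Finset.Icc (1 - (n:ℤ)) 0) ×ˢ (Finset.Icc 1 ((p-1)/2)),
            ((x.2:ℤ) - p * x.1)) : ℤ) : ZMod (2*p*n)) *
      ∏ y ∈ (Finset.Icc (1 - (n:ℤ)) (n:ℤ) ×ˢ Finset.Icc 1 ((p-1)/2)),
        (1 - gelt (ZMod (2*p*n)) (((p:ℤ) * y.1 - y.2 : ℤ) : ZMod (2*p*n))) := by
  have hunion : (Finset.Icc (1 - (n:ℤ)) (n:ℤ))
      = (Finset.Icc (1 - (n:ℤ)) 0) ∪ (Finset.Icc 1 (n:ℤ)) := by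
    ext x; simp only [Finset.mem_Icc, Finset.mem_union]; omega
  have hdisj : Disjoint (Finset.Icc (1 - (n:ℤ)) 0) (Finset.Icc 1 (n:ℤ)) := by
    rw [Finset.disjoint_left]; intro a ha hb
    simp only [Finset.mem_Icc] at ha hb; omega
  have hunion' : (Finset.Icc (1 - (n:ℤ)) (n:ℤ)) ×ˢ Finset.Icc 1 ((p-1)/2)
      = ((Finset.Icc (1 - (n:ℤ)) 0) ×ˢ Finset.Icc 1 ((p-1)/2))
        ∪ ((Finset.Icc 1 (n:ℤ)) ×ˢ Finset.Icc 1 ((p-1)/2)) := by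
    rw [hunion, Finset.union_product]
  have hdisj' : Disjoint ((Finset.Icc (1 - (n:ℤ)) 0) ×ˢ Finset.Icc 1 ((p-1)/2))
      ((Finset.Icc 1 (n:ℤ)) ×ˢ Finset.Icc 1 ((p-1)/2)) :=
    Finset.disjoint_product.mpr (Or.inl hdisj)
  rw [hunion', Finset.prod_union hdisj', Finset.prod_union hdisj']
  have h0 : ∀ y ∈ (Finset.Icc (1 - (n:ℤ)) 0) ×ˢ Finset.Icc 1 ((p-1)/2),
      (1 - gelt (ZMod (2*p*n))
        (if 1 ≤ y.1 then (((p:ℤ) * y.1 - y.2 : ℤ) : ZMod (2*p*n))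
         else -(((p:ℤ) * y.1 - y.2 : ℤ) : ZMod (2*p*n))))
      = (-gelt (ZMod (2*p*n)) ((((y.2:ℤ) - p * y.1 : ℤ)) : ZMod (2*p*n))) *
        (1 - gelt (ZMod (2*p*n)) (((p:ℤ) * y.1 - y.2 : ℤ) : ZMod (2*p*n))) := by
    rintro ⟨j, k⟩ hm
    simp only [Finset.mem_product, Finset.mem_Icc] at hm
    rw [if_neg (by omega)]
    have : ((((k:ℤ) - p * j : ℤ)) : ZMod (2*p*n)) = -(((p:ℤ) * j - k : ℤ) : ZMod (2*p*n)) := by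
      push_cast; ring
    rw [this, ← one_sub_gelt_neg]
  have h1 : ∀ y ∈ (Finset.Icc 1 (n:ℤ)) ×ˢ Finset.Icc 1 ((p-1)/2),
      (1 - gelt (ZMod (2*p*n))
        (if 1 ≤ y.1 then (((p:ℤ) * y.1 - y.2 : ℤ) : ZMod (2*p*n))
         else -(((p:ℤ) * y.1 - y.2 : ℤ) : ZMod (2*p*n))))
      = (1 - gelt (ZMod (2*p*n)) (((p:ℤ) * y.1 - y.2 : ℤ) : ZMod (2*p*n))) := by
    rintro ⟨j, k⟩ hm
    simp only [Finset.mem_product, Finset.mem_Icc] at hm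
    rw [if_pos (by omega)]
  rw [Finset.prod_congr rfl h0, Finset.prod_congr rfl h1, Finset.prod_mul_distrib]
  have hneg : ∏ y ∈ (Finset.Icc (1 - (n:ℤ)) 0) ×ˢ Finset.Icc 1 ((p-1)/2),
      (-gelt (ZMod (2*p*n)) ((((y.2:ℤ) - p * y.1 : ℤ)) : ZMod (2*p*n)))
      = (-1)^(n * ((p-1)/2)) *
        gelt (ZMod (2*p*n))
          (((∑ x ∈ (Finset.Icc (1 - (n:ℤ)) 0) ×ˢ (Finset.Icc 1 ((p-1)/2)),
              ((x.2:ℤ) - p * x.1)) : ℤ) : ZMod (2*p*n)) := by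
    have : ∀ y : ℤ × ℕ, (-gelt (ZMod (2*p*n)) ((((y.2:ℤ) - p * y.1 : ℤ)) : ZMod (2*p*n)))
        = (-1) * gelt (ZMod (2*p*n)) ((((y.2:ℤ) - p * y.1 : ℤ)) : ZMod (2*p*n)) := by
      intro y; ring
    simp only [this]
    rw [Finset.prod_mul_distrib, Finset.prod_const, gelt_sum]
    congr 2
    · rw [Finset.card_product, Int.card_Icc, Nat.card_Icc]
      congr 1 <;> omega
    · push_cast
      rfl
  rw [hneg]
  ring

lemma ND_eq (p s n : ℕ) (hp : 0 < p) (hn : 0 < n)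
    (hD : (Dset p n).card ≤ n * (p - 1)) (c : ZMod (2 * p * n)) :
    ND p s n c = ∑ V ∈ Fintype.piFinset (fun _ : Fin s => (Dset p n).powerset),
        (if (∑ i, ∑ x ∈ V i, x) = c then (-1:ℤ)^(∑ i, (V i).card) else 0) := by
  classical
  haveI : NeZero (2 * p * n) := ⟨by positivity⟩
  have hstep1 : ∀ m : Fin s → ℕ, (NDtuples p s n m c : ℤ)
      = ∑ V : Fin s → Finset (ZMod (2 * p * n)),
          (if (∀ i, V i ⊆ Dset p n ∧ (V i).card = m i) ∧ (∑ i, ∑ x ∈ V i, x) = c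
           then (1:ℤ) else 0) := by
    intro m
    rw [NDtuples, Nat.card_eq_fintype_card, Fintype.card_subtype]
    rw [Finset.card_filter]
    push_cast
    rfl
  rw [ND]
  simp only [hstep1, Finset.mul_sum]
  rw [Finset.sum_comm]
  have hstep2 : ∀ V : Fin s → Finset (ZMod (2 * p * n)),
      (∑ m ∈ Fintype.piFinset (fun _ : Fin s => Finset.range (n * (p - 1) + 1)),
        (-1:ℤ)^(∑ i, m i) *
          (if (∀ i, V i ⊆ Dset p n ∧ (V i).card = m i) ∧ (∑ i, ∑ x ∈ V i, x) = c
           then (1:ℤ) else 0))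
      = (if (∀ i, V i ⊆ Dset p n) ∧ (∑ i, ∑ x ∈ V i, x) = c
         then (-1:ℤ)^(∑ i, (V i).card) else 0) := by
    intro V
    by_cases hV : (∀ i, V i ⊆ Dset p n) ∧ (∑ i, ∑ x ∈ V i, x) = c
    · rw [if_pos hV]
      refine (Finset.sum_eq_single_of_mem (fun i => (V i).card) ?_ ?_).trans ?_
      · rw [Fintype.mem_piFinset]
        intro i
        rw [Finset.mem_range]
        have := Finset.card_le_card (hV.1 i)
        omega
      · intro m _ hm
        rw [if_neg, mul_zero]
        rintro ⟨h1, -⟩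
        exact hm (funext fun i => ((h1 i).2).symm)
      · rw [if_pos ⟨fun i => ⟨hV.1 i, rfl⟩, hV.2⟩, mul_one]
    · rw [if_neg hV]
      refine Finset.sum_eq_zero fun m _ => ?_
      rw [if_neg, mul_zero]
      rintro ⟨h1, h2⟩
      exact hV ⟨fun i => (h1 i).1, h2⟩
  rw [Finset.sum_congr rfl (fun V _ => hstep2 V)]
  rw [← Finset.sum_subset (Finset.subset_univ
    (Fintype.piFinset (fun _ : Fin s => (Dset p n).powerset)))]
  · refine Finset.sum_congr rfl fun V hV => ?_
    rw [Fintype.mem_piFinset] at hV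
    have h1 : ∀ i, V i ⊆ Dset p n := fun i => Finset.mem_powerset.mp (hV i)
    by_cases h2 : (∑ i, ∑ x ∈ V i, x) = c
    · rw [if_pos ⟨h1, h2⟩, if_pos h2]
    · rw [if_neg (fun h => h2 h.2), if_neg h2]
  · intro V _ hV
    rw [if_neg]
    rintro ⟨h1, -⟩
    exact hV (Fintype.mem_piFinset.mpr fun i => Finset.mem_powerset.mpr (h1 i))

theorem sum_coeff_eq_ND (p s n : ℕ) (hp : p.Prime) (hodd : Odd p)
    (hs : 1 ≤ s) (hn : 1 ≤ n) (b : ℤ) :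
    borweinS p s n (2 * p * n) b =
      (-1 : ℤ) ^ (s * n * (p - 1) / 2) *
        ND p s n
          (((b - (s : ℤ) * n * ((p : ℤ) - 1) * (2 * (p : ℤ) * n + 1 - p) / 8 : ℤ) :
            ZMod (2 * p * n))) := by
  classical
  have hp2 : 2 ≤ p := hp.two_le
  have hp3 : 3 ≤ p := by
    rcases hodd with ⟨K, hK⟩
    omega
  set M := ZMod (2 * p * n) with hM
  set Sig : ℤ := ∑ x ∈ (Finset.Icc (1 - (n:ℤ)) 0) ×ˢ (Finset.Icc 1 ((p-1)/2)),
      ((x.2:ℤ) - p * x.1) with hSig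
  have hSig8 := sigma_formula p n hodd
  rw [← hSig] at hSig8
  -- step 1: borweinS is a coefficient of the image in the group algebra
  have hS : borweinS p s n (2 * p * n) b
      = (Polynomial.aeval (gelt M 1) (borweinPoly p s n)).coeff ((b : ℤ) : M) := by
    rw [aeval_gelt_coeff, borweinS]
    refine Finset.sum_congr rfl fun i _ => ?_
    congr 1
    have h' : ((i : ℕ) : M) = ((i : ℤ) : M) := by push_cast; rfl
    rw [h', eq_iff_iff]
    exact (ZMod.intCast_eq_intCast_iff' (i : ℤ) b (2*p*n)).symm
  -- step 2: compute the image of the polynomial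
  have hBP : (Polynomial.aeval (gelt M 1)) (borweinPoly p s n)
      = (∏ x ∈ (Finset.Icc 1 n ×ˢ Finset.Icc 1 (p-1)),
          (1 - gelt M (((p * x.1 - x.2 : ℕ) : M))))^s := by
    rw [borweinPoly, ← Finset.prod_product']
    rw [map_prod, ← Finset.prod_pow]
    refine Finset.prod_congr rfl fun x _ => ?_
    rw [map_pow, map_sub, map_one, Polynomial.aeval_X_pow, gelt_pow]
    congr 3
    rw [nsmul_eq_mul, mul_one]
  rw [hS, hBP, prod_orig_reindex p n hodd hp2 hn, prod_I_split p n hn]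
  -- fold the image product into the product over Dset
  have hDprod : ∏ y ∈ (Finset.Icc (1 - (n:ℤ)) (n:ℤ) ×ˢ Finset.Icc 1 ((p-1)/2)),
      (1 - gelt M (((p:ℤ) * y.1 - y.2 : ℤ) : M))
      = ∏ z ∈ Dset p n, (1 - gelt M z) := by
    rw [Dset, Finset.prod_image]
    intro x hx y hy hxy
    exact dmap_injOn p n (by omega) hn hx hy hxy
  rw [hDprod]
  -- expand the s-th power
  rw [mul_pow, mul_pow, gelt_pow, ← pow_mul]
  rw [neg_one_eq_single, AddMonoidAlgebra.single_pow, smul_zero]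
  rw [mul_assoc]
  rw [AddMonoidAlgebra.coeff_single_mul_apply]
  have hgelt_single : gelt M (s • (((Sig : ℤ)) : M)) = AddMonoidAlgebra.single (s • (((Sig : ℤ)) : M)) (1:ℤ) := rfl
  rw [hgelt_single, AddMonoidAlgebra.coeff_single_mul_apply, one_mul]
  rw [pow_coeff]
  -- identify the target coefficient
  have hDcard : (Dset p n).card ≤ n * (p - 1) := by
    obtain ⟨K, hK⟩ := hodd
    refine (Finset.card_image_le).trans ?_
    rw [Finset.card_product, Int.card_Icc, Nat.card_Icc]
    have h1 : ((n:ℤ) + 1 - (1 - n)).toNat = 2*n := by omega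
    have h2 : (p-1)/2 + 1 - 1 = K := by omega
    have h3 : p - 1 = 2*K := by omega
    rw [h1, h2, h3]
    exact Nat.le_of_eq (by ring)
  rw [ND_eq p s n (by omega) (by omega) hDcard]
  -- match the point
  have he : (s : ℤ) * n * ((p:ℤ) - 1) * (2 * (p:ℤ) * n + 1 - p) / 8 = (s:ℤ) * Sig := by
    have h8 : (s : ℤ) * n * ((p:ℤ) - 1) * (2 * (p:ℤ) * n + 1 - p) = 8 * ((s:ℤ) * Sig) := by
      linear_combination -(s:ℤ) * hSig8
    rw [h8, Int.mul_ediv_cancel_left _ (by norm_num)]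
  have hpt : (-(s • (((Sig : ℤ)) : M)) + (-(0:M) + ((b : ℤ) : M)))
      = (((b - (s : ℤ) * n * ((p:ℤ) - 1) * (2 * (p:ℤ) * n + 1 - p) / 8 : ℤ)) : M) := by
    rw [he]
    push_cast
    simp only [Int.cast_sub, Int.cast_mul, Int.cast_natCast, nsmul_eq_mul, neg_zero, zero_add]
    show -((s : ZMod (2*p*n)) * ((Sig:ℤ) : ZMod (2*p*n))) + ((b:ℤ) : ZMod (2*p*n))
      = ((b:ℤ) : ZMod (2*p*n)) - ((((s:ℤ) * Sig : ℤ)) : ZMod (2*p*n))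
    push_cast
    ring
  rw [hpt]
  -- match the sign
  have hsign : n * ((p-1)/2) * s = s * n * (p - 1) / 2 := by
    obtain ⟨K, hK⟩ := hodd
    have h2 : (p-1)/2 = K := by omega
    have h3 : s * n * (p-1) = (n * K * s) * 2 := by
      have : p - 1 = 2*K := by omega
      rw [this]; ring
    rw [h2, h3, Nat.mul_div_cancel _ (by norm_num)]
  rw [hsign]
end

section
/- (Li–Wan sieve) Let A be a finite set, m a positive integer, and X a subset of A^m that is invariant under the action of the symmetric group S_m permuting coordinates. Let X̄ = {(x_1,…,x_m) ∈ X : x_i ≠ x_j for all i ≠ j}. For τ ∈ S_m, let X_τ = {(x_1,…,x_m) ∈ X : x_i = x_j whenever i and j lie in the same cycle of τ}, and let sign(τ) = (−1)^{m − c(τ)}, where c(τ) is the number of cycles of τ (including fixed points). Then for every function f : A^m → ℂ, ∑_{x ∈ X̄} f(x) = ∑_{τ ∈ S_m} sign(τ) ∑_{x ∈ X_τ} f(x). -/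
open Finset

lemma liwan_sign_key (m : ℕ) (τ : Equiv.Perm (Fin m)) :
    ((-1 : ℂ) ^ (m - ((Finset.univ.filter fun i => τ i = i).card + τ.cycleType.card)))
      = ((Equiv.Perm.sign τ : ℤ) : ℂ) := by
  have hfix : (Finset.univ.filter fun i => τ i = i).card = m - τ.support.card := by
    have h : (Finset.univ.filter fun i => τ i = i) = τ.supportᶜ := by
      ext i; simp [Equiv.Perm.mem_support]
    rw [h, Finset.card_compl]; simp
  have hs : τ.cycleType.sum = τ.support.card := Equiv.Perm.sum_cycleType τ
  have hsup : τ.support.card ≤ m := by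
    simpa using Finset.card_le_card (Finset.subset_univ τ.support)
  have hcle : τ.cycleType.card ≤ τ.cycleType.sum := by
    have h1 : ∀ x ∈ τ.cycleType, 1 ≤ x := fun x hx => by
      have := Equiv.Perm.two_le_of_mem_cycleType hx; omega
    simpa using Multiset.card_nsmul_le_sum h1
  have harith : m - ((m - τ.support.card) + τ.cycleType.card)
      = τ.cycleType.sum - τ.cycleType.card := by omega
  rw [hfix, harith, Equiv.Perm.sign_of_cycleType]
  have : ((((-1 : ℤˣ) ^ (τ.cycleType.sum + τ.cycleType.card) : ℤˣ) : ℤ) : ℂ)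
      = (-1 : ℂ) ^ (τ.cycleType.sum + τ.cycleType.card) := by push_cast; ring
  rw [this]
  have hsplit : τ.cycleType.sum + τ.cycleType.card
      = (τ.cycleType.sum - τ.cycleType.card) + 2 * τ.cycleType.card := by omega
  rw [hsplit, pow_add]
  simp [pow_mul]

lemma liwan_inner_sum {A : Type*} [DecidableEq A] (m : ℕ) (x : Fin m → A) :
    ∑ τ ∈ Finset.univ.filter (fun τ : Equiv.Perm (Fin m) => x ∘ τ = x),
      ((Equiv.Perm.sign τ : ℤ) : ℂ)
      = if Function.Injective x then 1 else 0 := by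
  by_cases hx : Function.Injective x
  · rw [if_pos hx]
    have : Finset.univ.filter (fun τ : Equiv.Perm (Fin m) => x ∘ τ = x) = {1} := by
      ext τ
      simp only [Finset.mem_filter, Finset.mem_univ, true_and, Finset.mem_singleton]
      constructor
      · intro h
        exact Equiv.ext fun i => hx (congrFun h i)
      · rintro rfl; rfl
    simp [this]
  · rw [if_neg hx]
    simp only [Function.Injective] at hx
    push_neg at hx
    obtain ⟨i, j, hij, hne⟩ := hx
    set s : Equiv.Perm (Fin m) := Equiv.swap i j with hsdef
    have hxs : x ∘ s = x := by
      ext k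
      simp only [Function.comp_apply, hsdef]
      rcases eq_or_ne k i with rfl | hki
      · rw [Equiv.swap_apply_left]; exact hij.symm
      rcases eq_or_ne k j with rfl | hkj
      · rw [Equiv.swap_apply_right]; exact hij
      · rw [Equiv.swap_apply_of_ne_of_ne hki hkj]
    apply Finset.sum_involution (g := fun τ _ => s * τ)
    · intro τ hτ
      have : Equiv.Perm.sign (s * τ) = - Equiv.Perm.sign τ := by
        rw [map_mul, Equiv.Perm.sign_swap hne, neg_one_mul]
      rw [this]; push_cast; ring
    · intro τ _ _
      intro h
      have : s = 1 := by
        have := congrArg (· * τ⁻¹) h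
        simpa using this
      have h2 : (Equiv.swap i j) i = (1 : Equiv.Perm (Fin m)) i := by rw [← hsdef, this]
      simp only [Equiv.swap_apply_left, Equiv.Perm.one_apply] at h2
      exact hne h2.symm
    · intro τ hτ
      simp only [Finset.mem_filter, Finset.mem_univ, true_and] at hτ ⊢
      ext k
      simp only [Function.comp_apply, Equiv.Perm.mul_apply]
      calc x (s (τ k)) = (x ∘ s) (τ k) := rfl
        _ = x (τ k) := by rw [hxs]
        _ = (x ∘ τ) k := rfl
        _ = x k := by rw [hτ]
    · intro τ _
      simp [hsdef, ← mul_assoc]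

theorem li_wan_sieve {A : Type*} [Fintype A] [DecidableEq A] (m : ℕ) (hm : 1 ≤ m)
    (X : Finset (Fin m → A))
    (hX : ∀ σ : Equiv.Perm (Fin m), ∀ x ∈ X, x ∘ σ ∈ X)
    (f : (Fin m → A) → ℂ) :
    ∑ x ∈ X.filter (fun x => Function.Injective x), f x =
      ∑ τ : Equiv.Perm (Fin m),
        (-1 : ℂ) ^ (m - ((Finset.univ.filter fun i => τ i = i).card + τ.cycleType.card)) *
          ∑ x ∈ X.filter (fun x => x ∘ τ = x), f x := by
  have step1 : ∀ τ : Equiv.Perm (Fin m),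
      (-1 : ℂ) ^ (m - ((Finset.univ.filter fun i => τ i = i).card + τ.cycleType.card)) *
        ∑ x ∈ X.filter (fun x => x ∘ τ = x), f x
      = ∑ x ∈ X, (if x ∘ τ = x then ((Equiv.Perm.sign τ : ℤ) : ℂ) * f x else 0) := by
    intro τ
    rw [liwan_sign_key, Finset.mul_sum, Finset.sum_filter]
  rw [Finset.sum_congr rfl (fun τ _ => step1 τ), Finset.sum_comm]
  rw [Finset.sum_filter]
  apply Finset.sum_congr rfl
  intro x _
  rw [← Finset.sum_filter, ← Finset.sum_mul, liwan_inner_sum]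
  split <;> simp
end

section
/- Let ℓ and m be positive integers with ℓ ≤ m, let a be a complex number, let B be a finite set of complex numbers, and set t_i = a·∑_{z∈B} z^i if ℓ divides i and t_i = 0 otherwise. Then Z_m(t_1,…,t_m) equals the coefficient of u^m in the formal power series ∏_{z∈B} (1 − z^ℓ u^ℓ)^{−a/ℓ}, where (1 − z^ℓ u^ℓ)^{−a/ℓ} denotes the generalized binomial series ∑_{j≥0} ((a/ℓ)(a/ℓ+1)⋯(a/ℓ+j−1)/j!) z^{ℓj} u^{ℓj}. -/
open Finset

/-- The number of cycles of length `i` of the permutation `τ` of `{1, …, m}`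
(fixed points counted as cycles of length 1). -/
def cycleCount {m : ℕ} (τ : Equiv.Perm (Fin m)) (i : ℕ) : ℕ :=
  (τ.cycleType + Multiset.replicate (m - τ.cycleType.sum) 1).count i

/-- The cycle index `Z_m(t_1, …, t_m) = (1/m!) ∑_{τ ∈ S_m} ∏_{i=1}^m t_i^{c_i(τ)}`,
with `Z_0 = 1`. -/
noncomputable def Zcycle (m : ℕ) (t : ℕ → ℂ) : ℂ :=
  (m.factorial : ℂ)⁻¹ * ∑ τ : Equiv.Perm (Fin m), ∏ i ∈ Finset.Icc 1 m, t i ^ cycleCount τ i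

/-- The generalized binomial series `(1 - z^ℓ u^ℓ)^{-a/ℓ}
  = ∑_{j ≥ 0} ((a/ℓ)(a/ℓ+1)⋯(a/ℓ+j-1)/j!) z^{ℓj} u^{ℓj}` in `ℂ[[u]]`. -/
noncomputable def genBinomialSeries (ℓ : ℕ) (a z : ℂ) : PowerSeries ℂ :=
  PowerSeries.mk fun m : ℕ =>
    if ℓ ∣ m then (∏ r ∈ Finset.range (m / ℓ), (a / ℓ + r)) / ((m / ℓ).factorial : ℂ) * z ^ m
    else 0

namespace ZcycleAux

open Equiv Equiv.Perm PowerSeries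


variable {α β : Type*} [Fintype α] [DecidableEq α] [Fintype β] [DecidableEq β]

/-- full cycle type including fixed points -/
def fullCT (g : Perm α) : Multiset ℕ :=
  g.cycleType + Multiset.replicate (Fintype.card α - g.support.card) 1

lemma fullCT_sum (g : Perm α) : (fullCT g).sum = Fintype.card α := by
  have h := Finset.card_le_univ g.support
  simp only [fullCT, Multiset.sum_add, Multiset.sum_replicate, smul_eq_mul, mul_one,
    Equiv.Perm.sum_cycleType]
  simp only [Fintype.card] at *
  omega

lemma mem_fullCT_icc {g : Perm α} {j : ℕ} (hj : j ∈ fullCT g) :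
    j ∈ Finset.Icc 1 (Fintype.card α) := by
  rcases Multiset.mem_add.mp hj with h | h
  · exact Finset.mem_Icc.mpr ⟨le_trans one_le_two (Equiv.Perm.two_le_of_mem_cycleType h),
      le_trans (Equiv.Perm.le_card_support_of_mem_cycleType h) (Finset.card_le_univ g.support)⟩
  · have h1 := Multiset.eq_of_mem_replicate h
    subst h1
    have h2 : Fintype.card α - g.support.card ≠ 0 := by
      intro h0; rw [h0] at h; simp at h
    exact Finset.mem_Icc.mpr ⟨le_refl 1, by omega⟩

noncomputable def w (t : ℕ → ℂ) (g : Perm α) : ℂ := ((fullCT g).map t).prod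

noncomputable def Sw (α : Type*) [Fintype α] [DecidableEq α] (t : ℕ → ℂ) : ℂ :=
  ∑ g : Perm α, w t g

lemma cycleType_permCongr (e : α ≃ β) (g : Perm α) :
    (e.permCongr g).cycleType = g.cycleType := by
  have hf : ∀ b : β, (fun _ : β => True) b := fun _ => trivial
  let f : α ≃ {b : β // True} := e.trans (Equiv.subtypeUnivEquiv hf).symm
  have : e.permCongr g = g.extendDomain f := by
    ext b
    rw [Equiv.Perm.extendDomain_apply_subtype g f (hf b)]
    rfl
  rw [this, Equiv.Perm.cycleType_extendDomain]

lemma Sw_congr (e : α ≃ β) (t : ℕ → ℂ) : Sw α t = Sw β t := by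
  refine Fintype.sum_equiv e.permCongr _ _ fun g => ?_
  have h1 : (e.permCongr g).cycleType = g.cycleType := cycleType_permCongr e g
  have h2 : (e.permCongr g).support.card = g.support.card := by
    rw [← Equiv.Perm.sum_cycleType, ← Equiv.Perm.sum_cycleType, h1]
  unfold w fullCT
  rw [h1, h2, Fintype.card_congr e]

lemma Sw_fin_zero (t : ℕ → ℂ) : Sw (Fin 0) t = 1 := by
  rw [Sw]
  rw [Finset.sum_eq_single 1]
  · have : fullCT (1 : Perm (Fin 0)) = 0 := by
      simp [fullCT]
    simp [w, this]
  · intro g _ hg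
    exact absurd (Subsingleton.elim g 1) hg
  · simp



lemma not_mem_support_iff_of_disjoint {c d : Perm α} (hd : Perm.Disjoint d c) (x : α) :
    x ∉ c.support ↔ d x ∉ c.support := by
  have hs : _root_.Disjoint d.support c.support :=
    Equiv.Perm.disjoint_iff_disjoint_support.mp hd
  constructor
  · intro hx hdx
    by_cases h : d x = x
    · rw [h] at hdx; exact hx hdx
    · have h2 : d x ∈ d.support := by
        rwa [Equiv.Perm.apply_mem_support, Equiv.Perm.mem_support]
      exact (Finset.disjoint_left.mp hs h2) hdx
  · intro hdx hx
    have h2 : d x = x := by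
      by_contra h
      exact (Finset.disjoint_left.mp hs (Equiv.Perm.mem_support.mpr h)) hx
    rw [h2] at hdx; exact hdx hx

lemma disjoint_ofSubtype_of_cycle (c : Perm α) (h : Perm {x // x ∉ c.support}) :
    Perm.Disjoint c (Equiv.Perm.ofSubtype h) := by
  intro x
  by_cases hx : x ∈ c.support
  · exact Or.inr (Equiv.Perm.ofSubtype_apply_of_not_mem h (by simpa using hx))
  · exact Or.inl (Equiv.Perm.notMem_support.mp hx)

lemma card_compl_support (c : Perm α) :
    Fintype.card {x // x ∉ c.support} = Fintype.card α - c.support.card := by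
  have := Fintype.card_subtype_compl (fun x => x ∈ c.support)
  rw [Fintype.card_subtype_compl, Fintype.card_coe]

lemma w_cycle_mul (t : ℕ → ℂ) (c : Perm α) (hc : c.IsCycle)
    (h : Perm {x // x ∉ c.support}) :
    w t (c * Equiv.Perm.ofSubtype h) = t c.support.card * w t h := by
  have hd := disjoint_ofSubtype_of_cycle c h
  have hct : (c * Equiv.Perm.ofSubtype h).cycleType
      = c.support.card ::ₘ (Equiv.Perm.ofSubtype h).cycleType := by
    rw [Equiv.Perm.Disjoint.cycleType_mul hd, hc.cycleType]
    rfl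
  have hot : (Equiv.Perm.ofSubtype h).cycleType = h.cycleType :=
    Equiv.Perm.cycleType_ofSubtype
  have hsc : (c * Equiv.Perm.ofSubtype h).support.card
      = c.support.card + h.support.card := by
    rw [← Equiv.Perm.sum_cycleType, hct, Multiset.sum_cons, hot,
      Equiv.Perm.sum_cycleType]
  unfold w fullCT
  rw [hct, hot, hsc, card_compl_support, Multiset.cons_add, Multiset.map_cons,
    Multiset.prod_cons, Nat.sub_sub]

lemma factor_inv (c : Perm α) {g : Perm α} (hg : c ∈ g.cycleFactorsFinset) :
    c * Equiv.Perm.ofSubtype ((g * c⁻¹).subtypePerm (p := fun x => x ∉ c.support)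
      (fun x => (not_mem_support_iff_of_disjoint
        (Equiv.Perm.disjoint_mul_inv_of_mem_cycleFactorsFinset hg) x).symm)) = g := by
  have hdj := Equiv.Perm.disjoint_mul_inv_of_mem_cycleFactorsFinset hg
  rw [Equiv.Perm.ofSubtype_subtypePerm _ (fun x hx => ?_)]
  · have hcom : (g * c⁻¹) * c = c * (g * c⁻¹) := hdj.commute
    rw [← hcom]
    simp [mul_assoc]
  · rcases hdj x with h | h
    · exact absurd h hx
    · exact Equiv.Perm.notMem_support.mpr h

lemma sum_factor (t : ℕ → ℂ) (c : Perm α) (hc : c.IsCycle) :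
    ∑ g ∈ univ.filter (fun g : Perm α => c ∈ g.cycleFactorsFinset), w t g
      = t c.support.card * Sw {x // x ∉ c.support} t := by
  classical
  rw [Sw, Finset.mul_sum]
  have hmem : ∀ g : Perm α, g ∈ univ.filter (fun g : Perm α => c ∈ g.cycleFactorsFinset)
      → c ∈ g.cycleFactorsFinset := by
    intro g hg; simpa using hg
  refine Finset.sum_bij'
    (i := fun g hg => Equiv.Perm.subtypePerm (p := fun x => x ∉ c.support) (g * c⁻¹)
      (fun x => (not_mem_support_iff_of_disjoint
        (Equiv.Perm.disjoint_mul_inv_of_mem_cycleFactorsFinset (hmem g hg)) x).symm))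
    (j := fun h _ => c * Equiv.Perm.ofSubtype h) ?_ ?_ ?_ ?_ ?_
  · intro g hg; exact Finset.mem_univ _
  · intro h _
    simp only [Finset.mem_filter, Finset.mem_univ, true_and]
    rw [Equiv.Perm.mem_cycleFactorsFinset_iff]
    refine ⟨hc, fun a ha => ?_⟩
    have h2 : Equiv.Perm.ofSubtype h a = a :=
      Equiv.Perm.ofSubtype_apply_of_not_mem h (by simpa using ha)
    rw [Equiv.Perm.mul_apply, h2]
  · intro g hg
    exact factor_inv c (hmem g hg)
  · intro h _
    have hk : (c * Equiv.Perm.ofSubtype h) * c⁻¹ = Equiv.Perm.ofSubtype h := by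
      have hcom : c * Equiv.Perm.ofSubtype h = Equiv.Perm.ofSubtype h * c :=
        Equiv.Perm.Disjoint.commute (disjoint_ofSubtype_of_cycle c h)
    
      rw [hcom]
      simp [mul_assoc]
    ext x
    simp only [Equiv.Perm.subtypePerm_apply]
    rw [hk]
    exact Equiv.Perm.ofSubtype_apply_of_mem h x.2
  · intro g hg
    conv_lhs => rw [← factor_inv c (hmem g hg)]
    exact w_cycle_mul t c hc _


lemma card_ne (x0 : α) : Fintype.card {x // x ≠ x0} = Fintype.card α - 1 := by
  have := Fintype.card_subtype_compl (fun x => x = x0)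
  simpa [Fintype.card_subtype_eq] using this

lemma w_of_fixed (t : ℕ → ℂ) (x0 : α) (h : Perm {x // x ≠ x0}) :
    w t (Equiv.Perm.ofSubtype h) = t 1 * w t h := by
  have hot : (Equiv.Perm.ofSubtype h).cycleType = h.cycleType :=
    Equiv.Perm.cycleType_ofSubtype
  have hsc : (Equiv.Perm.ofSubtype h).support.card = h.support.card := by
    rw [← Equiv.Perm.sum_cycleType, hot, Equiv.Perm.sum_cycleType]
  have hle : h.support.card ≤ Fintype.card α - 1 := by
    rw [← card_ne x0]; exact Finset.card_le_univ _
  have hpos : 1 ≤ Fintype.card α := by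
    have := Fintype.card_pos_iff.mpr ⟨x0⟩; omega
  unfold w fullCT
  rw [hot, hsc, card_ne x0]
  have harith : Fintype.card α - h.support.card
      = (Fintype.card α - 1 - h.support.card) + 1 := by omega
  rw [harith, Multiset.replicate_succ, Multiset.add_cons, Multiset.map_cons,
    Multiset.prod_cons]

lemma sum_fixed (t : ℕ → ℂ) (x0 : α) :
    ∑ g ∈ univ.filter (fun g : Perm α => g x0 = x0), w t g
      = t 1 * Sw {x // x ≠ x0} t := by
  classical
  rw [Sw, Finset.mul_sum]
  have hiff : ∀ g : Perm α, g x0 = x0 → ∀ x : α, x ≠ x0 ↔ g x ≠ x0 := by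
    intro g hg x
    constructor
    · intro hx hgx
      exact hx (g.injective (by rw [hgx, hg]))
    · intro hx h0
      rw [h0, hg] at hx; exact hx rfl
  have hmem : ∀ g : Perm α, g ∈ univ.filter (fun g : Perm α => g x0 = x0)
      → g x0 = x0 := fun g hg => by simpa using hg
  refine Finset.sum_bij'
    (i := fun g hg => Equiv.Perm.subtypePerm (p := fun x => x ≠ x0) g (fun x => (hiff g (hmem g hg) x).symm))
    (j := fun h _ => Equiv.Perm.ofSubtype h) ?_ ?_ ?_ ?_ ?_
  · intro g hg; exact Finset.mem_univ _
  · intro h _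
    simp only [Finset.mem_filter, Finset.mem_univ, true_and]
    exact Equiv.Perm.ofSubtype_apply_of_not_mem h (by simp)
  · intro g hg
    refine Equiv.Perm.ofSubtype_subtypePerm _ (fun x hx => ?_)
    intro h0
    rw [h0] at hx
    exact hx (hmem g hg)
  · intro h _
    exact Equiv.Perm.subtypePerm_ofSubtype h
  · intro g hg
    conv_lhs => rw [← Equiv.Perm.ofSubtype_subtypePerm (p := fun x => x ≠ x0) (f := g) (fun x => (hiff g (hmem g hg) x).symm) (fun x hx => by
      intro h0; rw [h0] at hx; exact hx (hmem g hg))]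
    exact w_of_fixed t x0 _



open scoped Classical

lemma pow_apply_inj (c : Perm α) (hc : c.IsCycle) {x : α} (hx : x ∈ c.support) {i : ℕ}
    (hi : c.support.card = i) :
    Function.Injective (fun j : Fin i => (c ^ (j : ℕ)) x) := by
  classical
  intro j k hjk
  have hcx : c x ≠ x := Equiv.Perm.mem_support.mp hx
  have hlen : (Equiv.Perm.toList c x).length = i := by
    rw [Equiv.Perm.length_toList, hc.cycleOf_eq hcx, hi]
  have hnd := Equiv.Perm.nodup_toList c x
  have hget := List.nodup_iff_injective_get.mp hnd
  have e1 : (Equiv.Perm.toList c x).get ⟨(j : ℕ), by omega⟩ = (c ^ (j : ℕ)) x :=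
    Equiv.Perm.getElem_toList ..
  have e2 : (Equiv.Perm.toList c x).get ⟨(k : ℕ), by omega⟩ = (c ^ (k : ℕ)) x :=
    Equiv.Perm.getElem_toList ..
  have h3 := hget (a₁ := ⟨(j : ℕ), by omega⟩) (a₂ := ⟨(k : ℕ), by omega⟩)
    (by rw [e1, e2]; exact hjk)
  have h4 := congrArg Fin.val h3
  exact Fin.ext h4

lemma cycle_count (i : ℕ) (hi : 2 ≤ i) :
    (univ.filter fun c : Perm α => c.IsCycle ∧ c.support.card = i).card * i
      = (Fintype.card α).descFactorial i := by
  classical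
  have h1 : (univ.filter fun c : Perm α => c.IsCycle ∧ c.support.card = i).card * i
      = ∑ c ∈ univ.filter (fun c : Perm α => c.IsCycle ∧ c.support.card = i),
          c.support.card := by
    rw [Finset.sum_congr rfl (fun c hc => ((Finset.mem_filter.mp hc).2.2)),
      Finset.sum_const, smul_eq_mul]
  have h2 : ∑ c ∈ univ.filter (fun c : Perm α => c.IsCycle ∧ c.support.card = i),
        c.support.card
      = ((univ.filter fun c : Perm α => c.IsCycle ∧ c.support.card = i).sigma
          (fun c => c.support)).card := by
    rw [Finset.card_sigma]
  rw [h1, h2]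
  have h3 : ((univ.filter fun c : Perm α => c.IsCycle ∧ c.support.card = i).sigma
      (fun c => c.support)).card = (Finset.univ : Finset (Fin i ↪ α)).card := by
    refine Finset.card_bij' (i := fun p hp => ?_) (j := fun f _ => ?_) ?_ ?_ ?_ ?_
    · -- forward map
      have hp' := Finset.mem_sigma.mp hp
      have hc : p.1.IsCycle := (Finset.mem_filter.mp hp'.1).2.1
      have hcard : p.1.support.card = i := (Finset.mem_filter.mp hp'.1).2.2
      exact ⟨fun j => (p.1 ^ (j : ℕ)) p.2, pow_apply_inj p.1 hc hp'.2 hcard⟩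
    · -- backward map
      exact ⟨(List.ofFn f).formPerm, f ⟨0, by omega⟩⟩
    · intro p hp; exact Finset.mem_univ _
    · -- backward membership
      intro f _
      have hl : (List.ofFn f).Nodup := List.nodup_ofFn.mpr f.injective
      have hlen : (List.ofFn f).length = i := List.length_ofFn
      have hne : ∀ y : α, List.ofFn f ≠ [y] := by
        intro y hy
        rw [hy] at hlen; simp at hlen; omega
      have hsupp : (List.ofFn f).formPerm.support = (List.ofFn f).toFinset :=
        List.support_formPerm_of_nodup _ hl hne
      refine Finset.mem_sigma.mpr ⟨Finset.mem_filter.mpr ⟨Finset.mem_univ _, ?_, ?_⟩, ?_⟩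
      · exact List.isCycle_formPerm hl (by omega)
      · rw [hsupp, List.toFinset_card_of_nodup hl, hlen]
      · rw [hsupp, List.mem_toFinset]
        exact List.mem_ofFn.mpr ⟨⟨0, by omega⟩, rfl⟩
    · -- left inverse
      intro p hp
      have hp' := Finset.mem_sigma.mp hp
      have hc : p.1.IsCycle := (Finset.mem_filter.mp hp'.1).2.1
      have hcard : p.1.support.card = i := (Finset.mem_filter.mp hp'.1).2.2
      have hcx : p.1 p.2 ≠ p.2 := Equiv.Perm.mem_support.mp hp'.2
      have hlen : (Equiv.Perm.toList p.1 p.2).length = i := by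
        rw [Equiv.Perm.length_toList, hc.cycleOf_eq hcx, hcard]
      have hofn : List.ofFn (fun j : Fin i => (p.1 ^ (j : ℕ)) p.2)
          = Equiv.Perm.toList p.1 p.2 := by
        refine List.ext_get (by simp [hlen]) ?_
        intro n h₁ h₂
        simp [Equiv.Perm.getElem_toList]
      obtain ⟨c, x⟩ := p
      simp only [Function.Embedding.coeFn_mk] at hofn hcx ⊢
      rw [hofn, Equiv.Perm.formPerm_toList, hc.cycleOf_eq hcx]
      simp
    · -- right inverse
      intro f _
      have hl : (List.ofFn f).Nodup := List.nodup_ofFn.mpr f.injective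
      have hlen : (List.ofFn f).length = i := List.length_ofFn
      ext j
      have h4 := List.formPerm_pow_apply_getElem (List.ofFn f) hl (j : ℕ) 0 (by omega)
      simp only [List.getElem_ofFn, hlen] at h4
      simpa [Nat.mod_eq_of_lt j.2] using h4
  rw [h3, Finset.card_univ, Fintype.card_embedding_eq, Fintype.card_fin]


lemma count_one_fullCT (g : Perm α) :
    Multiset.count 1 (fullCT g) = Fintype.card α - g.support.card := by
  unfold fullCT
  rw [Multiset.count_add, Multiset.count_replicate_self,
    Multiset.count_eq_zero_of_notMem, zero_add]
  intro h
  have := Equiv.Perm.two_le_of_mem_cycleType h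
  omega

lemma count_fullCT_of_two_le (g : Perm α) {i : ℕ} (hi : 2 ≤ i) :
    Multiset.count i (fullCT g)
      = (g.cycleFactorsFinset.filter fun c => c.support.card = i).card := by
  unfold fullCT
  rw [Multiset.count_add, Multiset.count_replicate, if_neg (by omega), add_zero]
  rw [Equiv.Perm.cycleType_def, Multiset.count_map]
  have h1 : Multiset.filter (fun a => i = (Finset.card ∘ Equiv.Perm.support) a)
        g.cycleFactorsFinset.val
      = Multiset.filter (fun c => c.support.card = i) g.cycleFactorsFinset.val := by
    apply Multiset.filter_congr
    intro c _
    simp [eq_comm]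
  rw [h1]
  rw [Finset.card, Finset.filter_val]

lemma fixed_count (g : Perm α) :
    Fintype.card α - g.support.card = (univ.filter fun x => g x = x).card := by
  have h1 := Finset.card_filter_add_card_filter_not
    (s := (univ : Finset α)) (p := fun x => g x = x)
  have h2 : (univ.filter fun x => ¬ g x = x) = g.support := by
    ext x; simp [Equiv.Perm.mem_support]
  rw [h2] at h1
  have h3 : (univ : Finset α).card = Fintype.card α := rfl
  omega

/-- The key recurrence. -/
lemma recur (t : ℕ → ℂ) (m : ℕ) :
    (m : ℂ) * Sw (Fin m) t
      = ∑ i ∈ Icc 1 m, (m.descFactorial i : ℂ) * (t i * Sw (Fin (m - i)) t) := by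
  classical
  rw [Sw, Finset.mul_sum]
  have step1 : ∀ g : Perm (Fin m),
      (m : ℂ) * w t g
        = ∑ i ∈ Icc 1 m, ((i * Multiset.count i (fullCT g) : ℕ) : ℂ) * w t g := by
    intro g
    rw [← Finset.sum_mul]
    congr 1
    rw [← Nat.cast_sum]
    congr 1
    have hsum : (fullCT g).sum = m := by
      rw [fullCT_sum g, Fintype.card_fin]
    conv_lhs => rw [← hsum]
    have h0 : (fullCT g).sum = ∑ i ∈ (fullCT g).toFinset, Multiset.count i (fullCT g) • i := by
      conv_lhs => rw [← Multiset.map_id (fullCT g)]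
      rw [Finset.sum_multiset_map_count]
      rfl
    rw [h0]
    rw [Finset.sum_subset (fun j hj => by
        have h5 := mem_fullCT_icc (Multiset.mem_toFinset.mp hj)
        simp only [Fintype.card_fin] at h5
        exact h5)]
    · apply Finset.sum_congr rfl
      intro i _
      rw [smul_eq_mul, mul_comm]
    · intro j _ hj
      rw [Multiset.count_eq_zero_of_notMem (fun h => hj (Multiset.mem_toFinset.mpr h))]
      simp
  rw [Finset.sum_congr rfl (fun g _ => step1 g), Finset.sum_comm]
  apply Finset.sum_congr rfl
  intro i hi
  obtain ⟨hi1, him⟩ := Finset.mem_Icc.mp hi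
  rcases eq_or_lt_of_le hi1 with h1 | h2
  · -- i = 1
    subst h1
    have hm1 : 1 ≤ m := him
    calc ∑ g : Perm (Fin m), ((1 * Multiset.count 1 (fullCT g) : ℕ) : ℂ) * w t g
        = ∑ g : Perm (Fin m), ∑ x : Fin m, (if g x = x then w t g else 0) := by
          apply Finset.sum_congr rfl
          intro g _
          rw [one_mul, count_one_fullCT, fixed_count,
            ← Finset.sum_filter, Finset.sum_const, nsmul_eq_mul]
      _ = ∑ x : Fin m, ∑ g : Perm (Fin m), (if g x = x then w t g else 0) :=
          Finset.sum_comm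
      _ = ∑ x : Fin m, t 1 * Sw (Fin (m - 1)) t := by
          apply Finset.sum_congr rfl
          intro x _
          rw [← Finset.sum_filter, sum_fixed t x]
          congr 1
          refine Sw_congr (Fintype.equivFinOfCardEq ?_) t
          rw [card_ne x, Fintype.card_fin]
      _ = (m.descFactorial 1 : ℂ) * (t 1 * Sw (Fin (m - 1)) t) := by
          rw [Finset.sum_const, Finset.card_univ, Fintype.card_fin, nsmul_eq_mul,
            Nat.descFactorial_one]
  · -- 2 ≤ i
    have hi2 : 2 ≤ i := h2
    calc ∑ g : Perm (Fin m), ((i * Multiset.count i (fullCT g) : ℕ) : ℂ) * w t g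
        = (i : ℂ) * ∑ g : Perm (Fin m),
            ∑ c : Perm (Fin m), (if c ∈ g.cycleFactorsFinset ∧ c.support.card = i
              then w t g else 0) := by
          rw [Finset.mul_sum]
          apply Finset.sum_congr rfl
          intro g _
          rw [count_fullCT_of_two_le g hi2]
          have hset : g.cycleFactorsFinset.filter (fun c => c.support.card = i)
              = univ.filter (fun c : Perm (Fin m) =>
                  c ∈ g.cycleFactorsFinset ∧ c.support.card = i) := by
            ext c; simp
          rw [hset, ← Finset.sum_filter, Finset.sum_const, nsmul_eq_mul,
            Nat.cast_mul, mul_assoc]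
      _ = (i : ℂ) * ∑ c : Perm (Fin m),
            (if c.IsCycle ∧ c.support.card = i then t i * Sw (Fin (m - i)) t else 0) := by
          congr 1
          rw [Finset.sum_comm]
          apply Finset.sum_congr rfl
          intro c _
          by_cases hPc : c.IsCycle ∧ c.support.card = i
          · rw [if_pos hPc]
            have hcond : ∀ g : Perm (Fin m),
                (c ∈ g.cycleFactorsFinset ∧ c.support.card = i)
                  ↔ c ∈ g.cycleFactorsFinset := by
              intro g
              exact ⟨fun h => h.1, fun h => ⟨h, hPc.2⟩⟩
            calc ∑ g : Perm (Fin m), (if c ∈ g.cycleFactorsFinset ∧ c.support.card = i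
                  then w t g else 0)
                = ∑ g ∈ univ.filter (fun g : Perm (Fin m) => c ∈ g.cycleFactorsFinset),
                    w t g := by
                  rw [← Finset.sum_filter]
                  apply Finset.sum_congr _ (fun _ _ => rfl)
                  ext g; simp [hcond g]
              _ = t c.support.card * Sw {x // x ∉ c.support} t := sum_factor t c hPc.1
              _ = t i * Sw (Fin (m - i)) t := by
                  rw [hPc.2]
                  congr 1
                  refine Sw_congr (Fintype.equivFinOfCardEq ?_) t
                  rw [card_compl_support, Fintype.card_fin, hPc.2]
          · rw [if_neg hPc]
            apply Finset.sum_eq_zero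
            intro g _
            rw [if_neg]
            intro hcon
            exact hPc ⟨(Equiv.Perm.mem_cycleFactorsFinset_iff.mp hcon.1).1, hcon.2⟩
      _ = (m.descFactorial i : ℂ) * (t i * Sw (Fin (m - i)) t) := by
          rw [← Finset.sum_filter, Finset.sum_const, nsmul_eq_mul]
          have hcc := cycle_count (α := Fin m) i hi2
          rw [Fintype.card_fin] at hcc
          rw [← hcc]
          push_cast
          ring



noncomputable def S1 (ℓ : ℕ) (a z : ℂ) : PowerSeries ℂ :=
  PowerSeries.mk fun i => if ℓ ∣ i ∧ i ≠ 0 then a * z ^ i else 0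

noncomputable def alpha (ℓ : ℕ) (a : ℂ) (j : ℕ) : ℂ :=
  (∏ r ∈ Finset.range j, (a / ℓ + r)) / (j.factorial : ℂ)

lemma coeff_genBinomial (ℓ : ℕ) (a z : ℂ) (m : ℕ) :
    PowerSeries.coeff m (genBinomialSeries ℓ a z)
      = if ℓ ∣ m then alpha ℓ a (m / ℓ) * z ^ m else 0 := by
  rw [genBinomialSeries, coeff_mk]
  rfl

lemma coeff_S1 (ℓ : ℕ) (a z : ℂ) (i : ℕ) :
    PowerSeries.coeff i (S1 ℓ a z) = if ℓ ∣ i ∧ i ≠ 0 then a * z ^ i else 0 := by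
  rw [S1, coeff_mk]

lemma alpha_zero (ℓ : ℕ) (a : ℂ) : alpha ℓ a 0 = 1 := by simp [alpha]

lemma alpha_rec (ℓ : ℕ) (hℓ : 1 ≤ ℓ) (a : ℂ) (n : ℕ) :
    (ℓ : ℂ) * n * alpha ℓ a n = a * ∑ e ∈ Finset.range n, alpha ℓ a e := by
  have hℓ0 : (ℓ : ℂ) ≠ 0 := Nat.cast_ne_zero.mpr (by omega)
  induction n with
  | zero => simp
  | succ n ih =>
    have hfn : ((n).factorial : ℂ) ≠ 0 := by exact_mod_cast (Nat.factorial_ne_zero n)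
    have hn1 : ((n : ℂ) + 1) ≠ 0 := Nat.cast_add_one_ne_zero n
    have hsucc : alpha ℓ a (n + 1) = alpha ℓ a n * (a / ℓ + n) / ((n : ℂ) + 1) := by
      unfold alpha
      rw [Finset.prod_range_succ, Nat.factorial_succ]
      push_cast
      rw [div_mul_eq_mul_div, div_div, mul_comm ((n : ℂ) + 1)]
    rw [Finset.sum_range_succ, mul_add, ← ih, hsucc]
    push_cast
    field_simp
    ring

lemma sum_mult (ℓ : ℕ) (hℓ : 1 ≤ ℓ) (n : ℕ) (F : ℕ → ℂ) (hF : ∀ j, ¬ ℓ ∣ j → F j = 0) :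
    ∑ j ∈ Finset.range (n + 1), F j = ∑ u ∈ Finset.range (n / ℓ + 1), F (ℓ * u) := by
  have h1 : ∑ j ∈ (Finset.range (n + 1)).filter (fun j => ℓ ∣ j), F j
      = ∑ j ∈ Finset.range (n + 1), F j :=
    Finset.sum_filter_of_ne (fun j _ hj => by by_contra h; exact hj (hF j h))
  rw [← h1]
  refine Finset.sum_nbij' (i := fun j => j / ℓ) (j := fun u => ℓ * u) ?_ ?_ ?_ ?_ ?_
  · intro j hj
    simp only [Finset.mem_filter, Finset.mem_range] at hj
    simp only [Finset.mem_range]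
    have := Nat.div_le_div_right (c := ℓ) (by omega : j ≤ n)
    omega
  · intro u hu
    simp only [Finset.mem_range] at hu
    simp only [Finset.mem_filter, Finset.mem_range]
    refine ⟨?_, Dvd.intro u rfl⟩
    have h2 : ℓ * u ≤ ℓ * (n / ℓ) := Nat.mul_le_mul_left ℓ (by omega)
    have h3 : ℓ * (n / ℓ) ≤ n := by
      rw [mul_comm]; exact Nat.div_mul_le_self n ℓ
    omega
  · intro j hj
    simp only [Finset.mem_filter, Finset.mem_range] at hj
    exact Nat.mul_div_cancel' hj.2
  · intro u _
    exact Nat.mul_div_cancel_left u (by omega)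
  · intro j hj
    simp only [Finset.mem_filter, Finset.mem_range] at hj
    rw [Nat.mul_div_cancel' hj.2]

lemma key_series (ℓ : ℕ) (hℓ : 1 ≤ ℓ) (a z : ℂ) :
    X * d⁄dX ℂ (genBinomialSeries ℓ a z) = S1 ℓ a z * genBinomialSeries ℓ a z := by
  have hℓ0 : ℓ ≠ 0 := by omega
  ext n
  cases n with
  | zero =>
    rw [coeff_zero_X_mul, PowerSeries.coeff_mul]
    simp [coeff_S1]
  | succ m =>
    rw [coeff_succ_X_mul, coeff_derivative, PowerSeries.coeff_mul,
      Finset.Nat.sum_antidiagonal_eq_sum_range_succ_mk]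
    simp only
    by_cases hdvd : ℓ ∣ (m + 1)
    · -- divisible case
      obtain ⟨d, hd⟩ := hdvd
      have hdq : (m + 1) / ℓ = d := by rw [hd, Nat.mul_div_cancel_left d (by omega : 0 < ℓ)]
      have hd1 : 1 ≤ d := by
        rcases Nat.eq_zero_or_pos d with h | h
        · rw [h, mul_zero] at hd; omega
        · exact h
      rw [sum_mult ℓ hℓ (m + 1) _ (fun j hj => by
        rw [coeff_S1, if_neg (fun hcon => hj hcon.1), zero_mul])]
      rw [hdq]
      have hterm : ∀ u ∈ Finset.range (d + 1),
          PowerSeries.coeff (ℓ * u) (S1 ℓ a z)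
              * PowerSeries.coeff (m + 1 - ℓ * u) (genBinomialSeries ℓ a z)
            = if u = 0 then 0 else a * alpha ℓ a (d - u) * z ^ (m + 1) := by
        intro u hu
        simp only [Finset.mem_range] at hu
        rcases Nat.eq_zero_or_pos u with h0 | h0
        · subst h0; simp [coeff_S1]
        · rw [if_neg (by omega)]
          have hle : ℓ * u ≤ m + 1 := by
            rw [hd]; exact Nat.mul_le_mul_left ℓ (by omega)
          have hsub : m + 1 - ℓ * u = ℓ * (d - u) := by
            rw [hd, Nat.mul_sub]
          rw [coeff_S1, if_pos ⟨Dvd.intro u rfl, Nat.mul_ne_zero (by omega) (by omega)⟩, coeff_genBinomial,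
            hsub, if_pos (Dvd.intro (d - u) rfl),
            Nat.mul_div_cancel_left _ (by omega : 0 < ℓ)]
          have hz : z ^ (ℓ * u) * z ^ (ℓ * (d - u)) = z ^ (m + 1) := by
            rw [← pow_add]
            congr 1
            rw [← Nat.mul_add, Nat.add_sub_cancel' (by omega : u ≤ d), hd]
          calc a * z ^ (ℓ * u) * (alpha ℓ a (d - u) * z ^ (ℓ * (d - u)))
              = a * alpha ℓ a (d - u) * (z ^ (ℓ * u) * z ^ (ℓ * (d - u))) := by ring
            _ = a * alpha ℓ a (d - u) * z ^ (m + 1) := by rw [hz]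
      rw [Finset.sum_congr rfl hterm]
      rw [Finset.sum_range_succ']
      simp
      have hrefl : ∑ u ∈ Finset.range d, a * alpha ℓ a (d - (u + 1)) * z ^ (m + 1)
          = ∑ e ∈ Finset.range d, a * alpha ℓ a e * z ^ (m + 1) := by
        rw [← Finset.sum_range_reflect]
        apply Finset.sum_congr rfl
        intro u hu
        simp only [Finset.mem_range] at hu
        have h6 : d - (d - 1 - u + 1) = u := by omega
        rw [h6]
      rw [hrefl]
      rw [coeff_genBinomial, if_pos ⟨d, hd⟩, hdq]
      have hrec := alpha_rec ℓ hℓ a d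
      push_cast
      calc alpha ℓ a d * z ^ (m + 1) * ((m : ℂ) + 1)
          = ((ℓ : ℂ) * d * alpha ℓ a d) * z ^ (m + 1) := by
            have hcast : ((m : ℂ) + 1) = (ℓ : ℂ) * d := by
              exact_mod_cast hd
            rw [hcast]
            ring
        _ = (a * ∑ e ∈ Finset.range d, alpha ℓ a e) * z ^ (m + 1) := by rw [hrec]
        _ = ∑ e ∈ Finset.range d, a * alpha ℓ a e * z ^ (m + 1) := by
            rw [Finset.mul_sum, Finset.sum_mul]
    · -- non divisible
      rw [coeff_genBinomial, if_neg hdvd, zero_mul]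
      symm
      apply Finset.sum_eq_zero
      intro j hj
      simp only [Finset.mem_range] at hj
      by_cases hP : ℓ ∣ j ∧ j ≠ 0
      · rw [coeff_genBinomial, if_neg, mul_zero]
        intro hcon
        exact hdvd (by
          have : ℓ ∣ (m + 1 - j) + j := Nat.dvd_add hcon hP.1
          rwa [Nat.sub_add_cancel (by omega)] at this)
      · rw [coeff_S1, if_neg hP, zero_mul]


lemma prod_rule (ℓ : ℕ) (hℓ : 1 ≤ ℓ) (a : ℂ) (B : Finset ℂ) :
    X * d⁄dX ℂ (∏ z ∈ B, genBinomialSeries ℓ a z)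
      = (∑ z ∈ B, S1 ℓ a z) * ∏ z ∈ B, genBinomialSeries ℓ a z := by
  classical
  induction B using Finset.induction_on with
  | empty => simp
  | @insert z B hzB ih =>
    rw [Finset.prod_insert hzB, Finset.sum_insert hzB, Derivation.leibniz]
    simp only [smul_eq_mul]
    calc X * (genBinomialSeries ℓ a z * d⁄dX ℂ (∏ w ∈ B, genBinomialSeries ℓ a w)
            + (∏ w ∈ B, genBinomialSeries ℓ a w) * d⁄dX ℂ (genBinomialSeries ℓ a z))
        = genBinomialSeries ℓ a z * (X * d⁄dX ℂ (∏ w ∈ B, genBinomialSeries ℓ a w))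
            + (∏ w ∈ B, genBinomialSeries ℓ a w)
              * (X * d⁄dX ℂ (genBinomialSeries ℓ a z)) := by ring
      _ = genBinomialSeries ℓ a z
              * ((∑ w ∈ B, S1 ℓ a w) * ∏ w ∈ B, genBinomialSeries ℓ a w)
            + (∏ w ∈ B, genBinomialSeries ℓ a w)
              * (S1 ℓ a z * genBinomialSeries ℓ a z) := by
            rw [ih, key_series ℓ hℓ a z]
      _ = (S1 ℓ a z + ∑ w ∈ B, S1 ℓ a w)
            * (genBinomialSeries ℓ a z * ∏ w ∈ B, genBinomialSeries ℓ a w) := by ring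

lemma coeff_zero_prod (ℓ : ℕ) (a : ℂ) (B : Finset ℂ) :
    PowerSeries.coeff 0 (∏ z ∈ B, genBinomialSeries ℓ a z) = 1 := by
  rw [PowerSeries.coeff_zero_eq_constantCoeff, map_prod]
  apply Finset.prod_eq_one
  intro z _
  rw [← PowerSeries.coeff_zero_eq_constantCoeff, coeff_genBinomial]
  simp [alpha_zero]

lemma coeff_rec (ℓ : ℕ) (hℓ : 1 ≤ ℓ) (a : ℂ) (B : Finset ℂ) (t : ℕ → ℂ)
    (ht : ∀ i, t i = if ℓ ∣ i then a * ∑ z ∈ B, z ^ i else 0) (m : ℕ) (hm : 1 ≤ m) :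
    (m : ℂ) * PowerSeries.coeff m (∏ z ∈ B, genBinomialSeries ℓ a z)
      = ∑ i ∈ Finset.Icc 1 m,
          t i * PowerSeries.coeff (m - i) (∏ z ∈ B, genBinomialSeries ℓ a z) := by
  obtain ⟨m', rfl⟩ : ∃ m', m = m' + 1 := ⟨m - 1, by omega⟩
  have h := congrArg (PowerSeries.coeff (m' + 1)) (prod_rule ℓ hℓ a B)
  rw [coeff_succ_X_mul, coeff_derivative, PowerSeries.coeff_mul,
    Finset.Nat.sum_antidiagonal_eq_sum_range_succ_mk] at h
  have hT : ∀ j, PowerSeries.coeff j (∑ z ∈ B, S1 ℓ a z)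
      = if j = 0 then 0 else t j := by
    intro j
    rw [map_sum]
    by_cases hj0 : j = 0
    · subst hj0; simp [coeff_S1]
    · rw [if_neg hj0, ht j]
      by_cases hdj : ℓ ∣ j
      · rw [if_pos hdj, Finset.mul_sum]
        apply Finset.sum_congr rfl
        intro z _
        rw [coeff_S1, if_pos ⟨hdj, hj0⟩]
      · rw [if_neg hdj]
        apply Finset.sum_eq_zero
        intro z _
        rw [coeff_S1, if_neg (fun hc => hdj hc.1)]
  have h2 : ((m' + 1 : ℕ) : ℂ)
        * PowerSeries.coeff (m' + 1) (∏ z ∈ B, genBinomialSeries ℓ a z)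
      = ∑ j ∈ Finset.range (m' + 1 + 1),
          PowerSeries.coeff j (∑ z ∈ B, S1 ℓ a z)
            * PowerSeries.coeff (m' + 1 - j) (∏ z ∈ B, genBinomialSeries ℓ a z) := by
    push_cast
    rw [mul_comm]
    exact h
  rw [h2]
  have hsub : Finset.Icc 1 (m' + 1) ⊆ Finset.range (m' + 1 + 1) := by
    intro j hj
    have := (Finset.mem_Icc.mp hj).2
    exact Finset.mem_range.mpr (by omega)
  have hzero : ∀ j ∈ Finset.range (m' + 1 + 1), j ∉ Finset.Icc 1 (m' + 1) →
      PowerSeries.coeff j (∑ z ∈ B, S1 ℓ a z)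
        * PowerSeries.coeff (m' + 1 - j) (∏ z ∈ B, genBinomialSeries ℓ a z) = 0 := by
    intro j hj hnj
    have hj0 : j = 0 := by
      simp only [Finset.mem_range] at hj
      simp only [Finset.mem_Icc, not_and, not_le] at hnj
      omega
    rw [hj0, hT 0, if_pos rfl, zero_mul]
  rw [← Finset.sum_subset hsub hzero]
  apply Finset.sum_congr rfl
  intro j hj
  rw [hT j, if_neg (by have := (Finset.mem_Icc.mp hj).1; omega)]

lemma main_aux (ℓ : ℕ) (hℓ : 1 ≤ ℓ) (a : ℂ) (B : Finset ℂ) (t : ℕ → ℂ)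
    (ht : ∀ i, t i = if ℓ ∣ i then a * ∑ z ∈ B, z ^ i else 0) (m : ℕ) :
    Sw (Fin m) t = (m.factorial : ℂ)
      * PowerSeries.coeff m (∏ z ∈ B, genBinomialSeries ℓ a z) := by
  induction m using Nat.strong_induction_on with
  | _ m ih =>
    rcases Nat.eq_zero_or_pos m with h0 | h1
    · subst h0
      rw [Sw_fin_zero, coeff_zero_prod]
      simp
    · have hm0 : (m : ℂ) ≠ 0 := Nat.cast_ne_zero.mpr (by omega)
      apply mul_left_cancel₀ hm0
      rw [recur t m]
      have hstep : ∀ i ∈ Finset.Icc 1 m,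
          (m.descFactorial i : ℂ) * (t i * Sw (Fin (m - i)) t)
            = (m.factorial : ℂ) * (t i * PowerSeries.coeff (m - i)
                (∏ z ∈ B, genBinomialSeries ℓ a z)) := by
        intro i hi
        obtain ⟨hi1, hi2⟩ := Finset.mem_Icc.mp hi
        rw [ih (m - i) (by omega)]
        have hfact : (m - i).factorial * m.descFactorial i = m.factorial :=
          Nat.factorial_mul_descFactorial hi2
        have hc : (m.descFactorial i : ℂ) * ((m - i).factorial : ℂ)
            = (m.factorial : ℂ) := by
          rw [← Nat.cast_mul, mul_comm, hfact]
        calc (m.descFactorial i : ℂ) * (t i * (((m - i).factorial : ℂ)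
                * PowerSeries.coeff (m - i) (∏ z ∈ B, genBinomialSeries ℓ a z)))
            = ((m.descFactorial i : ℂ) * ((m - i).factorial : ℂ))
                * (t i * PowerSeries.coeff (m - i)
                    (∏ z ∈ B, genBinomialSeries ℓ a z)) := by ring
          _ = (m.factorial : ℂ) * (t i * PowerSeries.coeff (m - i)
                (∏ z ∈ B, genBinomialSeries ℓ a z)) := by rw [hc]
      rw [Finset.sum_congr rfl hstep, ← Finset.mul_sum,
        ← coeff_rec ℓ hℓ a B t ht m h1]
      ring

lemma Zcycle_eq_Sw (m : ℕ) (t : ℕ → ℂ) :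
    Zcycle m t = (m.factorial : ℂ)⁻¹ * Sw (Fin m) t := by
  rw [Zcycle, Sw]
  congr 1
  apply Finset.sum_congr rfl
  intro τ _
  have hct : ∀ i, cycleCount τ i = Multiset.count i (fullCT τ) := by
    intro i
    rw [cycleCount, fullCT, Equiv.Perm.sum_cycleType, Fintype.card_fin]
  rw [w, Finset.prod_multiset_map_count,
    Finset.prod_congr rfl (fun i _ => by rw [hct i])]
  refine (Finset.prod_subset (fun j hj => ?_) (fun j _ hnj => ?_)).symm
  · have h5 := mem_fullCT_icc (Multiset.mem_toFinset.mp hj)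
    simpa [Fintype.card_fin] using h5
  · rw [Multiset.count_eq_zero_of_notMem (fun hmem => hnj (Multiset.mem_toFinset.mpr hmem)),
      pow_zero]

end ZcycleAux

theorem Zcycle_power_sums (ℓ m : ℕ) (hℓ : 1 ≤ ℓ) (hℓm : ℓ ≤ m) (a : ℂ)
    (B : Finset ℂ) (t : ℕ → ℂ)
    (ht : ∀ i, t i = if ℓ ∣ i then a * ∑ z ∈ B, z ^ i else 0) :
    Zcycle m t = PowerSeries.coeff m (∏ z ∈ B, genBinomialSeries ℓ a z) := by
  rw [ZcycleAux.Zcycle_eq_Sw, ZcycleAux.main_aux ℓ hℓ a B t ht m, ← mul_assoc,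
    inv_mul_cancel₀ (by exact_mod_cast Nat.factorial_ne_zero m), one_mul]
end

section
/- Let p be an odd prime and n a positive integer, let G = ℤ/2pnℤ, and let D ⊆ G be the image of {pj − k : −(n−1) ≤ j ≤ n, 1 ≤ k ≤ (p−1)/2} under reduction mod 2pn. Let χ : G → ℂ^× be a character of G of order o(χ). Then: (i) if χ is trivial, ∑_{x∈D} χ(x) = n(p−1); (ii) if o(χ) = p, then ∑_{x∈D} χ(x) = 2n·∑_{k=1}^{(p−1)/2} χ(k)^{−1}; (iii) if o(χ) ∉ {1, p}, then ∑_{x∈D} χ(x) = 0. -/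
open Finset

theorem char_sum_over_D (p n : ℕ) (hp : p.Prime) (hodd : Odd p) (hn : 1 ≤ n)
    (χ : AddChar (ZMod (2 * p * n)) ℂ) :
    (χ = 1 → ∑ x ∈ Dset p n, χ x = (n * (p - 1) : ℕ)) ∧
    (orderOf χ = p → ∑ x ∈ Dset p n, χ x =
      2 * n * ∑ k ∈ Finset.Icc 1 ((p - 1) / 2), (χ ((k : ℕ) : ZMod (2 * p * n)))⁻¹) ∧
    (orderOf χ ≠ 1 ∧ orderOf χ ≠ p → ∑ x ∈ Dset p n, χ x = 0) := by
  have hp2 := hp.two_le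
  have hpodd : p % 2 = 1 := Nat.odd_iff.mp hodd
  haveI : NeZero (2 * p * n) := ⟨by positivity⟩
  have hppos : (0 : ℤ) < p := by exact_mod_cast hp.pos
  -- injectivity of the defining map on the index set
  have hinj : ∀ a ∈ (Finset.Icc (1 - (n : ℤ)) (n : ℤ)) ×ˢ Finset.Icc 1 ((p - 1) / 2),
      ∀ b ∈ (Finset.Icc (1 - (n : ℤ)) (n : ℤ)) ×ˢ Finset.Icc 1 ((p - 1) / 2),
      (((p : ℤ) * a.1 - a.2 : ℤ) : ZMod (2 * p * n)) =
        (((p : ℤ) * b.1 - b.2 : ℤ) : ZMod (2 * p * n)) → a = b := by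
    rintro ⟨j, k⟩ hjk ⟨j', k'⟩ hjk' h
    simp only [Finset.mem_product, Finset.mem_Icc] at hjk hjk'
    have hdvd : ((2 * p * n : ℕ) : ℤ) ∣ ((p : ℤ) * j - k) - ((p : ℤ) * j' - k') := by
      rw [← ZMod.intCast_zmod_eq_zero_iff_dvd]
      push_cast
      push_cast at h
      rw [sub_eq_zero]
      exact h
    obtain ⟨m, hm⟩ := hdvd
    push_cast at hm
    have hk : (k' : ℤ) - k = (p : ℤ) * (2 * n * m - (j - j')) := by linarith
    have hkk : (k' : ℤ) - k = 0 := by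
      apply Int.eq_zero_of_abs_lt_dvd ⟨_, hk⟩
      have hb : ((p - 1) / 2 : ℕ) < p := by omega
      have h1 : (1 : ℤ) ≤ k := by exact_mod_cast hjk.2.1
      have h2 : (k : ℤ) ≤ ((p - 1) / 2 : ℕ) := by exact_mod_cast hjk.2.2
      have h3 : (1 : ℤ) ≤ k' := by exact_mod_cast hjk'.2.1
      have h4 : (k' : ℤ) ≤ ((p - 1) / 2 : ℕ) := by exact_mod_cast hjk'.2.2
      have hb' : (((p - 1) / 2 : ℕ) : ℤ) < p := by exact_mod_cast hb
      rw [abs_lt]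
      constructor <;> linarith
    have hkeq : k = k' := by
      have := sub_eq_zero.mp hkk
      exact_mod_cast this.symm
    have hj : j - j' = 2 * (n : ℤ) * m := by
      have : (p : ℤ) * (j - j') = (p : ℤ) * (2 * n * m) := by
        have := hkk
        nlinarith [hm]
      exact mul_left_cancel₀ (ne_of_gt hppos) this
    have hjj : j - j' = 0 := by
      have hdvd2 : (2 * (n : ℤ)) ∣ (j - j') := ⟨m, by linarith⟩
      apply Int.eq_zero_of_abs_lt_dvd hdvd2
      have h1 := hjk.1.1; have h2 := hjk.1.2
      have h3 := hjk'.1.1; have h4 := hjk'.1.2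
      rw [abs_lt]
      have hn' : (1 : ℤ) ≤ n := by exact_mod_cast hn
      constructor <;> linarith
    have : j = j' := sub_eq_zero.mp hjj
    simp [this, hkeq]
  -- the sum over D factors as a product of two sums
  have key : ∑ x ∈ Dset p n, χ x =
      (∑ j ∈ Finset.Icc (1 - (n : ℤ)) (n : ℤ), χ (((p : ℤ) * j : ℤ) : ZMod (2 * p * n))) *
      (∑ k ∈ Finset.Icc 1 ((p - 1) / 2), χ ((-(k : ℤ) : ℤ) : ZMod (2 * p * n))) := by
    rw [Dset, Finset.sum_image hinj, Finset.sum_product, Finset.sum_mul_sum]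
    refine Finset.sum_congr rfl fun j _ => Finset.sum_congr rfl fun k _ => ?_
    rw [← AddChar.map_add_eq_mul]
    congr 1
    push_cast
    ring
  set ω := χ (((p : ℕ) : ZMod (2 * p * n))) with hω
  have hω2n : ω ^ (2 * n) = 1 := by
    rw [hω, ← AddChar.map_nsmul_eq_pow]
    have h0 : (2 * n) • ((p : ℕ) : ZMod (2 * p * n)) = 0 := by
      rw [nsmul_eq_mul]
      have : ((2 * n : ℕ) : ZMod (2 * p * n)) * ((p : ℕ) : ZMod (2 * p * n))
          = ((2 * p * n : ℕ) : ZMod (2 * p * n)) := by push_cast; ring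
      rw [show ((2 * n : ℕ) : ZMod (2 * p * n)) = ((2 * n : ℕ) : ZMod (2 * p * n)) from rfl]
      push_cast
      rw [show ((2 : ZMod (2*p*n)) * n * p) = ((2 * p * n : ℕ) : ZMod (2 * p * n)) by push_cast; ring]
      exact ZMod.natCast_self _
    rw [h0, AddChar.map_zero_eq_one]
  have hωne : ω ≠ 0 := by
    intro h
    have h2n : 2 * n ≠ 0 := by omega
    rw [h, zero_pow h2n] at hω2n
    exact zero_ne_one hω2n
  have hterm : ∀ j : ℤ, χ (((p : ℤ) * j : ℤ) : ZMod (2 * p * n)) = ω ^ j := by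
    intro j
    rw [hω, ← AddChar.map_zsmul_eq_zpow]
    congr 1
    rw [zsmul_eq_mul]
    push_cast
    ring
  -- the j-sum
  have hcardI : (Finset.Icc (1 - (n : ℤ)) (n : ℤ)).card = 2 * n := by
    rw [Int.card_Icc]
    omega
  have hjsum_one : ω = 1 →
      (∑ j ∈ Finset.Icc (1 - (n : ℤ)) (n : ℤ), χ (((p : ℤ) * j : ℤ) : ZMod (2 * p * n)))
        = (2 * n : ℕ) := by
    intro h1
    calc ∑ j ∈ Finset.Icc (1 - (n : ℤ)) (n : ℤ), χ (((p : ℤ) * j : ℤ) : ZMod (2 * p * n))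
        = ∑ j ∈ Finset.Icc (1 - (n : ℤ)) (n : ℤ), (1 : ℂ) := by
          refine Finset.sum_congr rfl fun j _ => ?_
          rw [hterm j, h1, one_zpow]
      _ = (2 * n : ℕ) := by rw [Finset.sum_const, hcardI]; simp
  have hjsum_zero : ω ≠ 1 →
      (∑ j ∈ Finset.Icc (1 - (n : ℤ)) (n : ℤ), χ (((p : ℤ) * j : ℤ) : ZMod (2 * p * n)))
        = 0 := by
    intro hne
    have hre : ∑ j ∈ Finset.Icc (1 - (n : ℤ)) (n : ℤ), χ (((p : ℤ) * j : ℤ) : ZMod (2 * p * n))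
        = ω ^ (1 - (n : ℤ)) * ∑ i ∈ Finset.range (2 * n), ω ^ i := by
      rw [Finset.mul_sum]
      refine Finset.sum_nbij' (fun j => (j - (1 - (n : ℤ))).toNat)
        (fun i => (1 - (n : ℤ)) + i) ?_ ?_ ?_ ?_ ?_
      · intro j hj
        simp only [Finset.mem_Icc] at hj
        simp only [Finset.mem_range]
        omega
      · intro i hi
        simp only [Finset.mem_range] at hi
        simp only [Finset.mem_Icc]
        omega
      · intro j hj
        simp only [Finset.mem_Icc] at hj
        omega
      · intro i hi
        simp only [Finset.mem_range] at hi
        omega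
      · intro j hj
        simp only [Finset.mem_Icc] at hj
        rw [hterm j, ← zpow_natCast ω, ← zpow_add₀ hωne]
        congr 1
        omega
    rw [hre, geom_sum_eq hne, hω2n]
    simp
  -- relation between ω and the order of χ
  have horder : ω = 1 ↔ orderOf χ ∣ p := by
    rw [orderOf_dvd_iff_pow_eq_one]
    constructor
    · intro h1
      ext x
      rw [AddChar.pow_apply, AddChar.one_apply, ← AddChar.map_nsmul_eq_pow]
      have hx : p • x = x.val • ((p : ℕ) : ZMod (2 * p * n)) := by
        rw [nsmul_eq_mul, nsmul_eq_mul, ZMod.natCast_rightInverse x]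
        ring
      rw [hx, AddChar.map_nsmul_eq_pow, ← hω, h1, one_pow]
    · intro hχp
      have : ((p : ℕ) : ZMod (2 * p * n)) = p • (1 : ZMod (2 * p * n)) := by
        rw [nsmul_eq_mul, mul_one]
      rw [hω, this, AddChar.map_nsmul_eq_pow, ← AddChar.pow_apply, hχp, AddChar.one_apply]
  -- the k-sum rewrite
  have hksum : ∑ k ∈ Finset.Icc 1 ((p - 1) / 2), χ ((-(k : ℤ) : ℤ) : ZMod (2 * p * n))
      = ∑ k ∈ Finset.Icc 1 ((p - 1) / 2), (χ ((k : ℕ) : ZMod (2 * p * n)))⁻¹ := by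
    refine Finset.sum_congr rfl fun k _ => ?_
    rw [show ((-(k : ℤ) : ℤ) : ZMod (2 * p * n)) = -(((k : ℕ)) : ZMod (2 * p * n)) by push_cast; ring,
      AddChar.map_neg_eq_inv]
  refine ⟨?_, ?_, ?_⟩
  · intro hχ1
    subst hχ1
    rw [key]
    have hω1 : ω = 1 := by rw [hω]; simp
    rw [hjsum_one hω1]
    have : ∑ k ∈ Finset.Icc 1 ((p - 1) / 2), (1 : AddChar (ZMod (2*p*n)) ℂ) ((-(k : ℤ) : ℤ) : ZMod (2 * p * n))
        = ((p - 1) / 2 : ℕ) := by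
      simp [AddChar.one_apply]
    rw [this]
    have hdvd21 : 2 ∣ p - 1 := by omega
    have h2 : 2 * n * ((p - 1) / 2) = n * (p - 1) := by
      rw [mul_comm 2 n, mul_assoc, Nat.mul_div_cancel' hdvd21]
    calc ((2 * n : ℕ) : ℂ) * (((p - 1) / 2 : ℕ) : ℂ)
        = ((2 * n * ((p - 1) / 2) : ℕ) : ℂ) := by push_cast; ring
      _ = ((n * (p - 1) : ℕ) : ℂ) := by rw [h2]
  · intro hord
    have hω1 : ω = 1 := horder.mpr (by rw [hord])
    rw [key, hjsum_one hω1, hksum]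
    push_cast
    ring
  · rintro ⟨h1, hp'⟩
    have hω1 : ω ≠ 1 := by
      intro h
      rcases (Nat.Prime.eq_one_or_self_of_dvd hp _ (horder.mp h)) with h' | h'
      · exact h1 h'
      · exact hp' h'
    rw [key, hjsum_zero hω1, zero_mul]
end

section
/- Let p be an odd prime and n, m positive integers, let G = ℤ/2pnℤ, let D ⊆ G be the image of {pj − k : −(n−1) ≤ j ≤ n, 1 ≤ k ≤ (p−1)/2}, and let χ : G → ℂ^× be a character of order o = o(χ). Define S_m(χ) = (1/m!) ∑ χ(x_1)χ(x_2)⋯χ(x_m), the sum taken over all m-tuples (x_1,…,x_m) of pairwise distinct elements of D. Then: if p does not divide o, S_m(χ) = (−1)^m times the coefficient of u^m in the polynomial (1 − u^o)^{n(p−1)/o} (note o divides 2n, so n(p−1)/o is a nonnegative integer); and if p divides o, S_m(χ) = (−1)^m times the coefficient of u^m in the polynomial ∏_{k=1}^{(p−1)/2} (1 − χ(k)^{−o/p} u^{o/p})^{2pn/o}. -/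
open Finset Polynomial

set_option maxHeartbeats 1000000

/-- `S_m(χ) = (1/m!) ∑ χ(x_1)⋯χ(x_m)`, the sum taken over all `m`-tuples
`(x_1, …, x_m)` of pairwise distinct elements of `D`. -/
noncomputable def Smchi (p n m : ℕ) (χ : AddChar (ZMod (2 * p * n)) ℂ) : ℂ :=
  (m.factorial : ℂ)⁻¹ *
    ∑ x ∈ (Fintype.piFinset fun _ : Fin m => Dset p n).filter Function.Injective,
      ∏ i, χ (x i)

section Aux

lemma key_scalar (r : ℕ) (hr : 0 < r) (η t : ℂ) (hη : IsPrimitiveRoot η r) :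
    ∏ i ∈ range r, (1 - η ^ i * t) = 1 - t ^ r := by
  rcases eq_or_ne t 0 with rfl | ht
  · simp [hr.ne']
  · have himg : Finset.image (η ^ ·) (range r) = nthRootsFinset r (1 : ℂ) := by
      apply Finset.eq_of_subset_of_card_le
      · intro x hx
        simp only [Finset.mem_image, Finset.mem_range] at hx
        obtain ⟨i, hi, rfl⟩ := hx
        rw [mem_nthRootsFinset hr, ← pow_mul, mul_comm, pow_mul, hη.pow_eq_one, one_pow]
      · rw [hη.card_nthRootsFinset, Finset.card_image_of_injOn hη.injOn_pow, card_range]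
    have hpoly := congrArg (Polynomial.eval t⁻¹) (X_pow_sub_one_eq_prod hr hη)
    simp only [eval_sub, eval_pow, eval_X, eval_one, eval_prod, eval_sub, eval_C] at hpoly
    have h2 : ∏ ζ ∈ nthRootsFinset r (1 : ℂ), (t⁻¹ - ζ) = ∏ i ∈ range r, (t⁻¹ - η ^ i) := by
      rw [← himg, Finset.prod_image (fun a ha b hb h => hη.injOn_pow ha hb h)]
    rw [h2] at hpoly
    have : ∏ i ∈ range r, (1 - η ^ i * t) = ∏ i ∈ range r, (t * (t⁻¹ - η ^ i)) := by
      refine Finset.prod_congr rfl fun i _ => ?_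
      field_simp
    rw [this, Finset.prod_mul_distrib, Finset.prod_const, card_range, ← hpoly]
    field_simp
    rw [mul_sub, ← mul_pow, mul_one_div_cancel ht, one_pow, mul_one]

lemma prod_range_one_sub_root (r : ℕ) (hr : 0 < r) (η b : ℂ) (hη : IsPrimitiveRoot η r) :
    ∏ i ∈ range r, (1 - C (b * η ^ i) * X) = 1 - C (b ^ r) * X ^ r := by
  apply Polynomial.funext
  intro x
  simp only [eval_prod, eval_sub, eval_one, eval_mul, eval_C, eval_pow, eval_X]
  calc ∏ i ∈ range r, (1 - b * η ^ i * x) = ∏ i ∈ range r, (1 - η ^ i * (b * x)) := by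
        refine Finset.prod_congr rfl fun i _ => by ring
    _ = 1 - (b * x) ^ r := key_scalar r hr η (b * x) hη
    _ = 1 - b ^ r * x ^ r := by rw [mul_pow]

lemma prod_range_periodic {M : Type*} [CommMonoid M] (g : ℕ → M) (r L : ℕ)
    (hg : ∀ i, g (i + r) = g i) : ∏ i ∈ range (L * r), g i = (∏ i ∈ range r, g i) ^ L := by
  have key : ∀ L i, g (L * r + i) = g i := by
    intro L
    induction L with
    | zero => simp
    | succ L ih =>
      intro i
      have h : (L + 1) * r + i = L * r + i + r := by ring
      rw [h, hg, ih]
  induction L with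
  | zero => simp
  | succ L ih =>
    rw [Nat.succ_mul, Finset.prod_range_add, ih, pow_succ]
    congr 1
    exact Finset.prod_congr rfl fun i _ => key L i

lemma prod_Icc_one_sub (n r : ℕ) (hn : 1 ≤ n) (hr : 0 < r) (hdvd : r ∣ 2 * n) (η c : ℂ)
    (hη : IsPrimitiveRoot η r) :
    ∏ j ∈ Finset.Icc (1 - (n : ℤ)) (n : ℤ), (1 - C (c * η ^ j) * X)
      = (1 - C (c ^ r) * X ^ r) ^ (2 * n / r) := by
  have hη0 : η ≠ 0 := by
    intro h
    have := hη.pow_eq_one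
    rw [h, zero_pow hr.ne'] at this
    exact zero_ne_one this
  have step1 : ∏ j ∈ Finset.Icc (1 - (n : ℤ)) (n : ℤ), (1 - C (c * η ^ j) * X)
      = ∏ i ∈ range (2 * n), (1 - C (c * η ^ (1 - (n : ℤ) + i)) * X) := by
    apply Finset.prod_nbij' (fun j => (j - (1 - (n : ℤ))).toNat) (fun i => 1 - (n : ℤ) + i)
    · intro j hj
      simp only [Finset.mem_Icc] at hj
      simp only [Finset.mem_range]
      omega
    · intro i hi
      simp only [Finset.mem_range] at hi
      simp only [Finset.mem_Icc]
      omega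
    · intro j hj
      simp only [Finset.mem_Icc] at hj
      omega
    · intro i hi
      simp only [Finset.mem_range] at hi
      omega
    · intro j hj
      simp only [Finset.mem_Icc] at hj
      rw [Int.toNat_of_nonneg (by omega),
        show 1 - (n : ℤ) + (j - (1 - (n : ℤ))) = j from by ring]
  rw [step1]
  have step2 : ∀ i : ℕ, (1 - C (c * η ^ (1 - (n : ℤ) + i)) * X)
      = (1 - C ((c * η ^ (1 - (n : ℤ))) * η ^ i) * X) := by
    intro i
    rw [zpow_add₀ hη0, zpow_natCast, mul_assoc]
  simp only [step2]
  obtain ⟨L, hL⟩ := hdvd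
  have h2n : 2 * n = L * r := by rw [hL, Nat.mul_comm]
  rw [h2n, prod_range_periodic _ r L (fun i => by rw [pow_add, hη.pow_eq_one, mul_one]),
    prod_range_one_sub_root r hr η _ hη]
  have h1 : (η ^ (1 - (n : ℤ))) ^ r = 1 := by
    rw [← zpow_natCast (η ^ (1 - (n : ℤ))), ← zpow_mul, mul_comm, zpow_mul, zpow_natCast,
      hη.pow_eq_one, one_zpow]
  have hcr : (c * η ^ (1 - (n : ℤ))) ^ r = c ^ r := by rw [mul_pow, h1, mul_one]
  rw [hcr, Nat.mul_div_cancel L hr]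

lemma coeff_prod_one_sub {α : Type*} [DecidableEq α] (s : Finset α) (f : α → ℂ) :
    ∀ m : ℕ, (∏ a ∈ s, (1 - C (f a) * X)).coeff m
      = (-1 : ℂ) ^ m * ∑ t ∈ s.powersetCard m, ∏ a ∈ t, f a := by
  induction s using Finset.cons_induction with
  | empty =>
    intro m
    cases m with
    | zero => simp
    | succ m => rw [Finset.powersetCard_eq_empty.mpr (by simp)]; simp [coeff_one]
  | cons a s ha ih =>
    intro m
    rw [Finset.prod_cons]
    cases m with
    | zero =>
      rw [coeff_zero_eq_eval_zero]
      simp [eval_prod]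
    | succ m =>
      have expand : ((1 - C (f a) * X) * ∏ x ∈ s, (1 - C (f x) * X)).coeff (m + 1)
          = (∏ x ∈ s, (1 - C (f x) * X)).coeff (m + 1)
            - f a * (∏ x ∈ s, (1 - C (f x) * X)).coeff m := by
        rw [sub_mul, one_mul, Polynomial.coeff_sub, mul_assoc, Polynomial.coeff_C_mul,
          Polynomial.coeff_X_mul]
      rw [expand, ih, ih]
      rw [Finset.cons_eq_insert, Finset.powersetCard_succ_insert ha, Finset.sum_union]
      · rw [Finset.sum_image]
        · have : ∑ t ∈ s.powersetCard m, ∏ x ∈ insert a t, f x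
              = f a * ∑ t ∈ s.powersetCard m, ∏ x ∈ t, f x := by
            rw [Finset.mul_sum]
            refine Finset.sum_congr rfl fun t ht => ?_
            rw [Finset.prod_insert]
            intro hat
            exact ha ((Finset.mem_powersetCard.mp ht).1 hat)
          rw [this]
          ring
        · intro t ht u hu htu
          have h1 : a ∉ t := fun h => ha ((Finset.mem_powersetCard.mp ht).1 h)
          have h2 : a ∉ u := fun h => ha ((Finset.mem_powersetCard.mp hu).1 h)
          rw [← Finset.erase_insert h1, ← Finset.erase_insert h2, htu]
      · rw [Finset.disjoint_left]
        intro t ht hti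
        obtain ⟨u, hu, rfl⟩ := Finset.mem_image.mp hti
        have : a ∈ s := (Finset.mem_powersetCard.mp ht).1 (Finset.mem_insert_self a u)
        exact ha this

lemma card_fiber (α : Type*) [DecidableEq α] (m : ℕ) (s t : Finset α) (ht : t.card = m)
    (hsub : t ⊆ s) :
    (((Fintype.piFinset fun _ : Fin m => s).filter Function.Injective).filter
      (fun x => Finset.image x Finset.univ = t)).card = m.factorial := by
  classical
  have e1 : {x // x ∈ (((Fintype.piFinset fun _ : Fin m => s).filter Function.Injective).filter
      (fun x => Finset.image x Finset.univ = t))} ≃ (Fin m ↪ {a // a ∈ t}) := by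
    refine ⟨fun x => ⟨fun i => ⟨x.1 i, ?_⟩, fun i j hij => ?_⟩,
      fun e => ⟨fun i => (e i : α), ?_⟩, fun x => ?_, fun e => ?_⟩
    · have hmem := (Finset.mem_filter.mp x.2).2
      have h2 := Finset.mem_image_of_mem x.1 (Finset.mem_univ i)
      rwa [hmem] at h2
    · have hinj := (Finset.mem_filter.mp (Finset.mem_filter.mp x.2).1).2
      exact hinj (Subtype.mk_eq_mk.mp hij)
    · have hinj : Function.Injective (fun i : Fin m => (e i : α)) :=
        fun i j hij => e.injective (Subtype.ext hij)
      simp only [Finset.mem_filter, Fintype.mem_piFinset]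
      refine ⟨⟨fun i => hsub (e i).2, hinj⟩, ?_⟩
      apply Finset.eq_of_subset_of_card_le
      · intro a hai
        obtain ⟨i, _, rfl⟩ := Finset.mem_image.mp hai
        exact (e i).2
      · rw [ht, Finset.card_image_of_injective _ hinj, Finset.card_univ, Fintype.card_fin]
    · exact Subtype.ext rfl
    · exact DFunLike.ext _ _ fun i => Subtype.ext rfl
  rw [← Fintype.card_coe, Fintype.card_congr e1, Fintype.card_embedding_eq, Fintype.card_fin,
    Fintype.card_coe, ht, Nat.descFactorial_self]

lemma sum_inj_tuples {α : Type*} [DecidableEq α] (s : Finset α) (f : α → ℂ) (m : ℕ) :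
    ∑ x ∈ (Fintype.piFinset fun _ : Fin m => s).filter Function.Injective, ∏ i, f (x i)
      = (m.factorial : ℂ) * ∑ t ∈ s.powersetCard m, ∏ a ∈ t, f a := by
  classical
  rw [← Finset.sum_fiberwise_of_maps_to (g := fun x : Fin m → α => Finset.image x Finset.univ)
    (t := s.powersetCard m) ?hmap (fun x => ∏ i, f (x i))]
  case hmap =>
    intro x hx
    rw [Finset.mem_filter] at hx
    rw [Finset.mem_powersetCard]
    constructor
    · intro a hai
      obtain ⟨i, _, rfl⟩ := Finset.mem_image.mp hai
      exact Fintype.mem_piFinset.mp hx.1 i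
    · rw [Finset.card_image_of_injective _ hx.2, Finset.card_univ, Fintype.card_fin]
  rw [Finset.mul_sum]
  refine Finset.sum_congr rfl fun t ht => ?_
  obtain ⟨hsub, hcard⟩ := Finset.mem_powersetCard.mp ht
  have hterm : ∀ x ∈ ((Fintype.piFinset fun _ : Fin m => s).filter Function.Injective).filter
      (fun x => Finset.image x Finset.univ = t), ∏ i, f (x i) = ∏ a ∈ t, f a := by
    intro x hx
    rw [Finset.mem_filter] at hx
    have hinj := (Finset.mem_filter.mp hx.1).2
    rw [← hx.2, Finset.prod_image (fun a _ b _ h => hinj h)]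
  rw [Finset.sum_congr rfl hterm, Finset.sum_const, card_fiber α m s t hcard hsub,
    nsmul_eq_mul]

lemma Dset_injOn (p n : ℕ) (hp : p.Prime) (hodd : Odd p) (hn : 1 ≤ n) :
    ∀ a ∈ (Finset.Icc (1 - (n : ℤ)) (n : ℤ)) ×ˢ Finset.Icc 1 ((p - 1) / 2),
    ∀ b ∈ (Finset.Icc (1 - (n : ℤ)) (n : ℤ)) ×ˢ Finset.Icc 1 ((p - 1) / 2),
    (((p : ℤ) * a.1 - a.2 : ℤ) : ZMod (2 * p * n)) = (((p : ℤ) * b.1 - b.2 : ℤ) : ZMod (2 * p * n))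
    → a = b := by
  obtain ⟨q, hq⟩ := hodd
  have hq1 : 1 ≤ q := by have := hp.two_le; omega
  have hhalf : (p - 1) / 2 = q := by omega
  rintro ⟨j, k⟩ ha ⟨j', k'⟩ hb heq
  simp only [Finset.mem_product, Finset.mem_Icc, hhalf] at ha hb
  obtain ⟨⟨hj1, hj2⟩, hk1, hk2⟩ := ha
  obtain ⟨⟨hj1', hj2'⟩, hk1', hk2'⟩ := hb
  rw [ZMod.intCast_eq_intCast_iff] at heq
  obtain ⟨c, hc⟩ := heq.dvd
  have hp' : (p : ℤ) = 2 * q + 1 := by exact_mod_cast congrArg Nat.cast hq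
  have hK1 : (1 : ℤ) ≤ (k : ℤ) := by exact_mod_cast hk1
  have hK2 : (k : ℤ) ≤ q := by exact_mod_cast hk2
  have hK1' : (1 : ℤ) ≤ (k' : ℤ) := by exact_mod_cast hk1'
  have hK2' : (k' : ℤ) ≤ q := by exact_mod_cast hk2'
  have hn' : (1 : ℤ) ≤ (n : ℤ) := by exact_mod_cast hn
  rw [hp'] at hc
  have hNc : ((2 * p * n : ℕ) : ℤ) = 2 * (2 * (q : ℤ) + 1) * n := by push_cast [hq]; ring
  rw [hNc] at hc
  have hub : (2 * (q : ℤ) + 1) * (j' - j) ≤ (2 * q + 1) * (2 * n - 1) :=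
    mul_le_mul_of_nonneg_left (by omega) (by omega)
  have hlb : -((2 * (q : ℤ) + 1) * (2 * n - 1)) ≤ (2 * q + 1) * (j' - j) := by
    have := mul_le_mul_of_nonneg_left (show -(2 * (n : ℤ) - 1) ≤ j' - j by omega)
      (show (0 : ℤ) ≤ 2 * q + 1 by omega)
    linarith
  have hc0 : c = 0 := by
    rcases lt_trichotomy c 0 with hcneg | hc0 | hcpos
    · have h1 : c ≤ -1 := by omega
      have h2 : 2 * (2 * (q : ℤ) + 1) * n * c ≤ 2 * (2 * q + 1) * n * (-1) :=
        mul_le_mul_of_nonneg_left h1 (by positivity)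
      nlinarith
    · exact hc0
    · have h1 : (1 : ℤ) ≤ c := by omega
      have h2 : 2 * (2 * (q : ℤ) + 1) * n * 1 ≤ 2 * (2 * q + 1) * n * c :=
        mul_le_mul_of_nonneg_left h1 (by positivity)
      nlinarith
  rw [hc0, mul_zero] at hc
  have hd0 : j' = j := by
    rcases lt_trichotomy j' j with h | h | h
    · have h1 : j' - j ≤ -1 := by omega
      have h2 : (2 * (q : ℤ) + 1) * (j' - j) ≤ (2 * q + 1) * (-1) :=
        mul_le_mul_of_nonneg_left h1 (by omega)
      nlinarith
    · exact h
    · have h1 : (1 : ℤ) ≤ j' - j := by omega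
      have h2 : (2 * (q : ℤ) + 1) * 1 ≤ (2 * q + 1) * (j' - j) :=
        mul_le_mul_of_nonneg_left h1 (by omega)
      nlinarith
  have hk0 : k = k' := by
    rw [hd0] at hc
    have : (k : ℤ) = k' := by linarith
    exact_mod_cast this
  rw [hd0, hk0]

lemma chi_val (p n : ℕ) (χ : AddChar (ZMod (2 * p * n)) ℂ) (j : ℤ) (k : ℕ) :
    χ ((((p : ℤ) * j - k : ℤ)) : ZMod (2 * p * n))
      = (χ ((k : ℕ) : ZMod (2 * p * n)))⁻¹ * (χ ((p : ℕ) : ZMod (2 * p * n))) ^ j := by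
  have h1 : ((((p : ℤ) * j - k : ℤ)) : ZMod (2 * p * n))
      = j • ((p : ℕ) : ZMod (2 * p * n)) - ((k : ℕ) : ZMod (2 * p * n)) := by
    push_cast [zsmul_eq_mul]
    ring
  rw [h1, AddChar.map_sub_eq_div, AddChar.map_zsmul_eq_zpow, div_eq_mul_inv, mul_comm]

end Aux

theorem char_sum_distinct_tuples (p n m : ℕ) (hp : p.Prime) (hodd : Odd p)
    (hn : 1 ≤ n) (hm : 1 ≤ m) (χ : AddChar (ZMod (2 * p * n)) ℂ) :
    (¬ p ∣ orderOf χ → Smchi p n m χ =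
      (-1 : ℂ) ^ m *
        ((1 - (Polynomial.X : Polynomial ℂ) ^ orderOf χ) ^
          (n * (p - 1) / orderOf χ)).coeff m) ∧
    (p ∣ orderOf χ → Smchi p n m χ =
      (-1 : ℂ) ^ m *
        (∏ k ∈ Finset.Icc 1 ((p - 1) / 2),
          (1 - Polynomial.C ((χ ((k : ℕ) : ZMod (2 * p * n)))⁻¹ ^ (orderOf χ / p)) *
            (Polynomial.X : Polynomial ℂ) ^ (orderOf χ / p)) ^
              (2 * p * n / orderOf χ)).coeff m) := by
  have hppos : 0 < p := hp.pos
  have hNpos : 0 < 2 * p * n := by positivity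
  haveI : NeZero (2 * p * n) := ⟨hNpos.ne'⟩
  set ζ := χ 1 with hζdef
  have hcast : ∀ k : ℕ, χ ((k : ℕ) : ZMod (2 * p * n)) = ζ ^ k := by
    intro k
    rw [show ((k : ℕ) : ZMod (2 * p * n)) = k • (1 : ZMod (2 * p * n)) by
      simp [nsmul_eq_mul], AddChar.map_nsmul_eq_pow]
  have hval : ∀ x : ZMod (2 * p * n), χ x = ζ ^ x.val := by
    intro x
    have := hcast x.val
    rwa [ZMod.natCast_rightInverse x] at this
  have hζpow : ζ ^ (2 * p * n) = 1 := by
    have := hcast (2 * p * n)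
    rwa [ZMod.natCast_self, AddChar.map_zero_eq_one, eq_comm] at this
  have hpowapp : ∀ (k : ℕ) (x : ZMod (2 * p * n)), (χ ^ k) x = χ x ^ k := by
    intro k x
    rw [AddChar.pow_eq_nsmul, AddChar.nsmul_apply]
  have hord : orderOf χ = orderOf ζ := by
    rw [orderOf_eq_orderOf_iff]
    intro k
    constructor
    · intro h
      have := hpowapp k 1
      rw [h, AddChar.one_apply] at this
      exact this.symm
    · intro h
      ext x
      rw [hpowapp, AddChar.one_apply, hval, ← pow_mul, mul_comm, pow_mul, h, one_pow]
  have hfin : IsOfFinOrder ζ := isOfFinOrder_iff_pow_eq_one.mpr ⟨2 * p * n, hNpos, hζpow⟩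
  have hopos : 0 < orderOf ζ := hfin.orderOf_pos
  have hoN : orderOf ζ ∣ 2 * p * n := orderOf_dvd_of_pow_eq_one hζpow
  set o := orderOf ζ with hodef
  have hζprim : IsPrimitiveRoot ζ o := IsPrimitiveRoot.orderOf ζ
  set η := χ ((p : ℕ) : ZMod (2 * p * n)) with hηdef
  have hηζ : η = ζ ^ p := hcast p
  -- step 1 : Smchi as signed coefficient
  have hS : Smchi p n m χ = ∑ t ∈ (Dset p n).powersetCard m, ∏ a ∈ t, χ a := by
    rw [Smchi, sum_inj_tuples (Dset p n) (fun d => χ d) m, ← mul_assoc,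
      inv_mul_cancel₀ (Nat.cast_ne_zero.mpr m.factorial_ne_zero), one_mul]
  have hstep : Smchi p n m χ
      = (-1 : ℂ) ^ m * (∏ d ∈ Dset p n, (1 - C (χ d) * X)).coeff m := by
    rw [hS, coeff_prod_one_sub (Dset p n) (fun d => χ d) m, ← mul_assoc, ← mul_pow]
    norm_num
  -- step 2 : rewrite product over Dset
  have hprod : ∏ d ∈ Dset p n, (1 - C (χ d) * X)
      = ∏ k ∈ Finset.Icc 1 ((p - 1) / 2), ∏ j ∈ Finset.Icc (1 - (n : ℤ)) (n : ℤ),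
          (1 - C ((χ ((k : ℕ) : ZMod (2 * p * n)))⁻¹ * η ^ j) * X) := by
    rw [Dset, Finset.prod_image (Dset_injOn p n hp hodd hn), Finset.prod_product,
      Finset.prod_comm]
    refine Finset.prod_congr rfl fun k _ => Finset.prod_congr rfl fun j _ => ?_
    rw [chi_val p n χ j k]
  constructor
  · -- case p ∤ o
    intro hpo
    rw [hord] at hpo
    have hcop : Nat.Coprime p o := hp.coprime_iff_not_dvd.mpr hpo
    have hηord : orderOf η = o := by
      rw [hηζ, orderOf_pow' ζ hppos.ne', ← hodef, Nat.Coprime.gcd_eq_one hcop.symm,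
        Nat.div_one]
    have hηprim : IsPrimitiveRoot η o := hηord ▸ IsPrimitiveRoot.orderOf η
    have hdvd2n : o ∣ 2 * n := by
      have h1 : o ∣ 2 * n * p := by
        rw [show 2 * n * p = 2 * p * n by ring]
        exact hoN
      exact Nat.Coprime.dvd_of_dvd_mul_right hcop.symm h1
    rw [hstep, hprod]
    have inner : ∀ k ∈ Finset.Icc 1 ((p - 1) / 2),
        ∏ j ∈ Finset.Icc (1 - (n : ℤ)) (n : ℤ),
          (1 - C ((χ ((k : ℕ) : ZMod (2 * p * n)))⁻¹ * η ^ j) * X)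
        = (1 - X ^ o) ^ (2 * n / o) := by
      intro k _
      rw [prod_Icc_one_sub n o hn hopos hdvd2n η _ hηprim]
      have hone : ((χ ((k : ℕ) : ZMod (2 * p * n)))⁻¹) ^ o = 1 := by
        rw [hcast k, inv_pow, ← pow_mul, mul_comm, pow_mul, hζprim.pow_eq_one, one_pow,
          inv_one]
      rw [hone, map_one, one_mul]
    rw [Finset.prod_congr rfl inner, Finset.prod_const, Nat.card_Icc, ← pow_mul, hord]
    congr 2
    -- (2 * n / o) * ((p-1)/2 + 1 - 1) = n * (p - 1) / o
    obtain ⟨q, hq⟩ := hodd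
    have hq1 : 1 ≤ q := by have := hp.two_le; omega
    obtain ⟨a, ha⟩ := hdvd2n
    have e1 : 2 * n / o = a := by rw [ha, Nat.mul_div_cancel_left a hopos]
    have e2 : n * (p - 1) = o * (a * q) := by
      have h3 : n * (p - 1) = 2 * n * q := by
        rw [hq, show 2 * q + 1 - 1 = 2 * q from by omega]
        ring
      rw [h3, ha]
      ring
    rw [e1, e2, Nat.mul_div_cancel_left _ hopos,
      show (p - 1) / 2 + 1 - 1 = q by omega]
  · -- case p ∣ o
    intro hpo
    rw [hord] at hpo
    obtain ⟨o', ho'⟩ := hpo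
    have ho'pos : 0 < o' := by
      rcases Nat.eq_zero_or_pos o' with h | h
      · rw [h, mul_zero] at ho'; omega
      · exact h
    have hop : o / p = o' := by rw [ho', Nat.mul_div_cancel_left o' hppos]
    have hηord : orderOf η = o' := by
      rw [hηζ, orderOf_pow' ζ hppos.ne', ← hodef,
        Nat.gcd_eq_right ⟨o', ho'⟩, ← hop]
    have hηprim : IsPrimitiveRoot η o' := hηord ▸ IsPrimitiveRoot.orderOf η
    have hdvd2n : o' ∣ 2 * n := by
      have h1 : p * o' ∣ p * (2 * n) := by
        rw [← ho', show p * (2 * n) = 2 * p * n by ring]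
        exact hoN
      exact (Nat.mul_dvd_mul_iff_left hppos).mp h1
    have hexp : 2 * p * n / o = 2 * n / o' := by
      rw [ho', show 2 * p * n = p * (2 * n) by ring, Nat.mul_div_mul_left _ _ hppos]
    rw [hstep, hprod, hord, hop]
    congr 1
    congr 1
    refine Finset.prod_congr rfl fun k _ => ?_
    rw [prod_Icc_one_sub n o' hn ho'pos hdvd2n η _ hηprim, hexp]
end
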